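/- arXiv:1407.0168 — 2 statements merged into one kernel-verified Lean document; each statement's English description precedes it below -/
import Mathlib

section
/- Let f = xyz + xyw + xzw + yzw ∈ ℂ[x,y,z,w] (the Cayley cubic). Then the space AR(f)₂ of tuples (a,b,c,d) ∈ (S₂)⁴ with a·f_x + b·f_y + c·f_z + d·f_w = 0 has dimension 9. -/
open MvPolynomial Module

variable (n : ℕ)

/-- The subspace of tuples all of whose components are homogeneous of degree `m`. -/
noncomputable def degTuples (m : ℕ) :
    Submodule ℂ (Fin (n + 1) → MvPolynomial (Fin (n + 1)) ℂ) :=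
  ⨅ i, (homogeneousSubmodule (Fin (n + 1)) ℂ m).comap (LinearMap.proj i)

/-- The `ℂ`-linear map `(a₀,…,aₙ) ↦ ∑ᵢ aᵢ · f_{xᵢ}`. -/
noncomputable def relMap (f : MvPolynomial (Fin (n + 1)) ℂ) :
    (Fin (n + 1) → MvPolynomial (Fin (n + 1)) ℂ) →ₗ[ℂ] MvPolynomial (Fin (n + 1)) ℂ :=
  ∑ i : Fin (n + 1), (LinearMap.mulRight ℂ (pderiv i f)).comp (LinearMap.proj i)

/-- `AR(f)_m`: degree-`m` relations among the partial derivatives of `f`. -/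
noncomputable def ARm (f : MvPolynomial (Fin (n + 1)) ℂ) (m : ℕ) :
    Submodule ℂ (Fin (n + 1) → MvPolynomial (Fin (n + 1)) ℂ) :=
  degTuples n m ⊓ LinearMap.ker (relMap n f)

/-- The Koszul tuple with `f_{xⱼ}` in position `i` and `−f_{xᵢ}` in position `j`. -/
noncomputable def kosTuple (f : MvPolynomial (Fin (n + 1)) ℂ) (i j : Fin (n + 1)) :
    Fin (n + 1) → MvPolynomial (Fin (n + 1)) ℂ :=
  fun k => if k = i then pderiv j f else if k = j then -(pderiv i f) else 0

/-- `KR(f)`: the `S`-submodule generated by the Koszul relations. -/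
noncomputable def KRsub (f : MvPolynomial (Fin (n + 1)) ℂ) :
    Submodule (MvPolynomial (Fin (n + 1)) ℂ) (Fin (n + 1) → MvPolynomial (Fin (n + 1)) ℂ) :=
  Submodule.span _ {v | ∃ i j, i ≠ j ∧ v = kosTuple n f i j}

/-- `KR(f)_m`: the degree-`m` part of the Koszul relations. -/
noncomputable def KRm (f : MvPolynomial (Fin (n + 1)) ℂ) (m : ℕ) :
    Submodule ℂ (Fin (n + 1) → MvPolynomial (Fin (n + 1)) ℂ) :=
  degTuples n m ⊓ (KRsub n f).restrictScalars ℂ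

/-- `dim ER(f)_m = dim (AR(f)_m / KR(f)_m)`. -/
noncomputable def erDim (f : MvPolynomial (Fin (n + 1)) ℂ) (m : ℕ) : ℕ :=
  finrank ℂ (ARm n f m ⧸ (KRm n f m).comap (ARm n f m).subtype)

/-- The Jacobian ideal of `f`. -/
noncomputable def jacIdeal (f : MvPolynomial (Fin (n + 1)) ℂ) :
    Ideal (MvPolynomial (Fin (n + 1)) ℂ) :=
  Ideal.span (Set.range fun i => pderiv i f)

/-- `dim M(f)_k`: the dimension of the degree-`k` part of the Milnor algebra `S/J_f`. -/
noncomputable def milnorDim (f : MvPolynomial (Fin (n + 1)) ℂ) (k : ℕ) : ℕ :=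
  finrank ℂ ((homogeneousSubmodule (Fin (n + 1)) ℂ k).map
    (Ideal.Quotient.mkₐ ℂ (jacIdeal n f)).toLinearMap)


set_option maxHeartbeats 8000000

section CayleyAux
noncomputable section
abbrev P4 := MvPolynomial (Fin 4) ℂ

def sg (i : Fin 4) : Fin 4 →₀ ℕ := Finsupp.single i 1

lemma hX (a : Fin 4) : (X a : P4) = monomial (sg a) 1 := rfl

lemma mono2 (a b : Fin 4) (r : ℂ) : (monomial (sg a + sg b) r : P4) = C r * (X a * X b) := by
  rw [hX, hX, C_apply, monomial_mul, monomial_mul]; simp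

lemma mono4 (a b c d : Fin 4) (r : ℂ) :
    (monomial (sg a + sg b + sg c + sg d) r : P4) = C r * (X a * X b * X c * X d) := by
  rw [hX, hX, hX, hX, C_apply, monomial_mul, monomial_mul, monomial_mul, monomial_mul]; simp

lemma degree_eq_sum4 (d : Fin 4 →₀ ℕ) : Finsupp.degree d = d 0 + d 1 + d 2 + d 3 := by
  rw [Finsupp.degree_apply, Finset.sum_subset (Finset.subset_univ _)
    (fun i _ hi => Finsupp.notMem_support_iff.mp hi), Fin.sum_univ_four]

lemma dec4 (d : Fin 4 →₀ ℕ) :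
    d = Finsupp.single 0 (d 0) + Finsupp.single 1 (d 1) + Finsupp.single 2 (d 2)
      + Finsupp.single 3 (d 3) := by
  have h := Finsupp.sum_single d
  rw [Finsupp.sum_fintype _ _ (fun i => Finsupp.single_zero i), Fin.sum_univ_four] at h
  exact h.symm

lemma sgE (a b : Fin 4) : sg a b = if a = b then 1 else 0 := Finsupp.single_apply

def tn (d : Fin 4 →₀ ℕ) : ℕ := d 0 + 5 * d 1 + 25 * d 2 + 125 * d 3

lemma tn_add (a b : Fin 4 →₀ ℕ) : tn (a + b) = tn a + tn b := by
  simp [tn, Finsupp.add_apply]; ring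

lemma tn_sg0 : tn (sg 0) = 1 := by
  simp [tn, sgE, show (0:Fin 4) ≠ 1 by decide, show (0:Fin 4) ≠ 2 by decide, show (0:Fin 4) ≠ 3 by decide]

lemma tn_sg1 : tn (sg 1) = 5 := by
  simp [tn, sgE, show (1:Fin 4) ≠ 0 by decide, show (1:Fin 4) ≠ 2 by decide, show (1:Fin 4) ≠ 3 by decide]

lemma tn_sg2 : tn (sg 2) = 25 := by
  simp [tn, sgE, show (2:Fin 4) ≠ 0 by decide, show (2:Fin 4) ≠ 1 by decide, show (2:Fin 4) ≠ 3 by decide]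

lemma tn_sg3 : tn (sg 3) = 125 := by
  simp [tn, sgE, show (3:Fin 4) ≠ 0 by decide, show (3:Fin 4) ≠ 1 by decide, show (3:Fin 4) ≠ 2 by decide]


lemma tn2 (a b : Fin 4) : tn (sg a + sg b) = tn (sg a) + tn (sg b) := tn_add _ _
lemma tn4' (a b c d : Fin 4) :
    tn (sg a + sg b + sg c + sg d) = tn (sg a) + tn (sg b) + tn (sg c) + tn (sg d) := by
  rw [tn_add, tn_add, tn_add]

def mexp : Fin 10 → (Fin 4 →₀ ℕ) := ![sg 0 + sg 0, sg 0 + sg 1, sg 0 + sg 2, sg 0 + sg 3, sg 1 + sg 1, sg 1 + sg 2, sg 1 + sg 3, sg 2 + sg 2, sg 2 + sg 3, sg 3 + sg 3]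

lemma mexpE0 : mexp 0 = sg 0 + sg 0 := rfl
lemma mexpE1 : mexp 1 = sg 0 + sg 1 := rfl
lemma mexpE2 : mexp 2 = sg 0 + sg 2 := rfl
lemma mexpE3 : mexp 3 = sg 0 + sg 3 := rfl
lemma mexpE4 : mexp 4 = sg 1 + sg 1 := rfl
lemma mexpE5 : mexp 5 = sg 1 + sg 2 := rfl
lemma mexpE6 : mexp 6 = sg 1 + sg 3 := rfl
lemma mexpE7 : mexp 7 = sg 2 + sg 2 := rfl
lemma mexpE8 : mexp 8 = sg 2 + sg 3 := rfl
lemma mexpE9 : mexp 9 = sg 3 + sg 3 := rfl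

lemma finForall4 {P : Fin 4 → Prop} (h0 : P 0) (h1 : P 1) (h2 : P 2) (h3 : P 3) : ∀ t, P t := by
  intro t; fin_cases t
  exacts [h0, h1, h2, h3]

lemma finForall9 {P : Fin 9 → Prop} (h0 : P 0) (h1 : P 1) (h2 : P 2) (h3 : P 3) (h4 : P 4) (h5 : P 5) (h6 : P 6) (h7 : P 7) (h8 : P 8) : ∀ t, P t := by
  intro t; fin_cases t
  exacts [h0, h1, h2, h3, h4, h5, h6, h7, h8]

lemma finForall10 {P : Fin 10 → Prop} (h0 : P 0) (h1 : P 1) (h2 : P 2) (h3 : P 3) (h4 : P 4) (h5 : P 5) (h6 : P 6) (h7 : P 7) (h8 : P 8) (h9 : P 9) : ∀ t, P t := by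
  intro t; fin_cases t
  exacts [h0, h1, h2, h3, h4, h5, h6, h7, h8, h9]

lemma finForall31 {P : Fin 31 → Prop} (h0 : P 0) (h1 : P 1) (h2 : P 2) (h3 : P 3) (h4 : P 4) (h5 : P 5) (h6 : P 6) (h7 : P 7) (h8 : P 8) (h9 : P 9) (h10 : P 10) (h11 : P 11) (h12 : P 12) (h13 : P 13) (h14 : P 14) (h15 : P 15) (h16 : P 16) (h17 : P 17) (h18 : P 18) (h19 : P 19) (h20 : P 20) (h21 : P 21) (h22 : P 22) (h23 : P 23) (h24 : P 24) (h25 : P 25) (h26 : P 26) (h27 : P 27) (h28 : P 28) (h29 : P 29) (h30 : P 30) : ∀ t, P t := by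
  intro t; fin_cases t
  exacts [h0, h1, h2, h3, h4, h5, h6, h7, h8, h9, h10, h11, h12, h13, h14, h15, h16, h17, h18, h19, h20, h21, h22, h23, h24, h25, h26, h27, h28, h29, h30]

lemma tnM0 : tn (mexp 0) = 2 := by rw [mexpE0, tn2]; norm_num [tn_sg0, tn_sg1, tn_sg2, tn_sg3]
lemma tnM1 : tn (mexp 1) = 6 := by rw [mexpE1, tn2]; norm_num [tn_sg0, tn_sg1, tn_sg2, tn_sg3]
lemma tnM2 : tn (mexp 2) = 26 := by rw [mexpE2, tn2]; norm_num [tn_sg0, tn_sg1, tn_sg2, tn_sg3]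
lemma tnM3 : tn (mexp 3) = 126 := by rw [mexpE3, tn2]; norm_num [tn_sg0, tn_sg1, tn_sg2, tn_sg3]
lemma tnM4 : tn (mexp 4) = 10 := by rw [mexpE4, tn2]; norm_num [tn_sg0, tn_sg1, tn_sg2, tn_sg3]
lemma tnM5 : tn (mexp 5) = 30 := by rw [mexpE5, tn2]; norm_num [tn_sg0, tn_sg1, tn_sg2, tn_sg3]
lemma tnM6 : tn (mexp 6) = 130 := by rw [mexpE6, tn2]; norm_num [tn_sg0, tn_sg1, tn_sg2, tn_sg3]
lemma tnM7 : tn (mexp 7) = 50 := by rw [mexpE7, tn2]; norm_num [tn_sg0, tn_sg1, tn_sg2, tn_sg3]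
lemma tnM8 : tn (mexp 8) = 150 := by rw [mexpE8, tn2]; norm_num [tn_sg0, tn_sg1, tn_sg2, tn_sg3]
lemma tnM9 : tn (mexp 9) = 250 := by rw [mexpE9, tn2]; norm_num [tn_sg0, tn_sg1, tn_sg2, tn_sg3]

lemma tnM : ∀ j, tn (mexp j) = ![2, 6, 26, 126, 10, 30, 130, 50, 150, 250] j :=
  finForall10 tnM0 tnM1 tnM2 tnM3 tnM4 tnM5 tnM6 tnM7 tnM8 tnM9

lemma mexp_inj : Function.Injective mexp := by
  have hv : Function.Injective (![2, 6, 26, 126, 10, 30, 130, 50, 150, 250] : Fin 10 → ℕ) := by decide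
  intro a b h
  exact hv (by rw [← tnM a, ← tnM b, h])

def Dex : Fin 31 → (Fin 4 →₀ ℕ) := ![sg 2 + sg 3 + sg 3 + sg 3, sg 2 + sg 2 + sg 3 + sg 3, sg 2 + sg 2 + sg 2 + sg 3, sg 1 + sg 3 + sg 3 + sg 3, sg 1 + sg 2 + sg 3 + sg 3, sg 1 + sg 2 + sg 2 + sg 3, sg 1 + sg 2 + sg 2 + sg 2, sg 1 + sg 1 + sg 3 + sg 3, sg 1 + sg 1 + sg 2 + sg 3, sg 1 + sg 1 + sg 2 + sg 2, sg 1 + sg 1 + sg 1 + sg 3, sg 1 + sg 1 + sg 1 + sg 2, sg 0 + sg 3 + sg 3 + sg 3, sg 0 + sg 2 + sg 3 + sg 3, sg 0 + sg 2 + sg 2 + sg 3, sg 0 + sg 2 + sg 2 + sg 2, sg 0 + sg 1 + sg 3 + sg 3, sg 0 + sg 1 + sg 2 + sg 3, sg 0 + sg 1 + sg 2 + sg 2, sg 0 + sg 1 + sg 1 + sg 3, sg 0 + sg 1 + sg 1 + sg 2, sg 0 + sg 1 + sg 1 + sg 1, sg 0 + sg 0 + sg 3 + sg 3, sg 0 +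 sg 0 + sg 2 + sg 3, sg 0 + sg 0 + sg 2 + sg 2, sg 0 + sg 0 + sg 1 + sg 3, sg 0 + sg 0 + sg 1 + sg 2, sg 0 + sg 0 + sg 1 + sg 1, sg 0 + sg 0 + sg 0 + sg 3, sg 0 + sg 0 + sg 0 + sg 2, sg 0 + sg 0 + sg 0 + sg 1]

lemma DexE0 : Dex 0 = sg 2 + sg 3 + sg 3 + sg 3 := rfl
lemma DexE1 : Dex 1 = sg 2 + sg 2 + sg 3 + sg 3 := rfl
lemma DexE2 : Dex 2 = sg 2 + sg 2 + sg 2 + sg 3 := rfl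
lemma DexE3 : Dex 3 = sg 1 + sg 3 + sg 3 + sg 3 := rfl
lemma DexE4 : Dex 4 = sg 1 + sg 2 + sg 3 + sg 3 := rfl
lemma DexE5 : Dex 5 = sg 1 + sg 2 + sg 2 + sg 3 := rfl
lemma DexE6 : Dex 6 = sg 1 + sg 2 + sg 2 + sg 2 := rfl
lemma DexE7 : Dex 7 = sg 1 + sg 1 + sg 3 + sg 3 := rfl
lemma DexE8 : Dex 8 = sg 1 + sg 1 + sg 2 + sg 3 := rfl
lemma DexE9 : Dex 9 = sg 1 + sg 1 + sg 2 + sg 2 := rfl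
lemma DexE10 : Dex 10 = sg 1 + sg 1 + sg 1 + sg 3 := rfl
lemma DexE11 : Dex 11 = sg 1 + sg 1 + sg 1 + sg 2 := rfl
lemma DexE12 : Dex 12 = sg 0 + sg 3 + sg 3 + sg 3 := rfl
lemma DexE13 : Dex 13 = sg 0 + sg 2 + sg 3 + sg 3 := rfl
lemma DexE14 : Dex 14 = sg 0 + sg 2 + sg 2 + sg 3 := rfl
lemma DexE15 : Dex 15 = sg 0 + sg 2 + sg 2 + sg 2 := rfl
lemma DexE16 : Dex 16 = sg 0 + sg 1 + sg 3 + sg 3 := rfl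
lemma DexE17 : Dex 17 = sg 0 + sg 1 + sg 2 + sg 3 := rfl
lemma DexE18 : Dex 18 = sg 0 + sg 1 + sg 2 + sg 2 := rfl
lemma DexE19 : Dex 19 = sg 0 + sg 1 + sg 1 + sg 3 := rfl
lemma DexE20 : Dex 20 = sg 0 + sg 1 + sg 1 + sg 2 := rfl
lemma DexE21 : Dex 21 = sg 0 + sg 1 + sg 1 + sg 1 := rfl
lemma DexE22 : Dex 22 = sg 0 + sg 0 + sg 3 + sg 3 := rfl
lemma DexE23 : Dex 23 = sg 0 + sg 0 + sg 2 + sg 3 := rfl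
lemma DexE24 : Dex 24 = sg 0 + sg 0 + sg 2 + sg 2 := rfl
lemma DexE25 : Dex 25 = sg 0 + sg 0 + sg 1 + sg 3 := rfl
lemma DexE26 : Dex 26 = sg 0 + sg 0 + sg 1 + sg 2 := rfl
lemma DexE27 : Dex 27 = sg 0 + sg 0 + sg 1 + sg 1 := rfl
lemma DexE28 : Dex 28 = sg 0 + sg 0 + sg 0 + sg 3 := rfl
lemma DexE29 : Dex 29 = sg 0 + sg 0 + sg 0 + sg 2 := rfl
lemma DexE30 : Dex 30 = sg 0 + sg 0 + sg 0 + sg 1 := rfl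
lemma tnD0 : tn (Dex 0) = 400 := by rw [DexE0, tn4']; norm_num [tn_sg0, tn_sg1, tn_sg2, tn_sg3]
lemma tnD1 : tn (Dex 1) = 300 := by rw [DexE1, tn4']; norm_num [tn_sg0, tn_sg1, tn_sg2, tn_sg3]
lemma tnD2 : tn (Dex 2) = 200 := by rw [DexE2, tn4']; norm_num [tn_sg0, tn_sg1, tn_sg2, tn_sg3]
lemma tnD3 : tn (Dex 3) = 380 := by rw [DexE3, tn4']; norm_num [tn_sg0, tn_sg1, tn_sg2, tn_sg3]
lemma tnD4 : tn (Dex 4) = 280 := by rw [DexE4, tn4']; norm_num [tn_sg0, tn_sg1, tn_sg2, tn_sg3]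
lemma tnD5 : tn (Dex 5) = 180 := by rw [DexE5, tn4']; norm_num [tn_sg0, tn_sg1, tn_sg2, tn_sg3]
lemma tnD6 : tn (Dex 6) = 80 := by rw [DexE6, tn4']; norm_num [tn_sg0, tn_sg1, tn_sg2, tn_sg3]
lemma tnD7 : tn (Dex 7) = 260 := by rw [DexE7, tn4']; norm_num [tn_sg0, tn_sg1, tn_sg2, tn_sg3]
lemma tnD8 : tn (Dex 8) = 160 := by rw [DexE8, tn4']; norm_num [tn_sg0, tn_sg1, tn_sg2, tn_sg3]
lemma tnD9 : tn (Dex 9) = 60 := by rw [DexE9, tn4']; norm_num [tn_sg0, tn_sg1, tn_sg2, tn_sg3]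
lemma tnD10 : tn (Dex 10) = 140 := by rw [DexE10, tn4']; norm_num [tn_sg0, tn_sg1, tn_sg2, tn_sg3]
lemma tnD11 : tn (Dex 11) = 40 := by rw [DexE11, tn4']; norm_num [tn_sg0, tn_sg1, tn_sg2, tn_sg3]
lemma tnD12 : tn (Dex 12) = 376 := by rw [DexE12, tn4']; norm_num [tn_sg0, tn_sg1, tn_sg2, tn_sg3]
lemma tnD13 : tn (Dex 13) = 276 := by rw [DexE13, tn4']; norm_num [tn_sg0, tn_sg1, tn_sg2, tn_sg3]
lemma tnD14 : tn (Dex 14) = 176 := by rw [DexE14, tn4']; norm_num [tn_sg0, tn_sg1, tn_sg2, tn_sg3]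
lemma tnD15 : tn (Dex 15) = 76 := by rw [DexE15, tn4']; norm_num [tn_sg0, tn_sg1, tn_sg2, tn_sg3]
lemma tnD16 : tn (Dex 16) = 256 := by rw [DexE16, tn4']; norm_num [tn_sg0, tn_sg1, tn_sg2, tn_sg3]
lemma tnD17 : tn (Dex 17) = 156 := by rw [DexE17, tn4']; norm_num [tn_sg0, tn_sg1, tn_sg2, tn_sg3]
lemma tnD18 : tn (Dex 18) = 56 := by rw [DexE18, tn4']; norm_num [tn_sg0, tn_sg1, tn_sg2, tn_sg3]
lemma tnD19 : tn (Dex 19) = 136 := by rw [DexE19, tn4']; norm_num [tn_sg0, tn_sg1, tn_sg2, tn_sg3]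
lemma tnD20 : tn (Dex 20) = 36 := by rw [DexE20, tn4']; norm_num [tn_sg0, tn_sg1, tn_sg2, tn_sg3]
lemma tnD21 : tn (Dex 21) = 16 := by rw [DexE21, tn4']; norm_num [tn_sg0, tn_sg1, tn_sg2, tn_sg3]
lemma tnD22 : tn (Dex 22) = 252 := by rw [DexE22, tn4']; norm_num [tn_sg0, tn_sg1, tn_sg2, tn_sg3]
lemma tnD23 : tn (Dex 23) = 152 := by rw [DexE23, tn4']; norm_num [tn_sg0, tn_sg1, tn_sg2, tn_sg3]
lemma tnD24 : tn (Dex 24) = 52 := by rw [DexE24, tn4']; norm_num [tn_sg0, tn_sg1, tn_sg2, tn_sg3]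
lemma tnD25 : tn (Dex 25) = 132 := by rw [DexE25, tn4']; norm_num [tn_sg0, tn_sg1, tn_sg2, tn_sg3]
lemma tnD26 : tn (Dex 26) = 32 := by rw [DexE26, tn4']; norm_num [tn_sg0, tn_sg1, tn_sg2, tn_sg3]
lemma tnD27 : tn (Dex 27) = 12 := by rw [DexE27, tn4']; norm_num [tn_sg0, tn_sg1, tn_sg2, tn_sg3]
lemma tnD28 : tn (Dex 28) = 128 := by rw [DexE28, tn4']; norm_num [tn_sg0, tn_sg1, tn_sg2, tn_sg3]
lemma tnD29 : tn (Dex 29) = 28 := by rw [DexE29, tn4']; norm_num [tn_sg0, tn_sg1, tn_sg2, tn_sg3]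
lemma tnD30 : tn (Dex 30) = 8 := by rw [DexE30, tn4']; norm_num [tn_sg0, tn_sg1, tn_sg2, tn_sg3]

lemma tnD : ∀ t, tn (Dex t) = ![400, 300, 200, 380, 280, 180, 80, 260, 160, 60, 140, 40, 376, 276, 176, 76, 256, 156, 56, 136, 36, 16, 252, 152, 52, 132, 32, 12, 128, 28, 8] t :=
  finForall31 tnD0 tnD1 tnD2 tnD3 tnD4 tnD5 tnD6 tnD7 tnD8 tnD9 tnD10 tnD11 tnD12 tnD13 tnD14 tnD15 tnD16 tnD17 tnD18 tnD19 tnD20 tnD21 tnD22 tnD23 tnD24 tnD25 tnD26 tnD27 tnD28 tnD29 tnD30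

lemma Dex_inj : Function.Injective Dex := by
  have hv : Function.Injective (![400, 300, 200, 380, 280, 180, 80, 260, 160, 60, 140, 40, 376, 276, 176, 76, 256, 156, 56, 136, 36, 16, 252, 152, 52, 132, 32, 12, 128, 28, 8] : Fin 31 → ℕ) := by decide
  intro a b h
  exact hv (by rw [← tnD a, ← tnD b, h])

lemma ften1 : ((0 : Fin 9).succ : Fin 10) = 1 := rfl
lemma ften2 : ((0 : Fin 8).succ.succ : Fin 10) = 2 := rfl
lemma ften3 : ((0 : Fin 7).succ.succ.succ : Fin 10) = 3 := rfl
lemma ften4 : ((0 : Fin 6).succ.succ.succ.succ : Fin 10) = 4 := rfl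
lemma ften5 : ((0 : Fin 5).succ.succ.succ.succ.succ : Fin 10) = 5 := rfl
lemma ften6 : ((0 : Fin 4).succ.succ.succ.succ.succ.succ : Fin 10) = 6 := rfl
lemma ften7 : ((0 : Fin 3).succ.succ.succ.succ.succ.succ.succ : Fin 10) = 7 := rfl
lemma ften8 : ((0 : Fin 2).succ.succ.succ.succ.succ.succ.succ.succ : Fin 10) = 8 := rfl
lemma ften9 : ((0 : Fin 1).succ.succ.succ.succ.succ.succ.succ.succ.succ : Fin 10) = 9 := rfl

def Lc (c : Fin 4 → Fin 10 → ℂ) (i : Fin 4) : P4 := ∑ j, monomial (mexp j) (c i j)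

def Ng (c : Fin 4 → Fin 10 → ℂ) : Fin 31 → ℂ :=
  ![c 0 9 + c 1 9,
    c 0 8 + c 1 8,
    c 0 7 + c 1 7,
    c 0 9 + c 2 9,
    c 0 6 + c 0 8 + c 0 9 + c 1 6 + c 2 8 + c 3 9,
    c 0 5 + c 0 7 + c 0 8 + c 1 5 + c 2 7 + c 3 8,
    c 0 7 + c 3 7,
    c 0 6 + c 2 6,
    c 0 4 + c 0 5 + c 0 6 + c 1 4 + c 2 5 + c 3 6,
    c 0 5 + c 3 5,
    c 0 4 + c 2 4,
    c 0 4 + c 3 4,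
    c 1 9 + c 2 9,
    c 0 3 + c 1 3 + c 1 8 + c 1 9 + c 2 8 + c 3 9,
    c 0 2 + c 1 2 + c 1 7 + c 1 8 + c 2 7 + c 3 8,
    c 1 7 + c 3 7,
    c 0 3 + c 1 6 + c 2 3 + c 2 6 + c 2 9 + c 3 9,
    c 0 1 + c 0 2 + c 0 3 + c 1 1 + c 1 5 + c 1 6 + c 2 2 + c 2 5 + c 2 8 + c 3 3 + c 3 6 + c 3 8,
    c 0 2 + c 1 5 + c 2 7 + c 3 2 + c 3 5 + c 3 7,
    c 0 1 + c 1 4 + c 2 1 + c 2 4 + c 2 6 + c 3 6,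
    c 0 1 + c 1 4 + c 2 5 + c 3 1 + c 3 4 + c 3 5,
    c 2 4 + c 3 4,
    c 1 3 + c 2 3,
    c 0 0 + c 1 0 + c 1 2 + c 1 3 + c 2 2 + c 3 3,
    c 1 2 + c 3 2,
    c 0 0 + c 1 1 + c 2 0 + c 2 1 + c 2 3 + c 3 3,
    c 0 0 + c 1 1 + c 2 2 + c 3 0 + c 3 1 + c 3 2,
    c 2 1 + c 3 1,
    c 1 0 + c 2 0,
    c 1 0 + c 3 0,
    c 2 0 + c 3 0]


lemma extract {k : ℕ} (E : Fin k → (Fin 4 →₀ ℕ)) (hE : Function.Injective E) (g : Fin k → ℂ)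
    (h : ∑ t, (monomial (E t) (g t) : P4) = 0) : ∀ t, g t = 0 := by
  intro t
  have h2 := congrArg (coeff (E t)) h
  simp only [coeff_sum, coeff_monomial, coeff_zero, hE.eq_iff] at h2
  simpa [Finset.sum_ite_eq'] using h2

lemma coeffL (c : Fin 4 → Fin 10 → ℂ) (i : Fin 4) (j : Fin 10) :
    coeff (mexp j) (Lc c i) = c i j := by
  simp only [Lc, coeff_sum, coeff_monomial, mexp_inj.eq_iff]
  simp [Finset.sum_ite_eq']

lemma degM0 : Finsupp.degree (mexp 0) = 2 := by
  rw [mexpE0, degree_eq_sum4]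
  simp only [Finsupp.add_apply, sgE]
  decide
lemma degM1 : Finsupp.degree (mexp 1) = 2 := by
  rw [mexpE1, degree_eq_sum4]
  simp only [Finsupp.add_apply, sgE]
  decide
lemma degM2 : Finsupp.degree (mexp 2) = 2 := by
  rw [mexpE2, degree_eq_sum4]
  simp only [Finsupp.add_apply, sgE]
  decide
lemma degM3 : Finsupp.degree (mexp 3) = 2 := by
  rw [mexpE3, degree_eq_sum4]
  simp only [Finsupp.add_apply, sgE]
  decide
lemma degM4 : Finsupp.degree (mexp 4) = 2 := by
  rw [mexpE4, degree_eq_sum4]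
  simp only [Finsupp.add_apply, sgE]
  decide
lemma degM5 : Finsupp.degree (mexp 5) = 2 := by
  rw [mexpE5, degree_eq_sum4]
  simp only [Finsupp.add_apply, sgE]
  decide
lemma degM6 : Finsupp.degree (mexp 6) = 2 := by
  rw [mexpE6, degree_eq_sum4]
  simp only [Finsupp.add_apply, sgE]
  decide
lemma degM7 : Finsupp.degree (mexp 7) = 2 := by
  rw [mexpE7, degree_eq_sum4]
  simp only [Finsupp.add_apply, sgE]
  decide
lemma degM8 : Finsupp.degree (mexp 8) = 2 := by
  rw [mexpE8, degree_eq_sum4]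
  simp only [Finsupp.add_apply, sgE]
  decide
lemma degM9 : Finsupp.degree (mexp 9) = 2 := by
  rw [mexpE9, degree_eq_sum4]
  simp only [Finsupp.add_apply, sgE]
  decide

lemma degM : ∀ j, Finsupp.degree (mexp j) = 2 :=
  finForall10 degM0 degM1 degM2 degM3 degM4 degM5 degM6 degM7 degM8 degM9

lemma Lc_mem (c : Fin 4 → Fin 10 → ℂ) (i : Fin 4) :
    Lc c i ∈ homogeneousSubmodule (Fin 4) ℂ 2 :=
  Submodule.sum_mem _ fun j _ =>
    (mem_homogeneousSubmodule _ _).mpr (isHomogeneous_monomial _ (degM j))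

lemma split2 (a b c e : ℕ) (h : a + b + c + e = 2) : (a = 2 ∧ b = 0 ∧ c = 0 ∧ e = 0) ∨ (a = 1 ∧ b = 1 ∧ c = 0 ∧ e = 0) ∨ (a = 1 ∧ b = 0 ∧ c = 1 ∧ e = 0) ∨ (a = 1 ∧ b = 0 ∧ c = 0 ∧ e = 1) ∨ (a = 0 ∧ b = 2 ∧ c = 0 ∧ e = 0) ∨ (a = 0 ∧ b = 1 ∧ c = 1 ∧ e = 0) ∨ (a = 0 ∧ b = 1 ∧ c = 0 ∧ e = 1) ∨ (a = 0 ∧ b = 0 ∧ c = 2 ∧ e = 0) ∨ (a = 0 ∧ b = 0 ∧ c = 1 ∧ e = 1) ∨ (a = 0 ∧ b = 0 ∧ c = 0 ∧ e = 2) := by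
  have h1 : a ≤ 2 := by omega
  have h2 : b ≤ 2 := by omega
  have h3 : c ≤ 2 := by omega
  have h4 : e ≤ 2 := by omega
  interval_cases a <;> interval_cases b <;> interval_cases c <;> interval_cases e <;>
    first
      | (exfalso; omega)
      | decide

lemma exists_mexp (d : Fin 4 →₀ ℕ) (hd : Finsupp.degree d = 2) : ∃ j, d = mexp j := by
  rw [degree_eq_sum4] at hd
  obtain ⟨a, ha⟩ : ∃ a, d 0 = a := ⟨_, rfl⟩
  obtain ⟨b, hb⟩ : ∃ b, d 1 = b := ⟨_, rfl⟩
  obtain ⟨c, hc⟩ : ∃ c, d 2 = c := ⟨_, rfl⟩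
  obtain ⟨e, he⟩ : ∃ e, d 3 = e := ⟨_, rfl⟩
  rw [ha, hb, hc, he] at hd
  have H := split2 a b c e hd
  rcases H with ⟨h0,h1,h2,h3⟩|⟨h0,h1,h2,h3⟩|⟨h0,h1,h2,h3⟩|⟨h0,h1,h2,h3⟩|⟨h0,h1,h2,h3⟩|⟨h0,h1,h2,h3⟩|⟨h0,h1,h2,h3⟩|⟨h0,h1,h2,h3⟩|⟨h0,h1,h2,h3⟩|⟨h0,h1,h2,h3⟩
  · refine ⟨0, ?_⟩
    have hd4 := dec4 d
    rw [ha, hb, hc, he, h0, h1, h2, h3] at hd4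
    rw [hd4, mexpE0]
    simp only [sg, Finsupp.single_zero, add_zero, zero_add, ← Finsupp.single_add]
  · refine ⟨1, ?_⟩
    have hd4 := dec4 d
    rw [ha, hb, hc, he, h0, h1, h2, h3] at hd4
    rw [hd4, mexpE1]
    simp only [sg, Finsupp.single_zero, add_zero, zero_add]
  · refine ⟨2, ?_⟩
    have hd4 := dec4 d
    rw [ha, hb, hc, he, h0, h1, h2, h3] at hd4
    rw [hd4, mexpE2]
    simp only [sg, Finsupp.single_zero, add_zero, zero_add]
  · refine ⟨3, ?_⟩
    have hd4 := dec4 d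
    rw [ha, hb, hc, he, h0, h1, h2, h3] at hd4
    rw [hd4, mexpE3]
    simp only [sg, Finsupp.single_zero, add_zero, zero_add]
  · refine ⟨4, ?_⟩
    have hd4 := dec4 d
    rw [ha, hb, hc, he, h0, h1, h2, h3] at hd4
    rw [hd4, mexpE4]
    simp only [sg, Finsupp.single_zero, add_zero, zero_add, ← Finsupp.single_add]
  · refine ⟨5, ?_⟩
    have hd4 := dec4 d
    rw [ha, hb, hc, he, h0, h1, h2, h3] at hd4
    rw [hd4, mexpE5]
    simp only [sg, Finsupp.single_zero, add_zero, zero_add]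
  · refine ⟨6, ?_⟩
    have hd4 := dec4 d
    rw [ha, hb, hc, he, h0, h1, h2, h3] at hd4
    rw [hd4, mexpE6]
    simp only [sg, Finsupp.single_zero, add_zero, zero_add]
  · refine ⟨7, ?_⟩
    have hd4 := dec4 d
    rw [ha, hb, hc, he, h0, h1, h2, h3] at hd4
    rw [hd4, mexpE7]
    simp only [sg, Finsupp.single_zero, add_zero, zero_add, ← Finsupp.single_add]
  · refine ⟨8, ?_⟩
    have hd4 := dec4 d
    rw [ha, hb, hc, he, h0, h1, h2, h3] at hd4
    rw [hd4, mexpE8]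
    simp only [sg, Finsupp.single_zero, add_zero, zero_add]
  · refine ⟨9, ?_⟩
    have hd4 := dec4 d
    rw [ha, hb, hc, he, h0, h1, h2, h3] at hd4
    rw [hd4, mexpE9]
    simp only [sg, Finsupp.single_zero, add_zero, zero_add, ← Finsupp.single_add]

lemma homog2_eq (p : P4) (hp : p ∈ homogeneousSubmodule (Fin 4) ℂ 2) :
    p = ∑ j, monomial (mexp j) (coeff (mexp j) p) := by
  have hh := (mem_homogeneousSubmodule _ _).mp hp
  apply MvPolynomial.ext
  intro e
  rw [coeff_sum]
  simp only [coeff_monomial]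
  by_cases hd : Finsupp.degree e = 2
  · obtain ⟨j0, rfl⟩ := exists_mexp e hd
    simp [mexp_inj.eq_iff, Finset.sum_ite_eq']
  · rw [hh.coeff_eq_zero hd, Finset.sum_eq_zero]
    intro j _
    rw [if_neg]
    intro h
    exact hd (h ▸ degM j)

def FC : P4 := X 0 * X 1 * X 2 + X 0 * X 1 * X 3 + X 0 * X 2 * X 3 + X 1 * X 2 * X 3

lemma master (c : Fin 4 → Fin 10 → ℂ) :
    relMap 3 FC (Lc c) = ∑ t, monomial (Dex t) (Ng c t) := by
  show (∑ i : Fin 4, (LinearMap.mulRight ℂ (pderiv i FC)).comp (LinearMap.proj i)) (Lc c) = _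
  rw [Fin.sum_univ_four]
  simp only [LinearMap.add_apply, LinearMap.comp_apply, LinearMap.mulRight_apply,
    LinearMap.proj_apply]
  simp only [FC, map_add, pderiv_mul, pderiv_X_self,
    pderiv_X_of_ne (show (0:Fin 4) ≠ 1 by decide),
    pderiv_X_of_ne (show (0:Fin 4) ≠ 2 by decide),
    pderiv_X_of_ne (show (0:Fin 4) ≠ 3 by decide),
    pderiv_X_of_ne (show (1:Fin 4) ≠ 0 by decide),
    pderiv_X_of_ne (show (1:Fin 4) ≠ 2 by decide),
    pderiv_X_of_ne (show (1:Fin 4) ≠ 3 by decide),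
    pderiv_X_of_ne (show (2:Fin 4) ≠ 0 by decide),
    pderiv_X_of_ne (show (2:Fin 4) ≠ 1 by decide),
    pderiv_X_of_ne (show (2:Fin 4) ≠ 3 by decide),
    pderiv_X_of_ne (show (3:Fin 4) ≠ 0 by decide),
    pderiv_X_of_ne (show (3:Fin 4) ≠ 1 by decide),
    pderiv_X_of_ne (show (3:Fin 4) ≠ 2 by decide)]
  simp only [Lc, Ng, Dex, mexp, Fin.sum_univ_succ, Fin.sum_univ_zero,
    Matrix.cons_val_zero, Matrix.cons_val_succ, ften1, ften2, ften3, ften4, ften5,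
    ften6, ften7, ften8, ften9]
  simp only [mono2, mono4, map_add]
  ring

def cv0 : Fin 4 → Fin 10 → ℂ := ![![0, 0, -1, -1, 0, 0, 0, 0, -1, 0], ![0, 0, 0, 0, 0, 1, 1, 0, 1, 0], ![0, 0, 0, 0, 0, 0, 0, 0, 0, 0], ![0, 0, 0, 0, 0, 0, 0, 0, 0, 0]]
def cv1 : Fin 4 → Fin 10 → ℂ := ![![0, -1, 0, -1, 0, 0, -1, 0, 0, 0], ![0, 1, 0, 1, 0, 0, 1, 0, 0, 0], ![0, 0, -1, -1, 0, 1, 1, 0, 0, 0], ![0, 0, 0, 0, 0, 0, 0, 0, 0, 0]]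
def cv2 : Fin 4 → Fin 10 → ℂ := ![![0, 0, 0, 0, 0, 0, 0, 0, 0, 0], ![0, -1, 0, -1, 0, 0, -1, 0, 0, 0], ![0, 0, 1, 1, 0, 0, 0, 0, 1, 0], ![0, 0, 0, 0, 0, 0, 0, 0, 0, 0]]
def cv3 : Fin 4 → Fin 10 → ℂ := ![![0, 1, -1, 0, 0, 0, 0, 0, 0, 0], ![0, -1, -1, 0, -2, -2, 0, 0, 0, 0], ![0, 1, 1, 0, 0, 2, 0, 2, 0, 0], ![0, -1, 1, 0, 0, 0, 0, 0, 0, 0]]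
def cv4 : Fin 4 → Fin 10 → ℂ := ![![-1, (-1/2), 0, 0, 0, 0, 0, 0, 0, 0], ![0, (1/2), 0, 0, 1, 0, 0, 0, 0, 0], ![0, (-1/2), 0, 0, 0, -1, 0, 0, 0, 0], ![0, (1/2), 0, 1, 0, 0, 0, 0, 0, 0]]
def cv5 : Fin 4 → Fin 10 → ℂ := ![![-2, -1, -2, 0, 0, -1, 0, 0, 0, 0], ![0, 1, 0, 0, 0, -1, 0, 0, 0, 0], ![0, 1, 2, 0, 0, 1, 0, 2, 0, 0], ![0, -1, 0, 0, 0, 1, 0, 0, 0, 0]]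
def cv6 : Fin 4 → Fin 10 → ℂ := ![![1, (1/2), 0, 0, 0, 0, 0, 0, 0, 0], ![0, (-1/2), 0, 0, -1, 0, 0, 0, 0, 0], ![0, (-1/2), -1, 0, 0, 0, 0, 0, 0, 0], ![0, (1/2), 0, 0, 0, 0, 1, 0, 0, 0]]
def cv7 : Fin 4 → Fin 10 → ℂ := ![![1, (-1/2), 1, 0, 0, 0, 0, 0, 0, 0], ![0, (-1/2), 0, 0, 1, 1, 0, 0, 0, 0], ![0, (-1/2), -1, 0, 0, -1, 0, -2, 0, 0], ![0, (1/2), 0, 0, 0, 0, 0, 0, 1, 0]]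
def cv8 : Fin 4 → Fin 10 → ℂ := ![![(-1/2), (1/4), 0, (-1/2), 0, 0, 0, 0, 0, 0], ![0, (-1/4), 0, (-1/2), (-1/2), 0, -1, 0, 0, 0], ![0, (1/4), 1, (1/2), 0, (1/2), 0, 0, 0, 0], ![0, (-1/4), 0, 0, 0, 0, 0, 0, 0, 1]]
def cs : Fin 9 → Fin 4 → Fin 10 → ℂ := ![cv0, cv1, cv2, cv3, cv4, cv5, cv6, cv7, cv8]

lemma cvv_0_0_0 : cv0 0 0 = 0 := rfl
lemma cvv_0_0_1 : cv0 0 1 = 0 := rfl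
lemma cvv_0_0_2 : cv0 0 2 = -1 := rfl
lemma cvv_0_0_3 : cv0 0 3 = -1 := rfl
lemma cvv_0_0_4 : cv0 0 4 = 0 := rfl
lemma cvv_0_0_5 : cv0 0 5 = 0 := rfl
lemma cvv_0_0_6 : cv0 0 6 = 0 := rfl
lemma cvv_0_0_7 : cv0 0 7 = 0 := rfl
lemma cvv_0_0_8 : cv0 0 8 = -1 := rfl
lemma cvv_0_0_9 : cv0 0 9 = 0 := rfl
lemma cvv_0_1_0 : cv0 1 0 = 0 := rfl
lemma cvv_0_1_1 : cv0 1 1 = 0 := rfl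
lemma cvv_0_1_2 : cv0 1 2 = 0 := rfl
lemma cvv_0_1_3 : cv0 1 3 = 0 := rfl
lemma cvv_0_1_4 : cv0 1 4 = 0 := rfl
lemma cvv_0_1_5 : cv0 1 5 = 1 := rfl
lemma cvv_0_1_6 : cv0 1 6 = 1 := rfl
lemma cvv_0_1_7 : cv0 1 7 = 0 := rfl
lemma cvv_0_1_8 : cv0 1 8 = 1 := rfl
lemma cvv_0_1_9 : cv0 1 9 = 0 := rfl
lemma cvv_0_2_0 : cv0 2 0 = 0 := rfl
lemma cvv_0_2_1 : cv0 2 1 = 0 := rfl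
lemma cvv_0_2_2 : cv0 2 2 = 0 := rfl
lemma cvv_0_2_3 : cv0 2 3 = 0 := rfl
lemma cvv_0_2_4 : cv0 2 4 = 0 := rfl
lemma cvv_0_2_5 : cv0 2 5 = 0 := rfl
lemma cvv_0_2_6 : cv0 2 6 = 0 := rfl
lemma cvv_0_2_7 : cv0 2 7 = 0 := rfl
lemma cvv_0_2_8 : cv0 2 8 = 0 := rfl
lemma cvv_0_2_9 : cv0 2 9 = 0 := rfl
lemma cvv_0_3_0 : cv0 3 0 = 0 := rfl
lemma cvv_0_3_1 : cv0 3 1 = 0 := rfl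
lemma cvv_0_3_2 : cv0 3 2 = 0 := rfl
lemma cvv_0_3_3 : cv0 3 3 = 0 := rfl
lemma cvv_0_3_4 : cv0 3 4 = 0 := rfl
lemma cvv_0_3_5 : cv0 3 5 = 0 := rfl
lemma cvv_0_3_6 : cv0 3 6 = 0 := rfl
lemma cvv_0_3_7 : cv0 3 7 = 0 := rfl
lemma cvv_0_3_8 : cv0 3 8 = 0 := rfl
lemma cvv_0_3_9 : cv0 3 9 = 0 := rfl
lemma cvv_1_0_0 : cv1 0 0 = 0 := rfl
lemma cvv_1_0_1 : cv1 0 1 = -1 := rfl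
lemma cvv_1_0_2 : cv1 0 2 = 0 := rfl
lemma cvv_1_0_3 : cv1 0 3 = -1 := rfl
lemma cvv_1_0_4 : cv1 0 4 = 0 := rfl
lemma cvv_1_0_5 : cv1 0 5 = 0 := rfl
lemma cvv_1_0_6 : cv1 0 6 = -1 := rfl
lemma cvv_1_0_7 : cv1 0 7 = 0 := rfl
lemma cvv_1_0_8 : cv1 0 8 = 0 := rfl
lemma cvv_1_0_9 : cv1 0 9 = 0 := rfl
lemma cvv_1_1_0 : cv1 1 0 = 0 := rfl
lemma cvv_1_1_1 : cv1 1 1 = 1 := rfl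
lemma cvv_1_1_2 : cv1 1 2 = 0 := rfl
lemma cvv_1_1_3 : cv1 1 3 = 1 := rfl
lemma cvv_1_1_4 : cv1 1 4 = 0 := rfl
lemma cvv_1_1_5 : cv1 1 5 = 0 := rfl
lemma cvv_1_1_6 : cv1 1 6 = 1 := rfl
lemma cvv_1_1_7 : cv1 1 7 = 0 := rfl
lemma cvv_1_1_8 : cv1 1 8 = 0 := rfl
lemma cvv_1_1_9 : cv1 1 9 = 0 := rfl
lemma cvv_1_2_0 : cv1 2 0 = 0 := rfl
lemma cvv_1_2_1 : cv1 2 1 = 0 := rfl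
lemma cvv_1_2_2 : cv1 2 2 = -1 := rfl
lemma cvv_1_2_3 : cv1 2 3 = -1 := rfl
lemma cvv_1_2_4 : cv1 2 4 = 0 := rfl
lemma cvv_1_2_5 : cv1 2 5 = 1 := rfl
lemma cvv_1_2_6 : cv1 2 6 = 1 := rfl
lemma cvv_1_2_7 : cv1 2 7 = 0 := rfl
lemma cvv_1_2_8 : cv1 2 8 = 0 := rfl
lemma cvv_1_2_9 : cv1 2 9 = 0 := rfl
lemma cvv_1_3_0 : cv1 3 0 = 0 := rfl
lemma cvv_1_3_1 : cv1 3 1 = 0 := rfl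
lemma cvv_1_3_2 : cv1 3 2 = 0 := rfl
lemma cvv_1_3_3 : cv1 3 3 = 0 := rfl
lemma cvv_1_3_4 : cv1 3 4 = 0 := rfl
lemma cvv_1_3_5 : cv1 3 5 = 0 := rfl
lemma cvv_1_3_6 : cv1 3 6 = 0 := rfl
lemma cvv_1_3_7 : cv1 3 7 = 0 := rfl
lemma cvv_1_3_8 : cv1 3 8 = 0 := rfl
lemma cvv_1_3_9 : cv1 3 9 = 0 := rfl
lemma cvv_2_0_0 : cv2 0 0 = 0 := rfl
lemma cvv_2_0_1 : cv2 0 1 = 0 := rfl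
lemma cvv_2_0_2 : cv2 0 2 = 0 := rfl
lemma cvv_2_0_3 : cv2 0 3 = 0 := rfl
lemma cvv_2_0_4 : cv2 0 4 = 0 := rfl
lemma cvv_2_0_5 : cv2 0 5 = 0 := rfl
lemma cvv_2_0_6 : cv2 0 6 = 0 := rfl
lemma cvv_2_0_7 : cv2 0 7 = 0 := rfl
lemma cvv_2_0_8 : cv2 0 8 = 0 := rfl
lemma cvv_2_0_9 : cv2 0 9 = 0 := rfl
lemma cvv_2_1_0 : cv2 1 0 = 0 := rfl
lemma cvv_2_1_1 : cv2 1 1 = -1 := rfl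
lemma cvv_2_1_2 : cv2 1 2 = 0 := rfl
lemma cvv_2_1_3 : cv2 1 3 = -1 := rfl
lemma cvv_2_1_4 : cv2 1 4 = 0 := rfl
lemma cvv_2_1_5 : cv2 1 5 = 0 := rfl
lemma cvv_2_1_6 : cv2 1 6 = -1 := rfl
lemma cvv_2_1_7 : cv2 1 7 = 0 := rfl
lemma cvv_2_1_8 : cv2 1 8 = 0 := rfl
lemma cvv_2_1_9 : cv2 1 9 = 0 := rfl
lemma cvv_2_2_0 : cv2 2 0 = 0 := rfl
lemma cvv_2_2_1 : cv2 2 1 = 0 := rfl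
lemma cvv_2_2_2 : cv2 2 2 = 1 := rfl
lemma cvv_2_2_3 : cv2 2 3 = 1 := rfl
lemma cvv_2_2_4 : cv2 2 4 = 0 := rfl
lemma cvv_2_2_5 : cv2 2 5 = 0 := rfl
lemma cvv_2_2_6 : cv2 2 6 = 0 := rfl
lemma cvv_2_2_7 : cv2 2 7 = 0 := rfl
lemma cvv_2_2_8 : cv2 2 8 = 1 := rfl
lemma cvv_2_2_9 : cv2 2 9 = 0 := rfl
lemma cvv_2_3_0 : cv2 3 0 = 0 := rfl
lemma cvv_2_3_1 : cv2 3 1 = 0 := rfl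
lemma cvv_2_3_2 : cv2 3 2 = 0 := rfl
lemma cvv_2_3_3 : cv2 3 3 = 0 := rfl
lemma cvv_2_3_4 : cv2 3 4 = 0 := rfl
lemma cvv_2_3_5 : cv2 3 5 = 0 := rfl
lemma cvv_2_3_6 : cv2 3 6 = 0 := rfl
lemma cvv_2_3_7 : cv2 3 7 = 0 := rfl
lemma cvv_2_3_8 : cv2 3 8 = 0 := rfl
lemma cvv_2_3_9 : cv2 3 9 = 0 := rfl
lemma cvv_3_0_0 : cv3 0 0 = 0 := rfl
lemma cvv_3_0_1 : cv3 0 1 = 1 := rfl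
lemma cvv_3_0_2 : cv3 0 2 = -1 := rfl
lemma cvv_3_0_3 : cv3 0 3 = 0 := rfl
lemma cvv_3_0_4 : cv3 0 4 = 0 := rfl
lemma cvv_3_0_5 : cv3 0 5 = 0 := rfl
lemma cvv_3_0_6 : cv3 0 6 = 0 := rfl
lemma cvv_3_0_7 : cv3 0 7 = 0 := rfl
lemma cvv_3_0_8 : cv3 0 8 = 0 := rfl
lemma cvv_3_0_9 : cv3 0 9 = 0 := rfl
lemma cvv_3_1_0 : cv3 1 0 = 0 := rfl
lemma cvv_3_1_1 : cv3 1 1 = -1 := rfl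
lemma cvv_3_1_2 : cv3 1 2 = -1 := rfl
lemma cvv_3_1_3 : cv3 1 3 = 0 := rfl
lemma cvv_3_1_4 : cv3 1 4 = -2 := rfl
lemma cvv_3_1_5 : cv3 1 5 = -2 := rfl
lemma cvv_3_1_6 : cv3 1 6 = 0 := rfl
lemma cvv_3_1_7 : cv3 1 7 = 0 := rfl
lemma cvv_3_1_8 : cv3 1 8 = 0 := rfl
lemma cvv_3_1_9 : cv3 1 9 = 0 := rfl
lemma cvv_3_2_0 : cv3 2 0 = 0 := rfl
lemma cvv_3_2_1 : cv3 2 1 = 1 := rfl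
lemma cvv_3_2_2 : cv3 2 2 = 1 := rfl
lemma cvv_3_2_3 : cv3 2 3 = 0 := rfl
lemma cvv_3_2_4 : cv3 2 4 = 0 := rfl
lemma cvv_3_2_5 : cv3 2 5 = 2 := rfl
lemma cvv_3_2_6 : cv3 2 6 = 0 := rfl
lemma cvv_3_2_7 : cv3 2 7 = 2 := rfl
lemma cvv_3_2_8 : cv3 2 8 = 0 := rfl
lemma cvv_3_2_9 : cv3 2 9 = 0 := rfl
lemma cvv_3_3_0 : cv3 3 0 = 0 := rfl
lemma cvv_3_3_1 : cv3 3 1 = -1 := rfl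
lemma cvv_3_3_2 : cv3 3 2 = 1 := rfl
lemma cvv_3_3_3 : cv3 3 3 = 0 := rfl
lemma cvv_3_3_4 : cv3 3 4 = 0 := rfl
lemma cvv_3_3_5 : cv3 3 5 = 0 := rfl
lemma cvv_3_3_6 : cv3 3 6 = 0 := rfl
lemma cvv_3_3_7 : cv3 3 7 = 0 := rfl
lemma cvv_3_3_8 : cv3 3 8 = 0 := rfl
lemma cvv_3_3_9 : cv3 3 9 = 0 := rfl
lemma cvv_4_0_0 : cv4 0 0 = -1 := rfl
lemma cvv_4_0_1 : cv4 0 1 = (-1/2) := rfl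
lemma cvv_4_0_2 : cv4 0 2 = 0 := rfl
lemma cvv_4_0_3 : cv4 0 3 = 0 := rfl
lemma cvv_4_0_4 : cv4 0 4 = 0 := rfl
lemma cvv_4_0_5 : cv4 0 5 = 0 := rfl
lemma cvv_4_0_6 : cv4 0 6 = 0 := rfl
lemma cvv_4_0_7 : cv4 0 7 = 0 := rfl
lemma cvv_4_0_8 : cv4 0 8 = 0 := rfl
lemma cvv_4_0_9 : cv4 0 9 = 0 := rfl
lemma cvv_4_1_0 : cv4 1 0 = 0 := rfl
lemma cvv_4_1_1 : cv4 1 1 = (1/2) := rfl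
lemma cvv_4_1_2 : cv4 1 2 = 0 := rfl
lemma cvv_4_1_3 : cv4 1 3 = 0 := rfl
lemma cvv_4_1_4 : cv4 1 4 = 1 := rfl
lemma cvv_4_1_5 : cv4 1 5 = 0 := rfl
lemma cvv_4_1_6 : cv4 1 6 = 0 := rfl
lemma cvv_4_1_7 : cv4 1 7 = 0 := rfl
lemma cvv_4_1_8 : cv4 1 8 = 0 := rfl
lemma cvv_4_1_9 : cv4 1 9 = 0 := rfl
lemma cvv_4_2_0 : cv4 2 0 = 0 := rfl
lemma cvv_4_2_1 : cv4 2 1 = (-1/2) := rfl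
lemma cvv_4_2_2 : cv4 2 2 = 0 := rfl
lemma cvv_4_2_3 : cv4 2 3 = 0 := rfl
lemma cvv_4_2_4 : cv4 2 4 = 0 := rfl
lemma cvv_4_2_5 : cv4 2 5 = -1 := rfl
lemma cvv_4_2_6 : cv4 2 6 = 0 := rfl
lemma cvv_4_2_7 : cv4 2 7 = 0 := rfl
lemma cvv_4_2_8 : cv4 2 8 = 0 := rfl
lemma cvv_4_2_9 : cv4 2 9 = 0 := rfl
lemma cvv_4_3_0 : cv4 3 0 = 0 := rfl
lemma cvv_4_3_1 : cv4 3 1 = (1/2) := rfl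
lemma cvv_4_3_2 : cv4 3 2 = 0 := rfl
lemma cvv_4_3_3 : cv4 3 3 = 1 := rfl
lemma cvv_4_3_4 : cv4 3 4 = 0 := rfl
lemma cvv_4_3_5 : cv4 3 5 = 0 := rfl
lemma cvv_4_3_6 : cv4 3 6 = 0 := rfl
lemma cvv_4_3_7 : cv4 3 7 = 0 := rfl
lemma cvv_4_3_8 : cv4 3 8 = 0 := rfl
lemma cvv_4_3_9 : cv4 3 9 = 0 := rfl
lemma cvv_5_0_0 : cv5 0 0 = -2 := rfl
lemma cvv_5_0_1 : cv5 0 1 = -1 := rfl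
lemma cvv_5_0_2 : cv5 0 2 = -2 := rfl
lemma cvv_5_0_3 : cv5 0 3 = 0 := rfl
lemma cvv_5_0_4 : cv5 0 4 = 0 := rfl
lemma cvv_5_0_5 : cv5 0 5 = -1 := rfl
lemma cvv_5_0_6 : cv5 0 6 = 0 := rfl
lemma cvv_5_0_7 : cv5 0 7 = 0 := rfl
lemma cvv_5_0_8 : cv5 0 8 = 0 := rfl
lemma cvv_5_0_9 : cv5 0 9 = 0 := rfl
lemma cvv_5_1_0 : cv5 1 0 = 0 := rfl
lemma cvv_5_1_1 : cv5 1 1 = 1 := rfl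
lemma cvv_5_1_2 : cv5 1 2 = 0 := rfl
lemma cvv_5_1_3 : cv5 1 3 = 0 := rfl
lemma cvv_5_1_4 : cv5 1 4 = 0 := rfl
lemma cvv_5_1_5 : cv5 1 5 = -1 := rfl
lemma cvv_5_1_6 : cv5 1 6 = 0 := rfl
lemma cvv_5_1_7 : cv5 1 7 = 0 := rfl
lemma cvv_5_1_8 : cv5 1 8 = 0 := rfl
lemma cvv_5_1_9 : cv5 1 9 = 0 := rfl
lemma cvv_5_2_0 : cv5 2 0 = 0 := rfl
lemma cvv_5_2_1 : cv5 2 1 = 1 := rfl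
lemma cvv_5_2_2 : cv5 2 2 = 2 := rfl
lemma cvv_5_2_3 : cv5 2 3 = 0 := rfl
lemma cvv_5_2_4 : cv5 2 4 = 0 := rfl
lemma cvv_5_2_5 : cv5 2 5 = 1 := rfl
lemma cvv_5_2_6 : cv5 2 6 = 0 := rfl
lemma cvv_5_2_7 : cv5 2 7 = 2 := rfl
lemma cvv_5_2_8 : cv5 2 8 = 0 := rfl
lemma cvv_5_2_9 : cv5 2 9 = 0 := rfl
lemma cvv_5_3_0 : cv5 3 0 = 0 := rfl
lemma cvv_5_3_1 : cv5 3 1 = -1 := rfl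
lemma cvv_5_3_2 : cv5 3 2 = 0 := rfl
lemma cvv_5_3_3 : cv5 3 3 = 0 := rfl
lemma cvv_5_3_4 : cv5 3 4 = 0 := rfl
lemma cvv_5_3_5 : cv5 3 5 = 1 := rfl
lemma cvv_5_3_6 : cv5 3 6 = 0 := rfl
lemma cvv_5_3_7 : cv5 3 7 = 0 := rfl
lemma cvv_5_3_8 : cv5 3 8 = 0 := rfl
lemma cvv_5_3_9 : cv5 3 9 = 0 := rfl
lemma cvv_6_0_0 : cv6 0 0 = 1 := rfl
lemma cvv_6_0_1 : cv6 0 1 = (1/2) := rfl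
lemma cvv_6_0_2 : cv6 0 2 = 0 := rfl
lemma cvv_6_0_3 : cv6 0 3 = 0 := rfl
lemma cvv_6_0_4 : cv6 0 4 = 0 := rfl
lemma cvv_6_0_5 : cv6 0 5 = 0 := rfl
lemma cvv_6_0_6 : cv6 0 6 = 0 := rfl
lemma cvv_6_0_7 : cv6 0 7 = 0 := rfl
lemma cvv_6_0_8 : cv6 0 8 = 0 := rfl
lemma cvv_6_0_9 : cv6 0 9 = 0 := rfl
lemma cvv_6_1_0 : cv6 1 0 = 0 := rfl
lemma cvv_6_1_1 : cv6 1 1 = (-1/2) := rfl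
lemma cvv_6_1_2 : cv6 1 2 = 0 := rfl
lemma cvv_6_1_3 : cv6 1 3 = 0 := rfl
lemma cvv_6_1_4 : cv6 1 4 = -1 := rfl
lemma cvv_6_1_5 : cv6 1 5 = 0 := rfl
lemma cvv_6_1_6 : cv6 1 6 = 0 := rfl
lemma cvv_6_1_7 : cv6 1 7 = 0 := rfl
lemma cvv_6_1_8 : cv6 1 8 = 0 := rfl
lemma cvv_6_1_9 : cv6 1 9 = 0 := rfl
lemma cvv_6_2_0 : cv6 2 0 = 0 := rfl
lemma cvv_6_2_1 : cv6 2 1 = (-1/2) := rfl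
lemma cvv_6_2_2 : cv6 2 2 = -1 := rfl
lemma cvv_6_2_3 : cv6 2 3 = 0 := rfl
lemma cvv_6_2_4 : cv6 2 4 = 0 := rfl
lemma cvv_6_2_5 : cv6 2 5 = 0 := rfl
lemma cvv_6_2_6 : cv6 2 6 = 0 := rfl
lemma cvv_6_2_7 : cv6 2 7 = 0 := rfl
lemma cvv_6_2_8 : cv6 2 8 = 0 := rfl
lemma cvv_6_2_9 : cv6 2 9 = 0 := rfl
lemma cvv_6_3_0 : cv6 3 0 = 0 := rfl
lemma cvv_6_3_1 : cv6 3 1 = (1/2) := rfl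
lemma cvv_6_3_2 : cv6 3 2 = 0 := rfl
lemma cvv_6_3_3 : cv6 3 3 = 0 := rfl
lemma cvv_6_3_4 : cv6 3 4 = 0 := rfl
lemma cvv_6_3_5 : cv6 3 5 = 0 := rfl
lemma cvv_6_3_6 : cv6 3 6 = 1 := rfl
lemma cvv_6_3_7 : cv6 3 7 = 0 := rfl
lemma cvv_6_3_8 : cv6 3 8 = 0 := rfl
lemma cvv_6_3_9 : cv6 3 9 = 0 := rfl
lemma cvv_7_0_0 : cv7 0 0 = 1 := rfl
lemma cvv_7_0_1 : cv7 0 1 = (-1/2) := rfl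
lemma cvv_7_0_2 : cv7 0 2 = 1 := rfl
lemma cvv_7_0_3 : cv7 0 3 = 0 := rfl
lemma cvv_7_0_4 : cv7 0 4 = 0 := rfl
lemma cvv_7_0_5 : cv7 0 5 = 0 := rfl
lemma cvv_7_0_6 : cv7 0 6 = 0 := rfl
lemma cvv_7_0_7 : cv7 0 7 = 0 := rfl
lemma cvv_7_0_8 : cv7 0 8 = 0 := rfl
lemma cvv_7_0_9 : cv7 0 9 = 0 := rfl
lemma cvv_7_1_0 : cv7 1 0 = 0 := rfl
lemma cvv_7_1_1 : cv7 1 1 = (-1/2) := rfl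
lemma cvv_7_1_2 : cv7 1 2 = 0 := rfl
lemma cvv_7_1_3 : cv7 1 3 = 0 := rfl
lemma cvv_7_1_4 : cv7 1 4 = 1 := rfl
lemma cvv_7_1_5 : cv7 1 5 = 1 := rfl
lemma cvv_7_1_6 : cv7 1 6 = 0 := rfl
lemma cvv_7_1_7 : cv7 1 7 = 0 := rfl
lemma cvv_7_1_8 : cv7 1 8 = 0 := rfl
lemma cvv_7_1_9 : cv7 1 9 = 0 := rfl
lemma cvv_7_2_0 : cv7 2 0 = 0 := rfl
lemma cvv_7_2_1 : cv7 2 1 = (-1/2) := rfl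
lemma cvv_7_2_2 : cv7 2 2 = -1 := rfl
lemma cvv_7_2_3 : cv7 2 3 = 0 := rfl
lemma cvv_7_2_4 : cv7 2 4 = 0 := rfl
lemma cvv_7_2_5 : cv7 2 5 = -1 := rfl
lemma cvv_7_2_6 : cv7 2 6 = 0 := rfl
lemma cvv_7_2_7 : cv7 2 7 = -2 := rfl
lemma cvv_7_2_8 : cv7 2 8 = 0 := rfl
lemma cvv_7_2_9 : cv7 2 9 = 0 := rfl
lemma cvv_7_3_0 : cv7 3 0 = 0 := rfl
lemma cvv_7_3_1 : cv7 3 1 = (1/2) := rfl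
lemma cvv_7_3_2 : cv7 3 2 = 0 := rfl
lemma cvv_7_3_3 : cv7 3 3 = 0 := rfl
lemma cvv_7_3_4 : cv7 3 4 = 0 := rfl
lemma cvv_7_3_5 : cv7 3 5 = 0 := rfl
lemma cvv_7_3_6 : cv7 3 6 = 0 := rfl
lemma cvv_7_3_7 : cv7 3 7 = 0 := rfl
lemma cvv_7_3_8 : cv7 3 8 = 1 := rfl
lemma cvv_7_3_9 : cv7 3 9 = 0 := rfl
lemma cvv_8_0_0 : cv8 0 0 = (-1/2) := rfl
lemma cvv_8_0_1 : cv8 0 1 = (1/4) := rfl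
lemma cvv_8_0_2 : cv8 0 2 = 0 := rfl
lemma cvv_8_0_3 : cv8 0 3 = (-1/2) := rfl
lemma cvv_8_0_4 : cv8 0 4 = 0 := rfl
lemma cvv_8_0_5 : cv8 0 5 = 0 := rfl
lemma cvv_8_0_6 : cv8 0 6 = 0 := rfl
lemma cvv_8_0_7 : cv8 0 7 = 0 := rfl
lemma cvv_8_0_8 : cv8 0 8 = 0 := rfl
lemma cvv_8_0_9 : cv8 0 9 = 0 := rfl
lemma cvv_8_1_0 : cv8 1 0 = 0 := rfl
lemma cvv_8_1_1 : cv8 1 1 = (-1/4) := rfl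
lemma cvv_8_1_2 : cv8 1 2 = 0 := rfl
lemma cvv_8_1_3 : cv8 1 3 = (-1/2) := rfl
lemma cvv_8_1_4 : cv8 1 4 = (-1/2) := rfl
lemma cvv_8_1_5 : cv8 1 5 = 0 := rfl
lemma cvv_8_1_6 : cv8 1 6 = -1 := rfl
lemma cvv_8_1_7 : cv8 1 7 = 0 := rfl
lemma cvv_8_1_8 : cv8 1 8 = 0 := rfl
lemma cvv_8_1_9 : cv8 1 9 = 0 := rfl
lemma cvv_8_2_0 : cv8 2 0 = 0 := rfl
lemma cvv_8_2_1 : cv8 2 1 = (1/4) := rfl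
lemma cvv_8_2_2 : cv8 2 2 = 1 := rfl
lemma cvv_8_2_3 : cv8 2 3 = (1/2) := rfl
lemma cvv_8_2_4 : cv8 2 4 = 0 := rfl
lemma cvv_8_2_5 : cv8 2 5 = (1/2) := rfl
lemma cvv_8_2_6 : cv8 2 6 = 0 := rfl
lemma cvv_8_2_7 : cv8 2 7 = 0 := rfl
lemma cvv_8_2_8 : cv8 2 8 = 0 := rfl
lemma cvv_8_2_9 : cv8 2 9 = 0 := rfl
lemma cvv_8_3_0 : cv8 3 0 = 0 := rfl
lemma cvv_8_3_1 : cv8 3 1 = (-1/4) := rfl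
lemma cvv_8_3_2 : cv8 3 2 = 0 := rfl
lemma cvv_8_3_3 : cv8 3 3 = 0 := rfl
lemma cvv_8_3_4 : cv8 3 4 = 0 := rfl
lemma cvv_8_3_5 : cv8 3 5 = 0 := rfl
lemma cvv_8_3_6 : cv8 3 6 = 0 := rfl
lemma cvv_8_3_7 : cv8 3 7 = 0 := rfl
lemma cvv_8_3_8 : cv8 3 8 = 0 := rfl
lemma cvv_8_3_9 : cv8 3 9 = 1 := rfl

lemma ngz_0_0 : Ng (cs 0) 0 = 0 := by
  show cv0 0 9 + cv0 1 9 = 0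
  simp only [cvv_0_0_9, cvv_0_1_9]; norm_num
lemma ngz_0_1 : Ng (cs 0) 1 = 0 := by
  show cv0 0 8 + cv0 1 8 = 0
  simp only [cvv_0_0_8, cvv_0_1_8]; norm_num
lemma ngz_0_2 : Ng (cs 0) 2 = 0 := by
  show cv0 0 7 + cv0 1 7 = 0
  simp only [cvv_0_0_7, cvv_0_1_7]; norm_num
lemma ngz_0_3 : Ng (cs 0) 3 = 0 := by
  show cv0 0 9 + cv0 2 9 = 0
  simp only [cvv_0_0_9, cvv_0_2_9]; norm_num
lemma ngz_0_4 : Ng (cs 0) 4 = 0 := by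
  show cv0 0 6 + cv0 0 8 + cv0 0 9 + cv0 1 6 + cv0 2 8 + cv0 3 9 = 0
  simp only [cvv_0_0_6, cvv_0_0_8, cvv_0_0_9, cvv_0_1_6, cvv_0_2_8, cvv_0_3_9]; norm_num
lemma ngz_0_5 : Ng (cs 0) 5 = 0 := by
  show cv0 0 5 + cv0 0 7 + cv0 0 8 + cv0 1 5 + cv0 2 7 + cv0 3 8 = 0
  simp only [cvv_0_0_5, cvv_0_0_7, cvv_0_0_8, cvv_0_1_5, cvv_0_2_7, cvv_0_3_8]; norm_num
lemma ngz_0_6 : Ng (cs 0) 6 = 0 := by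
  show cv0 0 7 + cv0 3 7 = 0
  simp only [cvv_0_0_7, cvv_0_3_7]; norm_num
lemma ngz_0_7 : Ng (cs 0) 7 = 0 := by
  show cv0 0 6 + cv0 2 6 = 0
  simp only [cvv_0_0_6, cvv_0_2_6]; norm_num
lemma ngz_0_8 : Ng (cs 0) 8 = 0 := by
  show cv0 0 4 + cv0 0 5 + cv0 0 6 + cv0 1 4 + cv0 2 5 + cv0 3 6 = 0
  simp only [cvv_0_0_4, cvv_0_0_5, cvv_0_0_6, cvv_0_1_4, cvv_0_2_5, cvv_0_3_6]; norm_num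
lemma ngz_0_9 : Ng (cs 0) 9 = 0 := by
  show cv0 0 5 + cv0 3 5 = 0
  simp only [cvv_0_0_5, cvv_0_3_5]; norm_num
lemma ngz_0_10 : Ng (cs 0) 10 = 0 := by
  show cv0 0 4 + cv0 2 4 = 0
  simp only [cvv_0_0_4, cvv_0_2_4]; norm_num
lemma ngz_0_11 : Ng (cs 0) 11 = 0 := by
  show cv0 0 4 + cv0 3 4 = 0
  simp only [cvv_0_0_4, cvv_0_3_4]; norm_num
lemma ngz_0_12 : Ng (cs 0) 12 = 0 := by
  show cv0 1 9 + cv0 2 9 = 0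
  simp only [cvv_0_1_9, cvv_0_2_9]; norm_num
lemma ngz_0_13 : Ng (cs 0) 13 = 0 := by
  show cv0 0 3 + cv0 1 3 + cv0 1 8 + cv0 1 9 + cv0 2 8 + cv0 3 9 = 0
  simp only [cvv_0_0_3, cvv_0_1_3, cvv_0_1_8, cvv_0_1_9, cvv_0_2_8, cvv_0_3_9]; norm_num
lemma ngz_0_14 : Ng (cs 0) 14 = 0 := by
  show cv0 0 2 + cv0 1 2 + cv0 1 7 + cv0 1 8 + cv0 2 7 + cv0 3 8 = 0
  simp only [cvv_0_0_2, cvv_0_1_2, cvv_0_1_7, cvv_0_1_8, cvv_0_2_7, cvv_0_3_8]; norm_num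
lemma ngz_0_15 : Ng (cs 0) 15 = 0 := by
  show cv0 1 7 + cv0 3 7 = 0
  simp only [cvv_0_1_7, cvv_0_3_7]; norm_num
lemma ngz_0_16 : Ng (cs 0) 16 = 0 := by
  show cv0 0 3 + cv0 1 6 + cv0 2 3 + cv0 2 6 + cv0 2 9 + cv0 3 9 = 0
  simp only [cvv_0_0_3, cvv_0_1_6, cvv_0_2_3, cvv_0_2_6, cvv_0_2_9, cvv_0_3_9]; norm_num
lemma ngz_0_17 : Ng (cs 0) 17 = 0 := by
  show cv0 0 1 + cv0 0 2 + cv0 0 3 + cv0 1 1 + cv0 1 5 + cv0 1 6 + cv0 2 2 + cv0 2 5 + cv0 2 8 + cv0 3 3 + cv0 3 6 + cv0 3 8 = 0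
  simp only [cvv_0_0_1, cvv_0_0_2, cvv_0_0_3, cvv_0_1_1, cvv_0_1_5, cvv_0_1_6, cvv_0_2_2, cvv_0_2_5, cvv_0_2_8, cvv_0_3_3, cvv_0_3_6, cvv_0_3_8]; norm_num
lemma ngz_0_18 : Ng (cs 0) 18 = 0 := by
  show cv0 0 2 + cv0 1 5 + cv0 2 7 + cv0 3 2 + cv0 3 5 + cv0 3 7 = 0
  simp only [cvv_0_0_2, cvv_0_1_5, cvv_0_2_7, cvv_0_3_2, cvv_0_3_5, cvv_0_3_7]; norm_num
lemma ngz_0_19 : Ng (cs 0) 19 = 0 := by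
  show cv0 0 1 + cv0 1 4 + cv0 2 1 + cv0 2 4 + cv0 2 6 + cv0 3 6 = 0
  simp only [cvv_0_0_1, cvv_0_1_4, cvv_0_2_1, cvv_0_2_4, cvv_0_2_6, cvv_0_3_6]; norm_num
lemma ngz_0_20 : Ng (cs 0) 20 = 0 := by
  show cv0 0 1 + cv0 1 4 + cv0 2 5 + cv0 3 1 + cv0 3 4 + cv0 3 5 = 0
  simp only [cvv_0_0_1, cvv_0_1_4, cvv_0_2_5, cvv_0_3_1, cvv_0_3_4, cvv_0_3_5]; norm_num
lemma ngz_0_21 : Ng (cs 0) 21 = 0 := by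
  show cv0 2 4 + cv0 3 4 = 0
  simp only [cvv_0_2_4, cvv_0_3_4]; norm_num
lemma ngz_0_22 : Ng (cs 0) 22 = 0 := by
  show cv0 1 3 + cv0 2 3 = 0
  simp only [cvv_0_1_3, cvv_0_2_3]; norm_num
lemma ngz_0_23 : Ng (cs 0) 23 = 0 := by
  show cv0 0 0 + cv0 1 0 + cv0 1 2 + cv0 1 3 + cv0 2 2 + cv0 3 3 = 0
  simp only [cvv_0_0_0, cvv_0_1_0, cvv_0_1_2, cvv_0_1_3, cvv_0_2_2, cvv_0_3_3]; norm_num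
lemma ngz_0_24 : Ng (cs 0) 24 = 0 := by
  show cv0 1 2 + cv0 3 2 = 0
  simp only [cvv_0_1_2, cvv_0_3_2]; norm_num
lemma ngz_0_25 : Ng (cs 0) 25 = 0 := by
  show cv0 0 0 + cv0 1 1 + cv0 2 0 + cv0 2 1 + cv0 2 3 + cv0 3 3 = 0
  simp only [cvv_0_0_0, cvv_0_1_1, cvv_0_2_0, cvv_0_2_1, cvv_0_2_3, cvv_0_3_3]; norm_num
lemma ngz_0_26 : Ng (cs 0) 26 = 0 := by
  show cv0 0 0 + cv0 1 1 + cv0 2 2 + cv0 3 0 + cv0 3 1 + cv0 3 2 = 0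
  simp only [cvv_0_0_0, cvv_0_1_1, cvv_0_2_2, cvv_0_3_0, cvv_0_3_1, cvv_0_3_2]; norm_num
lemma ngz_0_27 : Ng (cs 0) 27 = 0 := by
  show cv0 2 1 + cv0 3 1 = 0
  simp only [cvv_0_2_1, cvv_0_3_1]; norm_num
lemma ngz_0_28 : Ng (cs 0) 28 = 0 := by
  show cv0 1 0 + cv0 2 0 = 0
  simp only [cvv_0_1_0, cvv_0_2_0]; norm_num
lemma ngz_0_29 : Ng (cs 0) 29 = 0 := by
  show cv0 1 0 + cv0 3 0 = 0
  simp only [cvv_0_1_0, cvv_0_3_0]; norm_num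
lemma ngz_0_30 : Ng (cs 0) 30 = 0 := by
  show cv0 2 0 + cv0 3 0 = 0
  simp only [cvv_0_2_0, cvv_0_3_0]; norm_num
lemma NgZ0 : ∀ t, Ng (cs 0) t = 0 := finForall31 ngz_0_0 ngz_0_1 ngz_0_2 ngz_0_3 ngz_0_4 ngz_0_5 ngz_0_6 ngz_0_7 ngz_0_8 ngz_0_9 ngz_0_10 ngz_0_11 ngz_0_12 ngz_0_13 ngz_0_14 ngz_0_15 ngz_0_16 ngz_0_17 ngz_0_18 ngz_0_19 ngz_0_20 ngz_0_21 ngz_0_22 ngz_0_23 ngz_0_24 ngz_0_25 ngz_0_26 ngz_0_27 ngz_0_28 ngz_0_29 ngz_0_30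

lemma ngz_1_0 : Ng (cs 1) 0 = 0 := by
  show cv1 0 9 + cv1 1 9 = 0
  simp only [cvv_1_0_9, cvv_1_1_9]; norm_num
lemma ngz_1_1 : Ng (cs 1) 1 = 0 := by
  show cv1 0 8 + cv1 1 8 = 0
  simp only [cvv_1_0_8, cvv_1_1_8]; norm_num
lemma ngz_1_2 : Ng (cs 1) 2 = 0 := by
  show cv1 0 7 + cv1 1 7 = 0
  simp only [cvv_1_0_7, cvv_1_1_7]; norm_num
lemma ngz_1_3 : Ng (cs 1) 3 = 0 := by
  show cv1 0 9 + cv1 2 9 = 0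
  simp only [cvv_1_0_9, cvv_1_2_9]; norm_num
lemma ngz_1_4 : Ng (cs 1) 4 = 0 := by
  show cv1 0 6 + cv1 0 8 + cv1 0 9 + cv1 1 6 + cv1 2 8 + cv1 3 9 = 0
  simp only [cvv_1_0_6, cvv_1_0_8, cvv_1_0_9, cvv_1_1_6, cvv_1_2_8, cvv_1_3_9]; norm_num
lemma ngz_1_5 : Ng (cs 1) 5 = 0 := by
  show cv1 0 5 + cv1 0 7 + cv1 0 8 + cv1 1 5 + cv1 2 7 + cv1 3 8 = 0
  simp only [cvv_1_0_5, cvv_1_0_7, cvv_1_0_8, cvv_1_1_5, cvv_1_2_7, cvv_1_3_8]; norm_num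
lemma ngz_1_6 : Ng (cs 1) 6 = 0 := by
  show cv1 0 7 + cv1 3 7 = 0
  simp only [cvv_1_0_7, cvv_1_3_7]; norm_num
lemma ngz_1_7 : Ng (cs 1) 7 = 0 := by
  show cv1 0 6 + cv1 2 6 = 0
  simp only [cvv_1_0_6, cvv_1_2_6]; norm_num
lemma ngz_1_8 : Ng (cs 1) 8 = 0 := by
  show cv1 0 4 + cv1 0 5 + cv1 0 6 + cv1 1 4 + cv1 2 5 + cv1 3 6 = 0
  simp only [cvv_1_0_4, cvv_1_0_5, cvv_1_0_6, cvv_1_1_4, cvv_1_2_5, cvv_1_3_6]; norm_num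
lemma ngz_1_9 : Ng (cs 1) 9 = 0 := by
  show cv1 0 5 + cv1 3 5 = 0
  simp only [cvv_1_0_5, cvv_1_3_5]; norm_num
lemma ngz_1_10 : Ng (cs 1) 10 = 0 := by
  show cv1 0 4 + cv1 2 4 = 0
  simp only [cvv_1_0_4, cvv_1_2_4]; norm_num
lemma ngz_1_11 : Ng (cs 1) 11 = 0 := by
  show cv1 0 4 + cv1 3 4 = 0
  simp only [cvv_1_0_4, cvv_1_3_4]; norm_num
lemma ngz_1_12 : Ng (cs 1) 12 = 0 := by
  show cv1 1 9 + cv1 2 9 = 0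
  simp only [cvv_1_1_9, cvv_1_2_9]; norm_num
lemma ngz_1_13 : Ng (cs 1) 13 = 0 := by
  show cv1 0 3 + cv1 1 3 + cv1 1 8 + cv1 1 9 + cv1 2 8 + cv1 3 9 = 0
  simp only [cvv_1_0_3, cvv_1_1_3, cvv_1_1_8, cvv_1_1_9, cvv_1_2_8, cvv_1_3_9]; norm_num
lemma ngz_1_14 : Ng (cs 1) 14 = 0 := by
  show cv1 0 2 + cv1 1 2 + cv1 1 7 + cv1 1 8 + cv1 2 7 + cv1 3 8 = 0
  simp only [cvv_1_0_2, cvv_1_1_2, cvv_1_1_7, cvv_1_1_8, cvv_1_2_7, cvv_1_3_8]; norm_num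
lemma ngz_1_15 : Ng (cs 1) 15 = 0 := by
  show cv1 1 7 + cv1 3 7 = 0
  simp only [cvv_1_1_7, cvv_1_3_7]; norm_num
lemma ngz_1_16 : Ng (cs 1) 16 = 0 := by
  show cv1 0 3 + cv1 1 6 + cv1 2 3 + cv1 2 6 + cv1 2 9 + cv1 3 9 = 0
  simp only [cvv_1_0_3, cvv_1_1_6, cvv_1_2_3, cvv_1_2_6, cvv_1_2_9, cvv_1_3_9]; norm_num
lemma ngz_1_17 : Ng (cs 1) 17 = 0 := by
  show cv1 0 1 + cv1 0 2 + cv1 0 3 + cv1 1 1 + cv1 1 5 + cv1 1 6 + cv1 2 2 + cv1 2 5 + cv1 2 8 + cv1 3 3 + cv1 3 6 + cv1 3 8 = 0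
  simp only [cvv_1_0_1, cvv_1_0_2, cvv_1_0_3, cvv_1_1_1, cvv_1_1_5, cvv_1_1_6, cvv_1_2_2, cvv_1_2_5, cvv_1_2_8, cvv_1_3_3, cvv_1_3_6, cvv_1_3_8]; norm_num
lemma ngz_1_18 : Ng (cs 1) 18 = 0 := by
  show cv1 0 2 + cv1 1 5 + cv1 2 7 + cv1 3 2 + cv1 3 5 + cv1 3 7 = 0
  simp only [cvv_1_0_2, cvv_1_1_5, cvv_1_2_7, cvv_1_3_2, cvv_1_3_5, cvv_1_3_7]; norm_num
lemma ngz_1_19 : Ng (cs 1) 19 = 0 := by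
  show cv1 0 1 + cv1 1 4 + cv1 2 1 + cv1 2 4 + cv1 2 6 + cv1 3 6 = 0
  simp only [cvv_1_0_1, cvv_1_1_4, cvv_1_2_1, cvv_1_2_4, cvv_1_2_6, cvv_1_3_6]; norm_num
lemma ngz_1_20 : Ng (cs 1) 20 = 0 := by
  show cv1 0 1 + cv1 1 4 + cv1 2 5 + cv1 3 1 + cv1 3 4 + cv1 3 5 = 0
  simp only [cvv_1_0_1, cvv_1_1_4, cvv_1_2_5, cvv_1_3_1, cvv_1_3_4, cvv_1_3_5]; norm_num
lemma ngz_1_21 : Ng (cs 1) 21 = 0 := by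
  show cv1 2 4 + cv1 3 4 = 0
  simp only [cvv_1_2_4, cvv_1_3_4]; norm_num
lemma ngz_1_22 : Ng (cs 1) 22 = 0 := by
  show cv1 1 3 + cv1 2 3 = 0
  simp only [cvv_1_1_3, cvv_1_2_3]; norm_num
lemma ngz_1_23 : Ng (cs 1) 23 = 0 := by
  show cv1 0 0 + cv1 1 0 + cv1 1 2 + cv1 1 3 + cv1 2 2 + cv1 3 3 = 0
  simp only [cvv_1_0_0, cvv_1_1_0, cvv_1_1_2, cvv_1_1_3, cvv_1_2_2, cvv_1_3_3]; norm_num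
lemma ngz_1_24 : Ng (cs 1) 24 = 0 := by
  show cv1 1 2 + cv1 3 2 = 0
  simp only [cvv_1_1_2, cvv_1_3_2]; norm_num
lemma ngz_1_25 : Ng (cs 1) 25 = 0 := by
  show cv1 0 0 + cv1 1 1 + cv1 2 0 + cv1 2 1 + cv1 2 3 + cv1 3 3 = 0
  simp only [cvv_1_0_0, cvv_1_1_1, cvv_1_2_0, cvv_1_2_1, cvv_1_2_3, cvv_1_3_3]; norm_num
lemma ngz_1_26 : Ng (cs 1) 26 = 0 := by
  show cv1 0 0 + cv1 1 1 + cv1 2 2 + cv1 3 0 + cv1 3 1 + cv1 3 2 = 0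
  simp only [cvv_1_0_0, cvv_1_1_1, cvv_1_2_2, cvv_1_3_0, cvv_1_3_1, cvv_1_3_2]; norm_num
lemma ngz_1_27 : Ng (cs 1) 27 = 0 := by
  show cv1 2 1 + cv1 3 1 = 0
  simp only [cvv_1_2_1, cvv_1_3_1]; norm_num
lemma ngz_1_28 : Ng (cs 1) 28 = 0 := by
  show cv1 1 0 + cv1 2 0 = 0
  simp only [cvv_1_1_0, cvv_1_2_0]; norm_num
lemma ngz_1_29 : Ng (cs 1) 29 = 0 := by
  show cv1 1 0 + cv1 3 0 = 0
  simp only [cvv_1_1_0, cvv_1_3_0]; norm_num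
lemma ngz_1_30 : Ng (cs 1) 30 = 0 := by
  show cv1 2 0 + cv1 3 0 = 0
  simp only [cvv_1_2_0, cvv_1_3_0]; norm_num
lemma NgZ1 : ∀ t, Ng (cs 1) t = 0 := finForall31 ngz_1_0 ngz_1_1 ngz_1_2 ngz_1_3 ngz_1_4 ngz_1_5 ngz_1_6 ngz_1_7 ngz_1_8 ngz_1_9 ngz_1_10 ngz_1_11 ngz_1_12 ngz_1_13 ngz_1_14 ngz_1_15 ngz_1_16 ngz_1_17 ngz_1_18 ngz_1_19 ngz_1_20 ngz_1_21 ngz_1_22 ngz_1_23 ngz_1_24 ngz_1_25 ngz_1_26 ngz_1_27 ngz_1_28 ngz_1_29 ngz_1_30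

lemma ngz_2_0 : Ng (cs 2) 0 = 0 := by
  show cv2 0 9 + cv2 1 9 = 0
  simp only [cvv_2_0_9, cvv_2_1_9]; norm_num
lemma ngz_2_1 : Ng (cs 2) 1 = 0 := by
  show cv2 0 8 + cv2 1 8 = 0
  simp only [cvv_2_0_8, cvv_2_1_8]; norm_num
lemma ngz_2_2 : Ng (cs 2) 2 = 0 := by
  show cv2 0 7 + cv2 1 7 = 0
  simp only [cvv_2_0_7, cvv_2_1_7]; norm_num
lemma ngz_2_3 : Ng (cs 2) 3 = 0 := by
  show cv2 0 9 + cv2 2 9 = 0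
  simp only [cvv_2_0_9, cvv_2_2_9]; norm_num
lemma ngz_2_4 : Ng (cs 2) 4 = 0 := by
  show cv2 0 6 + cv2 0 8 + cv2 0 9 + cv2 1 6 + cv2 2 8 + cv2 3 9 = 0
  simp only [cvv_2_0_6, cvv_2_0_8, cvv_2_0_9, cvv_2_1_6, cvv_2_2_8, cvv_2_3_9]; norm_num
lemma ngz_2_5 : Ng (cs 2) 5 = 0 := by
  show cv2 0 5 + cv2 0 7 + cv2 0 8 + cv2 1 5 + cv2 2 7 + cv2 3 8 = 0
  simp only [cvv_2_0_5, cvv_2_0_7, cvv_2_0_8, cvv_2_1_5, cvv_2_2_7, cvv_2_3_8]; norm_num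
lemma ngz_2_6 : Ng (cs 2) 6 = 0 := by
  show cv2 0 7 + cv2 3 7 = 0
  simp only [cvv_2_0_7, cvv_2_3_7]; norm_num
lemma ngz_2_7 : Ng (cs 2) 7 = 0 := by
  show cv2 0 6 + cv2 2 6 = 0
  simp only [cvv_2_0_6, cvv_2_2_6]; norm_num
lemma ngz_2_8 : Ng (cs 2) 8 = 0 := by
  show cv2 0 4 + cv2 0 5 + cv2 0 6 + cv2 1 4 + cv2 2 5 + cv2 3 6 = 0
  simp only [cvv_2_0_4, cvv_2_0_5, cvv_2_0_6, cvv_2_1_4, cvv_2_2_5, cvv_2_3_6]; norm_num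
lemma ngz_2_9 : Ng (cs 2) 9 = 0 := by
  show cv2 0 5 + cv2 3 5 = 0
  simp only [cvv_2_0_5, cvv_2_3_5]; norm_num
lemma ngz_2_10 : Ng (cs 2) 10 = 0 := by
  show cv2 0 4 + cv2 2 4 = 0
  simp only [cvv_2_0_4, cvv_2_2_4]; norm_num
lemma ngz_2_11 : Ng (cs 2) 11 = 0 := by
  show cv2 0 4 + cv2 3 4 = 0
  simp only [cvv_2_0_4, cvv_2_3_4]; norm_num
lemma ngz_2_12 : Ng (cs 2) 12 = 0 := by
  show cv2 1 9 + cv2 2 9 = 0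
  simp only [cvv_2_1_9, cvv_2_2_9]; norm_num
lemma ngz_2_13 : Ng (cs 2) 13 = 0 := by
  show cv2 0 3 + cv2 1 3 + cv2 1 8 + cv2 1 9 + cv2 2 8 + cv2 3 9 = 0
  simp only [cvv_2_0_3, cvv_2_1_3, cvv_2_1_8, cvv_2_1_9, cvv_2_2_8, cvv_2_3_9]; norm_num
lemma ngz_2_14 : Ng (cs 2) 14 = 0 := by
  show cv2 0 2 + cv2 1 2 + cv2 1 7 + cv2 1 8 + cv2 2 7 + cv2 3 8 = 0
  simp only [cvv_2_0_2, cvv_2_1_2, cvv_2_1_7, cvv_2_1_8, cvv_2_2_7, cvv_2_3_8]; norm_num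
lemma ngz_2_15 : Ng (cs 2) 15 = 0 := by
  show cv2 1 7 + cv2 3 7 = 0
  simp only [cvv_2_1_7, cvv_2_3_7]; norm_num
lemma ngz_2_16 : Ng (cs 2) 16 = 0 := by
  show cv2 0 3 + cv2 1 6 + cv2 2 3 + cv2 2 6 + cv2 2 9 + cv2 3 9 = 0
  simp only [cvv_2_0_3, cvv_2_1_6, cvv_2_2_3, cvv_2_2_6, cvv_2_2_9, cvv_2_3_9]; norm_num
lemma ngz_2_17 : Ng (cs 2) 17 = 0 := by
  show cv2 0 1 + cv2 0 2 + cv2 0 3 + cv2 1 1 + cv2 1 5 + cv2 1 6 + cv2 2 2 + cv2 2 5 + cv2 2 8 + cv2 3 3 + cv2 3 6 + cv2 3 8 = 0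
  simp only [cvv_2_0_1, cvv_2_0_2, cvv_2_0_3, cvv_2_1_1, cvv_2_1_5, cvv_2_1_6, cvv_2_2_2, cvv_2_2_5, cvv_2_2_8, cvv_2_3_3, cvv_2_3_6, cvv_2_3_8]; norm_num
lemma ngz_2_18 : Ng (cs 2) 18 = 0 := by
  show cv2 0 2 + cv2 1 5 + cv2 2 7 + cv2 3 2 + cv2 3 5 + cv2 3 7 = 0
  simp only [cvv_2_0_2, cvv_2_1_5, cvv_2_2_7, cvv_2_3_2, cvv_2_3_5, cvv_2_3_7]; norm_num
lemma ngz_2_19 : Ng (cs 2) 19 = 0 := by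
  show cv2 0 1 + cv2 1 4 + cv2 2 1 + cv2 2 4 + cv2 2 6 + cv2 3 6 = 0
  simp only [cvv_2_0_1, cvv_2_1_4, cvv_2_2_1, cvv_2_2_4, cvv_2_2_6, cvv_2_3_6]; norm_num
lemma ngz_2_20 : Ng (cs 2) 20 = 0 := by
  show cv2 0 1 + cv2 1 4 + cv2 2 5 + cv2 3 1 + cv2 3 4 + cv2 3 5 = 0
  simp only [cvv_2_0_1, cvv_2_1_4, cvv_2_2_5, cvv_2_3_1, cvv_2_3_4, cvv_2_3_5]; norm_num
lemma ngz_2_21 : Ng (cs 2) 21 = 0 := by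
  show cv2 2 4 + cv2 3 4 = 0
  simp only [cvv_2_2_4, cvv_2_3_4]; norm_num
lemma ngz_2_22 : Ng (cs 2) 22 = 0 := by
  show cv2 1 3 + cv2 2 3 = 0
  simp only [cvv_2_1_3, cvv_2_2_3]; norm_num
lemma ngz_2_23 : Ng (cs 2) 23 = 0 := by
  show cv2 0 0 + cv2 1 0 + cv2 1 2 + cv2 1 3 + cv2 2 2 + cv2 3 3 = 0
  simp only [cvv_2_0_0, cvv_2_1_0, cvv_2_1_2, cvv_2_1_3, cvv_2_2_2, cvv_2_3_3]; norm_num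
lemma ngz_2_24 : Ng (cs 2) 24 = 0 := by
  show cv2 1 2 + cv2 3 2 = 0
  simp only [cvv_2_1_2, cvv_2_3_2]; norm_num
lemma ngz_2_25 : Ng (cs 2) 25 = 0 := by
  show cv2 0 0 + cv2 1 1 + cv2 2 0 + cv2 2 1 + cv2 2 3 + cv2 3 3 = 0
  simp only [cvv_2_0_0, cvv_2_1_1, cvv_2_2_0, cvv_2_2_1, cvv_2_2_3, cvv_2_3_3]; norm_num
lemma ngz_2_26 : Ng (cs 2) 26 = 0 := by
  show cv2 0 0 + cv2 1 1 + cv2 2 2 + cv2 3 0 + cv2 3 1 + cv2 3 2 = 0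
  simp only [cvv_2_0_0, cvv_2_1_1, cvv_2_2_2, cvv_2_3_0, cvv_2_3_1, cvv_2_3_2]; norm_num
lemma ngz_2_27 : Ng (cs 2) 27 = 0 := by
  show cv2 2 1 + cv2 3 1 = 0
  simp only [cvv_2_2_1, cvv_2_3_1]; norm_num
lemma ngz_2_28 : Ng (cs 2) 28 = 0 := by
  show cv2 1 0 + cv2 2 0 = 0
  simp only [cvv_2_1_0, cvv_2_2_0]; norm_num
lemma ngz_2_29 : Ng (cs 2) 29 = 0 := by
  show cv2 1 0 + cv2 3 0 = 0
  simp only [cvv_2_1_0, cvv_2_3_0]; norm_num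
lemma ngz_2_30 : Ng (cs 2) 30 = 0 := by
  show cv2 2 0 + cv2 3 0 = 0
  simp only [cvv_2_2_0, cvv_2_3_0]; norm_num
lemma NgZ2 : ∀ t, Ng (cs 2) t = 0 := finForall31 ngz_2_0 ngz_2_1 ngz_2_2 ngz_2_3 ngz_2_4 ngz_2_5 ngz_2_6 ngz_2_7 ngz_2_8 ngz_2_9 ngz_2_10 ngz_2_11 ngz_2_12 ngz_2_13 ngz_2_14 ngz_2_15 ngz_2_16 ngz_2_17 ngz_2_18 ngz_2_19 ngz_2_20 ngz_2_21 ngz_2_22 ngz_2_23 ngz_2_24 ngz_2_25 ngz_2_26 ngz_2_27 ngz_2_28 ngz_2_29 ngz_2_30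

lemma ngz_3_0 : Ng (cs 3) 0 = 0 := by
  show cv3 0 9 + cv3 1 9 = 0
  simp only [cvv_3_0_9, cvv_3_1_9]; norm_num
lemma ngz_3_1 : Ng (cs 3) 1 = 0 := by
  show cv3 0 8 + cv3 1 8 = 0
  simp only [cvv_3_0_8, cvv_3_1_8]; norm_num
lemma ngz_3_2 : Ng (cs 3) 2 = 0 := by
  show cv3 0 7 + cv3 1 7 = 0
  simp only [cvv_3_0_7, cvv_3_1_7]; norm_num
lemma ngz_3_3 : Ng (cs 3) 3 = 0 := by
  show cv3 0 9 + cv3 2 9 = 0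
  simp only [cvv_3_0_9, cvv_3_2_9]; norm_num
lemma ngz_3_4 : Ng (cs 3) 4 = 0 := by
  show cv3 0 6 + cv3 0 8 + cv3 0 9 + cv3 1 6 + cv3 2 8 + cv3 3 9 = 0
  simp only [cvv_3_0_6, cvv_3_0_8, cvv_3_0_9, cvv_3_1_6, cvv_3_2_8, cvv_3_3_9]; norm_num
lemma ngz_3_5 : Ng (cs 3) 5 = 0 := by
  show cv3 0 5 + cv3 0 7 + cv3 0 8 + cv3 1 5 + cv3 2 7 + cv3 3 8 = 0
  simp only [cvv_3_0_5, cvv_3_0_7, cvv_3_0_8, cvv_3_1_5, cvv_3_2_7, cvv_3_3_8]; norm_num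
lemma ngz_3_6 : Ng (cs 3) 6 = 0 := by
  show cv3 0 7 + cv3 3 7 = 0
  simp only [cvv_3_0_7, cvv_3_3_7]; norm_num
lemma ngz_3_7 : Ng (cs 3) 7 = 0 := by
  show cv3 0 6 + cv3 2 6 = 0
  simp only [cvv_3_0_6, cvv_3_2_6]; norm_num
lemma ngz_3_8 : Ng (cs 3) 8 = 0 := by
  show cv3 0 4 + cv3 0 5 + cv3 0 6 + cv3 1 4 + cv3 2 5 + cv3 3 6 = 0
  simp only [cvv_3_0_4, cvv_3_0_5, cvv_3_0_6, cvv_3_1_4, cvv_3_2_5, cvv_3_3_6]; norm_num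
lemma ngz_3_9 : Ng (cs 3) 9 = 0 := by
  show cv3 0 5 + cv3 3 5 = 0
  simp only [cvv_3_0_5, cvv_3_3_5]; norm_num
lemma ngz_3_10 : Ng (cs 3) 10 = 0 := by
  show cv3 0 4 + cv3 2 4 = 0
  simp only [cvv_3_0_4, cvv_3_2_4]; norm_num
lemma ngz_3_11 : Ng (cs 3) 11 = 0 := by
  show cv3 0 4 + cv3 3 4 = 0
  simp only [cvv_3_0_4, cvv_3_3_4]; norm_num
lemma ngz_3_12 : Ng (cs 3) 12 = 0 := by
  show cv3 1 9 + cv3 2 9 = 0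
  simp only [cvv_3_1_9, cvv_3_2_9]; norm_num
lemma ngz_3_13 : Ng (cs 3) 13 = 0 := by
  show cv3 0 3 + cv3 1 3 + cv3 1 8 + cv3 1 9 + cv3 2 8 + cv3 3 9 = 0
  simp only [cvv_3_0_3, cvv_3_1_3, cvv_3_1_8, cvv_3_1_9, cvv_3_2_8, cvv_3_3_9]; norm_num
lemma ngz_3_14 : Ng (cs 3) 14 = 0 := by
  show cv3 0 2 + cv3 1 2 + cv3 1 7 + cv3 1 8 + cv3 2 7 + cv3 3 8 = 0
  simp only [cvv_3_0_2, cvv_3_1_2, cvv_3_1_7, cvv_3_1_8, cvv_3_2_7, cvv_3_3_8]; norm_num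
lemma ngz_3_15 : Ng (cs 3) 15 = 0 := by
  show cv3 1 7 + cv3 3 7 = 0
  simp only [cvv_3_1_7, cvv_3_3_7]; norm_num
lemma ngz_3_16 : Ng (cs 3) 16 = 0 := by
  show cv3 0 3 + cv3 1 6 + cv3 2 3 + cv3 2 6 + cv3 2 9 + cv3 3 9 = 0
  simp only [cvv_3_0_3, cvv_3_1_6, cvv_3_2_3, cvv_3_2_6, cvv_3_2_9, cvv_3_3_9]; norm_num
lemma ngz_3_17 : Ng (cs 3) 17 = 0 := by
  show cv3 0 1 + cv3 0 2 + cv3 0 3 + cv3 1 1 + cv3 1 5 + cv3 1 6 + cv3 2 2 + cv3 2 5 + cv3 2 8 + cv3 3 3 + cv3 3 6 + cv3 3 8 = 0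
  simp only [cvv_3_0_1, cvv_3_0_2, cvv_3_0_3, cvv_3_1_1, cvv_3_1_5, cvv_3_1_6, cvv_3_2_2, cvv_3_2_5, cvv_3_2_8, cvv_3_3_3, cvv_3_3_6, cvv_3_3_8]; norm_num
lemma ngz_3_18 : Ng (cs 3) 18 = 0 := by
  show cv3 0 2 + cv3 1 5 + cv3 2 7 + cv3 3 2 + cv3 3 5 + cv3 3 7 = 0
  simp only [cvv_3_0_2, cvv_3_1_5, cvv_3_2_7, cvv_3_3_2, cvv_3_3_5, cvv_3_3_7]; norm_num
lemma ngz_3_19 : Ng (cs 3) 19 = 0 := by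
  show cv3 0 1 + cv3 1 4 + cv3 2 1 + cv3 2 4 + cv3 2 6 + cv3 3 6 = 0
  simp only [cvv_3_0_1, cvv_3_1_4, cvv_3_2_1, cvv_3_2_4, cvv_3_2_6, cvv_3_3_6]; norm_num
lemma ngz_3_20 : Ng (cs 3) 20 = 0 := by
  show cv3 0 1 + cv3 1 4 + cv3 2 5 + cv3 3 1 + cv3 3 4 + cv3 3 5 = 0
  simp only [cvv_3_0_1, cvv_3_1_4, cvv_3_2_5, cvv_3_3_1, cvv_3_3_4, cvv_3_3_5]; norm_num
lemma ngz_3_21 : Ng (cs 3) 21 = 0 := by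
  show cv3 2 4 + cv3 3 4 = 0
  simp only [cvv_3_2_4, cvv_3_3_4]; norm_num
lemma ngz_3_22 : Ng (cs 3) 22 = 0 := by
  show cv3 1 3 + cv3 2 3 = 0
  simp only [cvv_3_1_3, cvv_3_2_3]; norm_num
lemma ngz_3_23 : Ng (cs 3) 23 = 0 := by
  show cv3 0 0 + cv3 1 0 + cv3 1 2 + cv3 1 3 + cv3 2 2 + cv3 3 3 = 0
  simp only [cvv_3_0_0, cvv_3_1_0, cvv_3_1_2, cvv_3_1_3, cvv_3_2_2, cvv_3_3_3]; norm_num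
lemma ngz_3_24 : Ng (cs 3) 24 = 0 := by
  show cv3 1 2 + cv3 3 2 = 0
  simp only [cvv_3_1_2, cvv_3_3_2]; norm_num
lemma ngz_3_25 : Ng (cs 3) 25 = 0 := by
  show cv3 0 0 + cv3 1 1 + cv3 2 0 + cv3 2 1 + cv3 2 3 + cv3 3 3 = 0
  simp only [cvv_3_0_0, cvv_3_1_1, cvv_3_2_0, cvv_3_2_1, cvv_3_2_3, cvv_3_3_3]; norm_num
lemma ngz_3_26 : Ng (cs 3) 26 = 0 := by
  show cv3 0 0 + cv3 1 1 + cv3 2 2 + cv3 3 0 + cv3 3 1 + cv3 3 2 = 0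
  simp only [cvv_3_0_0, cvv_3_1_1, cvv_3_2_2, cvv_3_3_0, cvv_3_3_1, cvv_3_3_2]; norm_num
lemma ngz_3_27 : Ng (cs 3) 27 = 0 := by
  show cv3 2 1 + cv3 3 1 = 0
  simp only [cvv_3_2_1, cvv_3_3_1]; norm_num
lemma ngz_3_28 : Ng (cs 3) 28 = 0 := by
  show cv3 1 0 + cv3 2 0 = 0
  simp only [cvv_3_1_0, cvv_3_2_0]; norm_num
lemma ngz_3_29 : Ng (cs 3) 29 = 0 := by
  show cv3 1 0 + cv3 3 0 = 0
  simp only [cvv_3_1_0, cvv_3_3_0]; norm_num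
lemma ngz_3_30 : Ng (cs 3) 30 = 0 := by
  show cv3 2 0 + cv3 3 0 = 0
  simp only [cvv_3_2_0, cvv_3_3_0]; norm_num
lemma NgZ3 : ∀ t, Ng (cs 3) t = 0 := finForall31 ngz_3_0 ngz_3_1 ngz_3_2 ngz_3_3 ngz_3_4 ngz_3_5 ngz_3_6 ngz_3_7 ngz_3_8 ngz_3_9 ngz_3_10 ngz_3_11 ngz_3_12 ngz_3_13 ngz_3_14 ngz_3_15 ngz_3_16 ngz_3_17 ngz_3_18 ngz_3_19 ngz_3_20 ngz_3_21 ngz_3_22 ngz_3_23 ngz_3_24 ngz_3_25 ngz_3_26 ngz_3_27 ngz_3_28 ngz_3_29 ngz_3_30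

lemma ngz_4_0 : Ng (cs 4) 0 = 0 := by
  show cv4 0 9 + cv4 1 9 = 0
  simp only [cvv_4_0_9, cvv_4_1_9]; norm_num
lemma ngz_4_1 : Ng (cs 4) 1 = 0 := by
  show cv4 0 8 + cv4 1 8 = 0
  simp only [cvv_4_0_8, cvv_4_1_8]; norm_num
lemma ngz_4_2 : Ng (cs 4) 2 = 0 := by
  show cv4 0 7 + cv4 1 7 = 0
  simp only [cvv_4_0_7, cvv_4_1_7]; norm_num
lemma ngz_4_3 : Ng (cs 4) 3 = 0 := by
  show cv4 0 9 + cv4 2 9 = 0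
  simp only [cvv_4_0_9, cvv_4_2_9]; norm_num
lemma ngz_4_4 : Ng (cs 4) 4 = 0 := by
  show cv4 0 6 + cv4 0 8 + cv4 0 9 + cv4 1 6 + cv4 2 8 + cv4 3 9 = 0
  simp only [cvv_4_0_6, cvv_4_0_8, cvv_4_0_9, cvv_4_1_6, cvv_4_2_8, cvv_4_3_9]; norm_num
lemma ngz_4_5 : Ng (cs 4) 5 = 0 := by
  show cv4 0 5 + cv4 0 7 + cv4 0 8 + cv4 1 5 + cv4 2 7 + cv4 3 8 = 0
  simp only [cvv_4_0_5, cvv_4_0_7, cvv_4_0_8, cvv_4_1_5, cvv_4_2_7, cvv_4_3_8]; norm_num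
lemma ngz_4_6 : Ng (cs 4) 6 = 0 := by
  show cv4 0 7 + cv4 3 7 = 0
  simp only [cvv_4_0_7, cvv_4_3_7]; norm_num
lemma ngz_4_7 : Ng (cs 4) 7 = 0 := by
  show cv4 0 6 + cv4 2 6 = 0
  simp only [cvv_4_0_6, cvv_4_2_6]; norm_num
lemma ngz_4_8 : Ng (cs 4) 8 = 0 := by
  show cv4 0 4 + cv4 0 5 + cv4 0 6 + cv4 1 4 + cv4 2 5 + cv4 3 6 = 0
  simp only [cvv_4_0_4, cvv_4_0_5, cvv_4_0_6, cvv_4_1_4, cvv_4_2_5, cvv_4_3_6]; norm_num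
lemma ngz_4_9 : Ng (cs 4) 9 = 0 := by
  show cv4 0 5 + cv4 3 5 = 0
  simp only [cvv_4_0_5, cvv_4_3_5]; norm_num
lemma ngz_4_10 : Ng (cs 4) 10 = 0 := by
  show cv4 0 4 + cv4 2 4 = 0
  simp only [cvv_4_0_4, cvv_4_2_4]; norm_num
lemma ngz_4_11 : Ng (cs 4) 11 = 0 := by
  show cv4 0 4 + cv4 3 4 = 0
  simp only [cvv_4_0_4, cvv_4_3_4]; norm_num
lemma ngz_4_12 : Ng (cs 4) 12 = 0 := by
  show cv4 1 9 + cv4 2 9 = 0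
  simp only [cvv_4_1_9, cvv_4_2_9]; norm_num
lemma ngz_4_13 : Ng (cs 4) 13 = 0 := by
  show cv4 0 3 + cv4 1 3 + cv4 1 8 + cv4 1 9 + cv4 2 8 + cv4 3 9 = 0
  simp only [cvv_4_0_3, cvv_4_1_3, cvv_4_1_8, cvv_4_1_9, cvv_4_2_8, cvv_4_3_9]; norm_num
lemma ngz_4_14 : Ng (cs 4) 14 = 0 := by
  show cv4 0 2 + cv4 1 2 + cv4 1 7 + cv4 1 8 + cv4 2 7 + cv4 3 8 = 0
  simp only [cvv_4_0_2, cvv_4_1_2, cvv_4_1_7, cvv_4_1_8, cvv_4_2_7, cvv_4_3_8]; norm_num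
lemma ngz_4_15 : Ng (cs 4) 15 = 0 := by
  show cv4 1 7 + cv4 3 7 = 0
  simp only [cvv_4_1_7, cvv_4_3_7]; norm_num
lemma ngz_4_16 : Ng (cs 4) 16 = 0 := by
  show cv4 0 3 + cv4 1 6 + cv4 2 3 + cv4 2 6 + cv4 2 9 + cv4 3 9 = 0
  simp only [cvv_4_0_3, cvv_4_1_6, cvv_4_2_3, cvv_4_2_6, cvv_4_2_9, cvv_4_3_9]; norm_num
lemma ngz_4_17 : Ng (cs 4) 17 = 0 := by
  show cv4 0 1 + cv4 0 2 + cv4 0 3 + cv4 1 1 + cv4 1 5 + cv4 1 6 + cv4 2 2 + cv4 2 5 + cv4 2 8 + cv4 3 3 + cv4 3 6 + cv4 3 8 = 0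
  simp only [cvv_4_0_1, cvv_4_0_2, cvv_4_0_3, cvv_4_1_1, cvv_4_1_5, cvv_4_1_6, cvv_4_2_2, cvv_4_2_5, cvv_4_2_8, cvv_4_3_3, cvv_4_3_6, cvv_4_3_8]; norm_num
lemma ngz_4_18 : Ng (cs 4) 18 = 0 := by
  show cv4 0 2 + cv4 1 5 + cv4 2 7 + cv4 3 2 + cv4 3 5 + cv4 3 7 = 0
  simp only [cvv_4_0_2, cvv_4_1_5, cvv_4_2_7, cvv_4_3_2, cvv_4_3_5, cvv_4_3_7]; norm_num
lemma ngz_4_19 : Ng (cs 4) 19 = 0 := by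
  show cv4 0 1 + cv4 1 4 + cv4 2 1 + cv4 2 4 + cv4 2 6 + cv4 3 6 = 0
  simp only [cvv_4_0_1, cvv_4_1_4, cvv_4_2_1, cvv_4_2_4, cvv_4_2_6, cvv_4_3_6]; norm_num
lemma ngz_4_20 : Ng (cs 4) 20 = 0 := by
  show cv4 0 1 + cv4 1 4 + cv4 2 5 + cv4 3 1 + cv4 3 4 + cv4 3 5 = 0
  simp only [cvv_4_0_1, cvv_4_1_4, cvv_4_2_5, cvv_4_3_1, cvv_4_3_4, cvv_4_3_5]; norm_num
lemma ngz_4_21 : Ng (cs 4) 21 = 0 := by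
  show cv4 2 4 + cv4 3 4 = 0
  simp only [cvv_4_2_4, cvv_4_3_4]; norm_num
lemma ngz_4_22 : Ng (cs 4) 22 = 0 := by
  show cv4 1 3 + cv4 2 3 = 0
  simp only [cvv_4_1_3, cvv_4_2_3]; norm_num
lemma ngz_4_23 : Ng (cs 4) 23 = 0 := by
  show cv4 0 0 + cv4 1 0 + cv4 1 2 + cv4 1 3 + cv4 2 2 + cv4 3 3 = 0
  simp only [cvv_4_0_0, cvv_4_1_0, cvv_4_1_2, cvv_4_1_3, cvv_4_2_2, cvv_4_3_3]; norm_num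
lemma ngz_4_24 : Ng (cs 4) 24 = 0 := by
  show cv4 1 2 + cv4 3 2 = 0
  simp only [cvv_4_1_2, cvv_4_3_2]; norm_num
lemma ngz_4_25 : Ng (cs 4) 25 = 0 := by
  show cv4 0 0 + cv4 1 1 + cv4 2 0 + cv4 2 1 + cv4 2 3 + cv4 3 3 = 0
  simp only [cvv_4_0_0, cvv_4_1_1, cvv_4_2_0, cvv_4_2_1, cvv_4_2_3, cvv_4_3_3]; norm_num
lemma ngz_4_26 : Ng (cs 4) 26 = 0 := by
  show cv4 0 0 + cv4 1 1 + cv4 2 2 + cv4 3 0 + cv4 3 1 + cv4 3 2 = 0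
  simp only [cvv_4_0_0, cvv_4_1_1, cvv_4_2_2, cvv_4_3_0, cvv_4_3_1, cvv_4_3_2]; norm_num
lemma ngz_4_27 : Ng (cs 4) 27 = 0 := by
  show cv4 2 1 + cv4 3 1 = 0
  simp only [cvv_4_2_1, cvv_4_3_1]; norm_num
lemma ngz_4_28 : Ng (cs 4) 28 = 0 := by
  show cv4 1 0 + cv4 2 0 = 0
  simp only [cvv_4_1_0, cvv_4_2_0]; norm_num
lemma ngz_4_29 : Ng (cs 4) 29 = 0 := by
  show cv4 1 0 + cv4 3 0 = 0
  simp only [cvv_4_1_0, cvv_4_3_0]; norm_num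
lemma ngz_4_30 : Ng (cs 4) 30 = 0 := by
  show cv4 2 0 + cv4 3 0 = 0
  simp only [cvv_4_2_0, cvv_4_3_0]; norm_num
lemma NgZ4 : ∀ t, Ng (cs 4) t = 0 := finForall31 ngz_4_0 ngz_4_1 ngz_4_2 ngz_4_3 ngz_4_4 ngz_4_5 ngz_4_6 ngz_4_7 ngz_4_8 ngz_4_9 ngz_4_10 ngz_4_11 ngz_4_12 ngz_4_13 ngz_4_14 ngz_4_15 ngz_4_16 ngz_4_17 ngz_4_18 ngz_4_19 ngz_4_20 ngz_4_21 ngz_4_22 ngz_4_23 ngz_4_24 ngz_4_25 ngz_4_26 ngz_4_27 ngz_4_28 ngz_4_29 ngz_4_30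

lemma ngz_5_0 : Ng (cs 5) 0 = 0 := by
  show cv5 0 9 + cv5 1 9 = 0
  simp only [cvv_5_0_9, cvv_5_1_9]; norm_num
lemma ngz_5_1 : Ng (cs 5) 1 = 0 := by
  show cv5 0 8 + cv5 1 8 = 0
  simp only [cvv_5_0_8, cvv_5_1_8]; norm_num
lemma ngz_5_2 : Ng (cs 5) 2 = 0 := by
  show cv5 0 7 + cv5 1 7 = 0
  simp only [cvv_5_0_7, cvv_5_1_7]; norm_num
lemma ngz_5_3 : Ng (cs 5) 3 = 0 := by
  show cv5 0 9 + cv5 2 9 = 0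
  simp only [cvv_5_0_9, cvv_5_2_9]; norm_num
lemma ngz_5_4 : Ng (cs 5) 4 = 0 := by
  show cv5 0 6 + cv5 0 8 + cv5 0 9 + cv5 1 6 + cv5 2 8 + cv5 3 9 = 0
  simp only [cvv_5_0_6, cvv_5_0_8, cvv_5_0_9, cvv_5_1_6, cvv_5_2_8, cvv_5_3_9]; norm_num
lemma ngz_5_5 : Ng (cs 5) 5 = 0 := by
  show cv5 0 5 + cv5 0 7 + cv5 0 8 + cv5 1 5 + cv5 2 7 + cv5 3 8 = 0
  simp only [cvv_5_0_5, cvv_5_0_7, cvv_5_0_8, cvv_5_1_5, cvv_5_2_7, cvv_5_3_8]; norm_num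
lemma ngz_5_6 : Ng (cs 5) 6 = 0 := by
  show cv5 0 7 + cv5 3 7 = 0
  simp only [cvv_5_0_7, cvv_5_3_7]; norm_num
lemma ngz_5_7 : Ng (cs 5) 7 = 0 := by
  show cv5 0 6 + cv5 2 6 = 0
  simp only [cvv_5_0_6, cvv_5_2_6]; norm_num
lemma ngz_5_8 : Ng (cs 5) 8 = 0 := by
  show cv5 0 4 + cv5 0 5 + cv5 0 6 + cv5 1 4 + cv5 2 5 + cv5 3 6 = 0
  simp only [cvv_5_0_4, cvv_5_0_5, cvv_5_0_6, cvv_5_1_4, cvv_5_2_5, cvv_5_3_6]; norm_num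
lemma ngz_5_9 : Ng (cs 5) 9 = 0 := by
  show cv5 0 5 + cv5 3 5 = 0
  simp only [cvv_5_0_5, cvv_5_3_5]; norm_num
lemma ngz_5_10 : Ng (cs 5) 10 = 0 := by
  show cv5 0 4 + cv5 2 4 = 0
  simp only [cvv_5_0_4, cvv_5_2_4]; norm_num
lemma ngz_5_11 : Ng (cs 5) 11 = 0 := by
  show cv5 0 4 + cv5 3 4 = 0
  simp only [cvv_5_0_4, cvv_5_3_4]; norm_num
lemma ngz_5_12 : Ng (cs 5) 12 = 0 := by
  show cv5 1 9 + cv5 2 9 = 0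
  simp only [cvv_5_1_9, cvv_5_2_9]; norm_num
lemma ngz_5_13 : Ng (cs 5) 13 = 0 := by
  show cv5 0 3 + cv5 1 3 + cv5 1 8 + cv5 1 9 + cv5 2 8 + cv5 3 9 = 0
  simp only [cvv_5_0_3, cvv_5_1_3, cvv_5_1_8, cvv_5_1_9, cvv_5_2_8, cvv_5_3_9]; norm_num
lemma ngz_5_14 : Ng (cs 5) 14 = 0 := by
  show cv5 0 2 + cv5 1 2 + cv5 1 7 + cv5 1 8 + cv5 2 7 + cv5 3 8 = 0
  simp only [cvv_5_0_2, cvv_5_1_2, cvv_5_1_7, cvv_5_1_8, cvv_5_2_7, cvv_5_3_8]; norm_num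
lemma ngz_5_15 : Ng (cs 5) 15 = 0 := by
  show cv5 1 7 + cv5 3 7 = 0
  simp only [cvv_5_1_7, cvv_5_3_7]; norm_num
lemma ngz_5_16 : Ng (cs 5) 16 = 0 := by
  show cv5 0 3 + cv5 1 6 + cv5 2 3 + cv5 2 6 + cv5 2 9 + cv5 3 9 = 0
  simp only [cvv_5_0_3, cvv_5_1_6, cvv_5_2_3, cvv_5_2_6, cvv_5_2_9, cvv_5_3_9]; norm_num
lemma ngz_5_17 : Ng (cs 5) 17 = 0 := by
  show cv5 0 1 + cv5 0 2 + cv5 0 3 + cv5 1 1 + cv5 1 5 + cv5 1 6 + cv5 2 2 + cv5 2 5 + cv5 2 8 + cv5 3 3 + cv5 3 6 + cv5 3 8 = 0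
  simp only [cvv_5_0_1, cvv_5_0_2, cvv_5_0_3, cvv_5_1_1, cvv_5_1_5, cvv_5_1_6, cvv_5_2_2, cvv_5_2_5, cvv_5_2_8, cvv_5_3_3, cvv_5_3_6, cvv_5_3_8]; norm_num
lemma ngz_5_18 : Ng (cs 5) 18 = 0 := by
  show cv5 0 2 + cv5 1 5 + cv5 2 7 + cv5 3 2 + cv5 3 5 + cv5 3 7 = 0
  simp only [cvv_5_0_2, cvv_5_1_5, cvv_5_2_7, cvv_5_3_2, cvv_5_3_5, cvv_5_3_7]; norm_num
lemma ngz_5_19 : Ng (cs 5) 19 = 0 := by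
  show cv5 0 1 + cv5 1 4 + cv5 2 1 + cv5 2 4 + cv5 2 6 + cv5 3 6 = 0
  simp only [cvv_5_0_1, cvv_5_1_4, cvv_5_2_1, cvv_5_2_4, cvv_5_2_6, cvv_5_3_6]; norm_num
lemma ngz_5_20 : Ng (cs 5) 20 = 0 := by
  show cv5 0 1 + cv5 1 4 + cv5 2 5 + cv5 3 1 + cv5 3 4 + cv5 3 5 = 0
  simp only [cvv_5_0_1, cvv_5_1_4, cvv_5_2_5, cvv_5_3_1, cvv_5_3_4, cvv_5_3_5]; norm_num
lemma ngz_5_21 : Ng (cs 5) 21 = 0 := by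
  show cv5 2 4 + cv5 3 4 = 0
  simp only [cvv_5_2_4, cvv_5_3_4]; norm_num
lemma ngz_5_22 : Ng (cs 5) 22 = 0 := by
  show cv5 1 3 + cv5 2 3 = 0
  simp only [cvv_5_1_3, cvv_5_2_3]; norm_num
lemma ngz_5_23 : Ng (cs 5) 23 = 0 := by
  show cv5 0 0 + cv5 1 0 + cv5 1 2 + cv5 1 3 + cv5 2 2 + cv5 3 3 = 0
  simp only [cvv_5_0_0, cvv_5_1_0, cvv_5_1_2, cvv_5_1_3, cvv_5_2_2, cvv_5_3_3]; norm_num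
lemma ngz_5_24 : Ng (cs 5) 24 = 0 := by
  show cv5 1 2 + cv5 3 2 = 0
  simp only [cvv_5_1_2, cvv_5_3_2]; norm_num
lemma ngz_5_25 : Ng (cs 5) 25 = 0 := by
  show cv5 0 0 + cv5 1 1 + cv5 2 0 + cv5 2 1 + cv5 2 3 + cv5 3 3 = 0
  simp only [cvv_5_0_0, cvv_5_1_1, cvv_5_2_0, cvv_5_2_1, cvv_5_2_3, cvv_5_3_3]; norm_num
lemma ngz_5_26 : Ng (cs 5) 26 = 0 := by
  show cv5 0 0 + cv5 1 1 + cv5 2 2 + cv5 3 0 + cv5 3 1 + cv5 3 2 = 0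
  simp only [cvv_5_0_0, cvv_5_1_1, cvv_5_2_2, cvv_5_3_0, cvv_5_3_1, cvv_5_3_2]; norm_num
lemma ngz_5_27 : Ng (cs 5) 27 = 0 := by
  show cv5 2 1 + cv5 3 1 = 0
  simp only [cvv_5_2_1, cvv_5_3_1]; norm_num
lemma ngz_5_28 : Ng (cs 5) 28 = 0 := by
  show cv5 1 0 + cv5 2 0 = 0
  simp only [cvv_5_1_0, cvv_5_2_0]; norm_num
lemma ngz_5_29 : Ng (cs 5) 29 = 0 := by
  show cv5 1 0 + cv5 3 0 = 0
  simp only [cvv_5_1_0, cvv_5_3_0]; norm_num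
lemma ngz_5_30 : Ng (cs 5) 30 = 0 := by
  show cv5 2 0 + cv5 3 0 = 0
  simp only [cvv_5_2_0, cvv_5_3_0]; norm_num
lemma NgZ5 : ∀ t, Ng (cs 5) t = 0 := finForall31 ngz_5_0 ngz_5_1 ngz_5_2 ngz_5_3 ngz_5_4 ngz_5_5 ngz_5_6 ngz_5_7 ngz_5_8 ngz_5_9 ngz_5_10 ngz_5_11 ngz_5_12 ngz_5_13 ngz_5_14 ngz_5_15 ngz_5_16 ngz_5_17 ngz_5_18 ngz_5_19 ngz_5_20 ngz_5_21 ngz_5_22 ngz_5_23 ngz_5_24 ngz_5_25 ngz_5_26 ngz_5_27 ngz_5_28 ngz_5_29 ngz_5_30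

lemma ngz_6_0 : Ng (cs 6) 0 = 0 := by
  show cv6 0 9 + cv6 1 9 = 0
  simp only [cvv_6_0_9, cvv_6_1_9]; norm_num
lemma ngz_6_1 : Ng (cs 6) 1 = 0 := by
  show cv6 0 8 + cv6 1 8 = 0
  simp only [cvv_6_0_8, cvv_6_1_8]; norm_num
lemma ngz_6_2 : Ng (cs 6) 2 = 0 := by
  show cv6 0 7 + cv6 1 7 = 0
  simp only [cvv_6_0_7, cvv_6_1_7]; norm_num
lemma ngz_6_3 : Ng (cs 6) 3 = 0 := by
  show cv6 0 9 + cv6 2 9 = 0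
  simp only [cvv_6_0_9, cvv_6_2_9]; norm_num
lemma ngz_6_4 : Ng (cs 6) 4 = 0 := by
  show cv6 0 6 + cv6 0 8 + cv6 0 9 + cv6 1 6 + cv6 2 8 + cv6 3 9 = 0
  simp only [cvv_6_0_6, cvv_6_0_8, cvv_6_0_9, cvv_6_1_6, cvv_6_2_8, cvv_6_3_9]; norm_num
lemma ngz_6_5 : Ng (cs 6) 5 = 0 := by
  show cv6 0 5 + cv6 0 7 + cv6 0 8 + cv6 1 5 + cv6 2 7 + cv6 3 8 = 0
  simp only [cvv_6_0_5, cvv_6_0_7, cvv_6_0_8, cvv_6_1_5, cvv_6_2_7, cvv_6_3_8]; norm_num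
lemma ngz_6_6 : Ng (cs 6) 6 = 0 := by
  show cv6 0 7 + cv6 3 7 = 0
  simp only [cvv_6_0_7, cvv_6_3_7]; norm_num
lemma ngz_6_7 : Ng (cs 6) 7 = 0 := by
  show cv6 0 6 + cv6 2 6 = 0
  simp only [cvv_6_0_6, cvv_6_2_6]; norm_num
lemma ngz_6_8 : Ng (cs 6) 8 = 0 := by
  show cv6 0 4 + cv6 0 5 + cv6 0 6 + cv6 1 4 + cv6 2 5 + cv6 3 6 = 0
  simp only [cvv_6_0_4, cvv_6_0_5, cvv_6_0_6, cvv_6_1_4, cvv_6_2_5, cvv_6_3_6]; norm_num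
lemma ngz_6_9 : Ng (cs 6) 9 = 0 := by
  show cv6 0 5 + cv6 3 5 = 0
  simp only [cvv_6_0_5, cvv_6_3_5]; norm_num
lemma ngz_6_10 : Ng (cs 6) 10 = 0 := by
  show cv6 0 4 + cv6 2 4 = 0
  simp only [cvv_6_0_4, cvv_6_2_4]; norm_num
lemma ngz_6_11 : Ng (cs 6) 11 = 0 := by
  show cv6 0 4 + cv6 3 4 = 0
  simp only [cvv_6_0_4, cvv_6_3_4]; norm_num
lemma ngz_6_12 : Ng (cs 6) 12 = 0 := by
  show cv6 1 9 + cv6 2 9 = 0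
  simp only [cvv_6_1_9, cvv_6_2_9]; norm_num
lemma ngz_6_13 : Ng (cs 6) 13 = 0 := by
  show cv6 0 3 + cv6 1 3 + cv6 1 8 + cv6 1 9 + cv6 2 8 + cv6 3 9 = 0
  simp only [cvv_6_0_3, cvv_6_1_3, cvv_6_1_8, cvv_6_1_9, cvv_6_2_8, cvv_6_3_9]; norm_num
lemma ngz_6_14 : Ng (cs 6) 14 = 0 := by
  show cv6 0 2 + cv6 1 2 + cv6 1 7 + cv6 1 8 + cv6 2 7 + cv6 3 8 = 0
  simp only [cvv_6_0_2, cvv_6_1_2, cvv_6_1_7, cvv_6_1_8, cvv_6_2_7, cvv_6_3_8]; norm_num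
lemma ngz_6_15 : Ng (cs 6) 15 = 0 := by
  show cv6 1 7 + cv6 3 7 = 0
  simp only [cvv_6_1_7, cvv_6_3_7]; norm_num
lemma ngz_6_16 : Ng (cs 6) 16 = 0 := by
  show cv6 0 3 + cv6 1 6 + cv6 2 3 + cv6 2 6 + cv6 2 9 + cv6 3 9 = 0
  simp only [cvv_6_0_3, cvv_6_1_6, cvv_6_2_3, cvv_6_2_6, cvv_6_2_9, cvv_6_3_9]; norm_num
lemma ngz_6_17 : Ng (cs 6) 17 = 0 := by
  show cv6 0 1 + cv6 0 2 + cv6 0 3 + cv6 1 1 + cv6 1 5 + cv6 1 6 + cv6 2 2 + cv6 2 5 + cv6 2 8 + cv6 3 3 + cv6 3 6 + cv6 3 8 = 0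
  simp only [cvv_6_0_1, cvv_6_0_2, cvv_6_0_3, cvv_6_1_1, cvv_6_1_5, cvv_6_1_6, cvv_6_2_2, cvv_6_2_5, cvv_6_2_8, cvv_6_3_3, cvv_6_3_6, cvv_6_3_8]; norm_num
lemma ngz_6_18 : Ng (cs 6) 18 = 0 := by
  show cv6 0 2 + cv6 1 5 + cv6 2 7 + cv6 3 2 + cv6 3 5 + cv6 3 7 = 0
  simp only [cvv_6_0_2, cvv_6_1_5, cvv_6_2_7, cvv_6_3_2, cvv_6_3_5, cvv_6_3_7]; norm_num
lemma ngz_6_19 : Ng (cs 6) 19 = 0 := by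
  show cv6 0 1 + cv6 1 4 + cv6 2 1 + cv6 2 4 + cv6 2 6 + cv6 3 6 = 0
  simp only [cvv_6_0_1, cvv_6_1_4, cvv_6_2_1, cvv_6_2_4, cvv_6_2_6, cvv_6_3_6]; norm_num
lemma ngz_6_20 : Ng (cs 6) 20 = 0 := by
  show cv6 0 1 + cv6 1 4 + cv6 2 5 + cv6 3 1 + cv6 3 4 + cv6 3 5 = 0
  simp only [cvv_6_0_1, cvv_6_1_4, cvv_6_2_5, cvv_6_3_1, cvv_6_3_4, cvv_6_3_5]; norm_num
lemma ngz_6_21 : Ng (cs 6) 21 = 0 := by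
  show cv6 2 4 + cv6 3 4 = 0
  simp only [cvv_6_2_4, cvv_6_3_4]; norm_num
lemma ngz_6_22 : Ng (cs 6) 22 = 0 := by
  show cv6 1 3 + cv6 2 3 = 0
  simp only [cvv_6_1_3, cvv_6_2_3]; norm_num
lemma ngz_6_23 : Ng (cs 6) 23 = 0 := by
  show cv6 0 0 + cv6 1 0 + cv6 1 2 + cv6 1 3 + cv6 2 2 + cv6 3 3 = 0
  simp only [cvv_6_0_0, cvv_6_1_0, cvv_6_1_2, cvv_6_1_3, cvv_6_2_2, cvv_6_3_3]; norm_num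
lemma ngz_6_24 : Ng (cs 6) 24 = 0 := by
  show cv6 1 2 + cv6 3 2 = 0
  simp only [cvv_6_1_2, cvv_6_3_2]; norm_num
lemma ngz_6_25 : Ng (cs 6) 25 = 0 := by
  show cv6 0 0 + cv6 1 1 + cv6 2 0 + cv6 2 1 + cv6 2 3 + cv6 3 3 = 0
  simp only [cvv_6_0_0, cvv_6_1_1, cvv_6_2_0, cvv_6_2_1, cvv_6_2_3, cvv_6_3_3]; norm_num
lemma ngz_6_26 : Ng (cs 6) 26 = 0 := by
  show cv6 0 0 + cv6 1 1 + cv6 2 2 + cv6 3 0 + cv6 3 1 + cv6 3 2 = 0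
  simp only [cvv_6_0_0, cvv_6_1_1, cvv_6_2_2, cvv_6_3_0, cvv_6_3_1, cvv_6_3_2]; norm_num
lemma ngz_6_27 : Ng (cs 6) 27 = 0 := by
  show cv6 2 1 + cv6 3 1 = 0
  simp only [cvv_6_2_1, cvv_6_3_1]; norm_num
lemma ngz_6_28 : Ng (cs 6) 28 = 0 := by
  show cv6 1 0 + cv6 2 0 = 0
  simp only [cvv_6_1_0, cvv_6_2_0]; norm_num
lemma ngz_6_29 : Ng (cs 6) 29 = 0 := by
  show cv6 1 0 + cv6 3 0 = 0
  simp only [cvv_6_1_0, cvv_6_3_0]; norm_num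
lemma ngz_6_30 : Ng (cs 6) 30 = 0 := by
  show cv6 2 0 + cv6 3 0 = 0
  simp only [cvv_6_2_0, cvv_6_3_0]; norm_num
lemma NgZ6 : ∀ t, Ng (cs 6) t = 0 := finForall31 ngz_6_0 ngz_6_1 ngz_6_2 ngz_6_3 ngz_6_4 ngz_6_5 ngz_6_6 ngz_6_7 ngz_6_8 ngz_6_9 ngz_6_10 ngz_6_11 ngz_6_12 ngz_6_13 ngz_6_14 ngz_6_15 ngz_6_16 ngz_6_17 ngz_6_18 ngz_6_19 ngz_6_20 ngz_6_21 ngz_6_22 ngz_6_23 ngz_6_24 ngz_6_25 ngz_6_26 ngz_6_27 ngz_6_28 ngz_6_29 ngz_6_30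

lemma ngz_7_0 : Ng (cs 7) 0 = 0 := by
  show cv7 0 9 + cv7 1 9 = 0
  simp only [cvv_7_0_9, cvv_7_1_9]; norm_num
lemma ngz_7_1 : Ng (cs 7) 1 = 0 := by
  show cv7 0 8 + cv7 1 8 = 0
  simp only [cvv_7_0_8, cvv_7_1_8]; norm_num
lemma ngz_7_2 : Ng (cs 7) 2 = 0 := by
  show cv7 0 7 + cv7 1 7 = 0
  simp only [cvv_7_0_7, cvv_7_1_7]; norm_num
lemma ngz_7_3 : Ng (cs 7) 3 = 0 := by
  show cv7 0 9 + cv7 2 9 = 0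
  simp only [cvv_7_0_9, cvv_7_2_9]; norm_num
lemma ngz_7_4 : Ng (cs 7) 4 = 0 := by
  show cv7 0 6 + cv7 0 8 + cv7 0 9 + cv7 1 6 + cv7 2 8 + cv7 3 9 = 0
  simp only [cvv_7_0_6, cvv_7_0_8, cvv_7_0_9, cvv_7_1_6, cvv_7_2_8, cvv_7_3_9]; norm_num
lemma ngz_7_5 : Ng (cs 7) 5 = 0 := by
  show cv7 0 5 + cv7 0 7 + cv7 0 8 + cv7 1 5 + cv7 2 7 + cv7 3 8 = 0
  simp only [cvv_7_0_5, cvv_7_0_7, cvv_7_0_8, cvv_7_1_5, cvv_7_2_7, cvv_7_3_8]; norm_num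
lemma ngz_7_6 : Ng (cs 7) 6 = 0 := by
  show cv7 0 7 + cv7 3 7 = 0
  simp only [cvv_7_0_7, cvv_7_3_7]; norm_num
lemma ngz_7_7 : Ng (cs 7) 7 = 0 := by
  show cv7 0 6 + cv7 2 6 = 0
  simp only [cvv_7_0_6, cvv_7_2_6]; norm_num
lemma ngz_7_8 : Ng (cs 7) 8 = 0 := by
  show cv7 0 4 + cv7 0 5 + cv7 0 6 + cv7 1 4 + cv7 2 5 + cv7 3 6 = 0
  simp only [cvv_7_0_4, cvv_7_0_5, cvv_7_0_6, cvv_7_1_4, cvv_7_2_5, cvv_7_3_6]; norm_num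
lemma ngz_7_9 : Ng (cs 7) 9 = 0 := by
  show cv7 0 5 + cv7 3 5 = 0
  simp only [cvv_7_0_5, cvv_7_3_5]; norm_num
lemma ngz_7_10 : Ng (cs 7) 10 = 0 := by
  show cv7 0 4 + cv7 2 4 = 0
  simp only [cvv_7_0_4, cvv_7_2_4]; norm_num
lemma ngz_7_11 : Ng (cs 7) 11 = 0 := by
  show cv7 0 4 + cv7 3 4 = 0
  simp only [cvv_7_0_4, cvv_7_3_4]; norm_num
lemma ngz_7_12 : Ng (cs 7) 12 = 0 := by
  show cv7 1 9 + cv7 2 9 = 0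
  simp only [cvv_7_1_9, cvv_7_2_9]; norm_num
lemma ngz_7_13 : Ng (cs 7) 13 = 0 := by
  show cv7 0 3 + cv7 1 3 + cv7 1 8 + cv7 1 9 + cv7 2 8 + cv7 3 9 = 0
  simp only [cvv_7_0_3, cvv_7_1_3, cvv_7_1_8, cvv_7_1_9, cvv_7_2_8, cvv_7_3_9]; norm_num
lemma ngz_7_14 : Ng (cs 7) 14 = 0 := by
  show cv7 0 2 + cv7 1 2 + cv7 1 7 + cv7 1 8 + cv7 2 7 + cv7 3 8 = 0
  simp only [cvv_7_0_2, cvv_7_1_2, cvv_7_1_7, cvv_7_1_8, cvv_7_2_7, cvv_7_3_8]; norm_num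
lemma ngz_7_15 : Ng (cs 7) 15 = 0 := by
  show cv7 1 7 + cv7 3 7 = 0
  simp only [cvv_7_1_7, cvv_7_3_7]; norm_num
lemma ngz_7_16 : Ng (cs 7) 16 = 0 := by
  show cv7 0 3 + cv7 1 6 + cv7 2 3 + cv7 2 6 + cv7 2 9 + cv7 3 9 = 0
  simp only [cvv_7_0_3, cvv_7_1_6, cvv_7_2_3, cvv_7_2_6, cvv_7_2_9, cvv_7_3_9]; norm_num
lemma ngz_7_17 : Ng (cs 7) 17 = 0 := by
  show cv7 0 1 + cv7 0 2 + cv7 0 3 + cv7 1 1 + cv7 1 5 + cv7 1 6 + cv7 2 2 + cv7 2 5 + cv7 2 8 + cv7 3 3 + cv7 3 6 + cv7 3 8 = 0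
  simp only [cvv_7_0_1, cvv_7_0_2, cvv_7_0_3, cvv_7_1_1, cvv_7_1_5, cvv_7_1_6, cvv_7_2_2, cvv_7_2_5, cvv_7_2_8, cvv_7_3_3, cvv_7_3_6, cvv_7_3_8]; norm_num
lemma ngz_7_18 : Ng (cs 7) 18 = 0 := by
  show cv7 0 2 + cv7 1 5 + cv7 2 7 + cv7 3 2 + cv7 3 5 + cv7 3 7 = 0
  simp only [cvv_7_0_2, cvv_7_1_5, cvv_7_2_7, cvv_7_3_2, cvv_7_3_5, cvv_7_3_7]; norm_num
lemma ngz_7_19 : Ng (cs 7) 19 = 0 := by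
  show cv7 0 1 + cv7 1 4 + cv7 2 1 + cv7 2 4 + cv7 2 6 + cv7 3 6 = 0
  simp only [cvv_7_0_1, cvv_7_1_4, cvv_7_2_1, cvv_7_2_4, cvv_7_2_6, cvv_7_3_6]; norm_num
lemma ngz_7_20 : Ng (cs 7) 20 = 0 := by
  show cv7 0 1 + cv7 1 4 + cv7 2 5 + cv7 3 1 + cv7 3 4 + cv7 3 5 = 0
  simp only [cvv_7_0_1, cvv_7_1_4, cvv_7_2_5, cvv_7_3_1, cvv_7_3_4, cvv_7_3_5]; norm_num
lemma ngz_7_21 : Ng (cs 7) 21 = 0 := by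
  show cv7 2 4 + cv7 3 4 = 0
  simp only [cvv_7_2_4, cvv_7_3_4]; norm_num
lemma ngz_7_22 : Ng (cs 7) 22 = 0 := by
  show cv7 1 3 + cv7 2 3 = 0
  simp only [cvv_7_1_3, cvv_7_2_3]; norm_num
lemma ngz_7_23 : Ng (cs 7) 23 = 0 := by
  show cv7 0 0 + cv7 1 0 + cv7 1 2 + cv7 1 3 + cv7 2 2 + cv7 3 3 = 0
  simp only [cvv_7_0_0, cvv_7_1_0, cvv_7_1_2, cvv_7_1_3, cvv_7_2_2, cvv_7_3_3]; norm_num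
lemma ngz_7_24 : Ng (cs 7) 24 = 0 := by
  show cv7 1 2 + cv7 3 2 = 0
  simp only [cvv_7_1_2, cvv_7_3_2]; norm_num
lemma ngz_7_25 : Ng (cs 7) 25 = 0 := by
  show cv7 0 0 + cv7 1 1 + cv7 2 0 + cv7 2 1 + cv7 2 3 + cv7 3 3 = 0
  simp only [cvv_7_0_0, cvv_7_1_1, cvv_7_2_0, cvv_7_2_1, cvv_7_2_3, cvv_7_3_3]; norm_num
lemma ngz_7_26 : Ng (cs 7) 26 = 0 := by
  show cv7 0 0 + cv7 1 1 + cv7 2 2 + cv7 3 0 + cv7 3 1 + cv7 3 2 = 0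
  simp only [cvv_7_0_0, cvv_7_1_1, cvv_7_2_2, cvv_7_3_0, cvv_7_3_1, cvv_7_3_2]; norm_num
lemma ngz_7_27 : Ng (cs 7) 27 = 0 := by
  show cv7 2 1 + cv7 3 1 = 0
  simp only [cvv_7_2_1, cvv_7_3_1]; norm_num
lemma ngz_7_28 : Ng (cs 7) 28 = 0 := by
  show cv7 1 0 + cv7 2 0 = 0
  simp only [cvv_7_1_0, cvv_7_2_0]; norm_num
lemma ngz_7_29 : Ng (cs 7) 29 = 0 := by
  show cv7 1 0 + cv7 3 0 = 0
  simp only [cvv_7_1_0, cvv_7_3_0]; norm_num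
lemma ngz_7_30 : Ng (cs 7) 30 = 0 := by
  show cv7 2 0 + cv7 3 0 = 0
  simp only [cvv_7_2_0, cvv_7_3_0]; norm_num
lemma NgZ7 : ∀ t, Ng (cs 7) t = 0 := finForall31 ngz_7_0 ngz_7_1 ngz_7_2 ngz_7_3 ngz_7_4 ngz_7_5 ngz_7_6 ngz_7_7 ngz_7_8 ngz_7_9 ngz_7_10 ngz_7_11 ngz_7_12 ngz_7_13 ngz_7_14 ngz_7_15 ngz_7_16 ngz_7_17 ngz_7_18 ngz_7_19 ngz_7_20 ngz_7_21 ngz_7_22 ngz_7_23 ngz_7_24 ngz_7_25 ngz_7_26 ngz_7_27 ngz_7_28 ngz_7_29 ngz_7_30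

lemma ngz_8_0 : Ng (cs 8) 0 = 0 := by
  show cv8 0 9 + cv8 1 9 = 0
  simp only [cvv_8_0_9, cvv_8_1_9]; norm_num
lemma ngz_8_1 : Ng (cs 8) 1 = 0 := by
  show cv8 0 8 + cv8 1 8 = 0
  simp only [cvv_8_0_8, cvv_8_1_8]; norm_num
lemma ngz_8_2 : Ng (cs 8) 2 = 0 := by
  show cv8 0 7 + cv8 1 7 = 0
  simp only [cvv_8_0_7, cvv_8_1_7]; norm_num
lemma ngz_8_3 : Ng (cs 8) 3 = 0 := by
  show cv8 0 9 + cv8 2 9 = 0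
  simp only [cvv_8_0_9, cvv_8_2_9]; norm_num
lemma ngz_8_4 : Ng (cs 8) 4 = 0 := by
  show cv8 0 6 + cv8 0 8 + cv8 0 9 + cv8 1 6 + cv8 2 8 + cv8 3 9 = 0
  simp only [cvv_8_0_6, cvv_8_0_8, cvv_8_0_9, cvv_8_1_6, cvv_8_2_8, cvv_8_3_9]; norm_num
lemma ngz_8_5 : Ng (cs 8) 5 = 0 := by
  show cv8 0 5 + cv8 0 7 + cv8 0 8 + cv8 1 5 + cv8 2 7 + cv8 3 8 = 0
  simp only [cvv_8_0_5, cvv_8_0_7, cvv_8_0_8, cvv_8_1_5, cvv_8_2_7, cvv_8_3_8]; norm_num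
lemma ngz_8_6 : Ng (cs 8) 6 = 0 := by
  show cv8 0 7 + cv8 3 7 = 0
  simp only [cvv_8_0_7, cvv_8_3_7]; norm_num
lemma ngz_8_7 : Ng (cs 8) 7 = 0 := by
  show cv8 0 6 + cv8 2 6 = 0
  simp only [cvv_8_0_6, cvv_8_2_6]; norm_num
lemma ngz_8_8 : Ng (cs 8) 8 = 0 := by
  show cv8 0 4 + cv8 0 5 + cv8 0 6 + cv8 1 4 + cv8 2 5 + cv8 3 6 = 0
  simp only [cvv_8_0_4, cvv_8_0_5, cvv_8_0_6, cvv_8_1_4, cvv_8_2_5, cvv_8_3_6]; norm_num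
lemma ngz_8_9 : Ng (cs 8) 9 = 0 := by
  show cv8 0 5 + cv8 3 5 = 0
  simp only [cvv_8_0_5, cvv_8_3_5]; norm_num
lemma ngz_8_10 : Ng (cs 8) 10 = 0 := by
  show cv8 0 4 + cv8 2 4 = 0
  simp only [cvv_8_0_4, cvv_8_2_4]; norm_num
lemma ngz_8_11 : Ng (cs 8) 11 = 0 := by
  show cv8 0 4 + cv8 3 4 = 0
  simp only [cvv_8_0_4, cvv_8_3_4]; norm_num
lemma ngz_8_12 : Ng (cs 8) 12 = 0 := by
  show cv8 1 9 + cv8 2 9 = 0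
  simp only [cvv_8_1_9, cvv_8_2_9]; norm_num
lemma ngz_8_13 : Ng (cs 8) 13 = 0 := by
  show cv8 0 3 + cv8 1 3 + cv8 1 8 + cv8 1 9 + cv8 2 8 + cv8 3 9 = 0
  simp only [cvv_8_0_3, cvv_8_1_3, cvv_8_1_8, cvv_8_1_9, cvv_8_2_8, cvv_8_3_9]; norm_num
lemma ngz_8_14 : Ng (cs 8) 14 = 0 := by
  show cv8 0 2 + cv8 1 2 + cv8 1 7 + cv8 1 8 + cv8 2 7 + cv8 3 8 = 0
  simp only [cvv_8_0_2, cvv_8_1_2, cvv_8_1_7, cvv_8_1_8, cvv_8_2_7, cvv_8_3_8]; norm_num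
lemma ngz_8_15 : Ng (cs 8) 15 = 0 := by
  show cv8 1 7 + cv8 3 7 = 0
  simp only [cvv_8_1_7, cvv_8_3_7]; norm_num
lemma ngz_8_16 : Ng (cs 8) 16 = 0 := by
  show cv8 0 3 + cv8 1 6 + cv8 2 3 + cv8 2 6 + cv8 2 9 + cv8 3 9 = 0
  simp only [cvv_8_0_3, cvv_8_1_6, cvv_8_2_3, cvv_8_2_6, cvv_8_2_9, cvv_8_3_9]; norm_num
lemma ngz_8_17 : Ng (cs 8) 17 = 0 := by
  show cv8 0 1 + cv8 0 2 + cv8 0 3 + cv8 1 1 + cv8 1 5 + cv8 1 6 + cv8 2 2 + cv8 2 5 + cv8 2 8 + cv8 3 3 + cv8 3 6 + cv8 3 8 = 0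
  simp only [cvv_8_0_1, cvv_8_0_2, cvv_8_0_3, cvv_8_1_1, cvv_8_1_5, cvv_8_1_6, cvv_8_2_2, cvv_8_2_5, cvv_8_2_8, cvv_8_3_3, cvv_8_3_6, cvv_8_3_8]; norm_num
lemma ngz_8_18 : Ng (cs 8) 18 = 0 := by
  show cv8 0 2 + cv8 1 5 + cv8 2 7 + cv8 3 2 + cv8 3 5 + cv8 3 7 = 0
  simp only [cvv_8_0_2, cvv_8_1_5, cvv_8_2_7, cvv_8_3_2, cvv_8_3_5, cvv_8_3_7]; norm_num
lemma ngz_8_19 : Ng (cs 8) 19 = 0 := by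
  show cv8 0 1 + cv8 1 4 + cv8 2 1 + cv8 2 4 + cv8 2 6 + cv8 3 6 = 0
  simp only [cvv_8_0_1, cvv_8_1_4, cvv_8_2_1, cvv_8_2_4, cvv_8_2_6, cvv_8_3_6]; norm_num
lemma ngz_8_20 : Ng (cs 8) 20 = 0 := by
  show cv8 0 1 + cv8 1 4 + cv8 2 5 + cv8 3 1 + cv8 3 4 + cv8 3 5 = 0
  simp only [cvv_8_0_1, cvv_8_1_4, cvv_8_2_5, cvv_8_3_1, cvv_8_3_4, cvv_8_3_5]; norm_num
lemma ngz_8_21 : Ng (cs 8) 21 = 0 := by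
  show cv8 2 4 + cv8 3 4 = 0
  simp only [cvv_8_2_4, cvv_8_3_4]; norm_num
lemma ngz_8_22 : Ng (cs 8) 22 = 0 := by
  show cv8 1 3 + cv8 2 3 = 0
  simp only [cvv_8_1_3, cvv_8_2_3]; norm_num
lemma ngz_8_23 : Ng (cs 8) 23 = 0 := by
  show cv8 0 0 + cv8 1 0 + cv8 1 2 + cv8 1 3 + cv8 2 2 + cv8 3 3 = 0
  simp only [cvv_8_0_0, cvv_8_1_0, cvv_8_1_2, cvv_8_1_3, cvv_8_2_2, cvv_8_3_3]; norm_num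
lemma ngz_8_24 : Ng (cs 8) 24 = 0 := by
  show cv8 1 2 + cv8 3 2 = 0
  simp only [cvv_8_1_2, cvv_8_3_2]; norm_num
lemma ngz_8_25 : Ng (cs 8) 25 = 0 := by
  show cv8 0 0 + cv8 1 1 + cv8 2 0 + cv8 2 1 + cv8 2 3 + cv8 3 3 = 0
  simp only [cvv_8_0_0, cvv_8_1_1, cvv_8_2_0, cvv_8_2_1, cvv_8_2_3, cvv_8_3_3]; norm_num
lemma ngz_8_26 : Ng (cs 8) 26 = 0 := by
  show cv8 0 0 + cv8 1 1 + cv8 2 2 + cv8 3 0 + cv8 3 1 + cv8 3 2 = 0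
  simp only [cvv_8_0_0, cvv_8_1_1, cvv_8_2_2, cvv_8_3_0, cvv_8_3_1, cvv_8_3_2]; norm_num
lemma ngz_8_27 : Ng (cs 8) 27 = 0 := by
  show cv8 2 1 + cv8 3 1 = 0
  simp only [cvv_8_2_1, cvv_8_3_1]; norm_num
lemma ngz_8_28 : Ng (cs 8) 28 = 0 := by
  show cv8 1 0 + cv8 2 0 = 0
  simp only [cvv_8_1_0, cvv_8_2_0]; norm_num
lemma ngz_8_29 : Ng (cs 8) 29 = 0 := by
  show cv8 1 0 + cv8 3 0 = 0
  simp only [cvv_8_1_0, cvv_8_3_0]; norm_num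
lemma ngz_8_30 : Ng (cs 8) 30 = 0 := by
  show cv8 2 0 + cv8 3 0 = 0
  simp only [cvv_8_2_0, cvv_8_3_0]; norm_num
lemma NgZ8 : ∀ t, Ng (cs 8) t = 0 := finForall31 ngz_8_0 ngz_8_1 ngz_8_2 ngz_8_3 ngz_8_4 ngz_8_5 ngz_8_6 ngz_8_7 ngz_8_8 ngz_8_9 ngz_8_10 ngz_8_11 ngz_8_12 ngz_8_13 ngz_8_14 ngz_8_15 ngz_8_16 ngz_8_17 ngz_8_18 ngz_8_19 ngz_8_20 ngz_8_21 ngz_8_22 ngz_8_23 ngz_8_24 ngz_8_25 ngz_8_26 ngz_8_27 ngz_8_28 ngz_8_29 ngz_8_30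

def wv : Fin 9 → (Fin 4 → P4) := fun k => Lc (cs k)

lemma relMap_wv : ∀ k, relMap 3 FC (wv k) = 0 := by
  intro k
  have hz : ∀ t, Ng (cs k) t = 0 := by
    fin_cases k
    exacts [NgZ0, NgZ1, NgZ2, NgZ3, NgZ4, NgZ5, NgZ6, NgZ7, NgZ8]
  rw [wv, master, Finset.sum_eq_zero]
  intro t _
  rw [hz t, map_zero]

lemma wv_indep : LinearIndependent ℂ wv := by
  rw [Fintype.linearIndependent_iff]
  intro g hs
  have hco : ∀ (i : Fin 4) (j : Fin 10), ∑ k, g k * cs k i j = 0 := by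
    intro i j
    have h1 := congrFun hs i
    rw [Finset.sum_apply] at h1
    have h2 := congrArg (coeff (mexp j)) h1
    simp only [Pi.smul_apply, coeff_sum, coeff_smul, wv, coeffL, Pi.zero_apply, coeff_zero,
      smul_eq_mul] at h2
    exact h2
  intro k
  fin_cases k
  exacts [by have := hco 1 8; simp only [Fin.sum_univ_succ, Fin.sum_univ_zero, Matrix.cons_val_zero, Matrix.cons_val_succ, cs, cvv_0_1_8, cvv_1_1_8, cvv_2_1_8, cvv_3_1_8, cvv_4_1_8, cvv_5_1_8, cvv_6_1_8, cvv_7_1_8, cvv_8_1_8, mul_one, mul_zero, add_zero, zero_add] at this; exact this,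
    by have := hco 2 6; simp only [Fin.sum_univ_succ, Fin.sum_univ_zero, Matrix.cons_val_zero, Matrix.cons_val_succ, cs, cvv_0_2_6, cvv_1_2_6, cvv_2_2_6, cvv_3_2_6, cvv_4_2_6, cvv_5_2_6, cvv_6_2_6, cvv_7_2_6, cvv_8_2_6, mul_one, mul_zero, add_zero, zero_add] at this; exact this,
    by have := hco 2 8; simp only [Fin.sum_univ_succ, Fin.sum_univ_zero, Matrix.cons_val_zero, Matrix.cons_val_succ, cs, cvv_0_2_8, cvv_1_2_8, cvv_2_2_8, cvv_3_2_8, cvv_4_2_8, cvv_5_2_8, cvv_6_2_8, cvv_7_2_8, cvv_8_2_8, mul_one, mul_zero, add_zero, zero_add] at this; exact this,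
    by have := hco 3 2; simp only [Fin.sum_univ_succ, Fin.sum_univ_zero, Matrix.cons_val_zero, Matrix.cons_val_succ, cs, cvv_0_3_2, cvv_1_3_2, cvv_2_3_2, cvv_3_3_2, cvv_4_3_2, cvv_5_3_2, cvv_6_3_2, cvv_7_3_2, cvv_8_3_2, mul_one, mul_zero, add_zero, zero_add] at this; exact this,
    by have := hco 3 3; simp only [Fin.sum_univ_succ, Fin.sum_univ_zero, Matrix.cons_val_zero, Matrix.cons_val_succ, cs, cvv_0_3_3, cvv_1_3_3, cvv_2_3_3, cvv_3_3_3, cvv_4_3_3, cvv_5_3_3, cvv_6_3_3, cvv_7_3_3, cvv_8_3_3, mul_one, mul_zero, add_zero, zero_add] at this; exact this,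
    by have := hco 3 5; simp only [Fin.sum_univ_succ, Fin.sum_univ_zero, Matrix.cons_val_zero, Matrix.cons_val_succ, cs, cvv_0_3_5, cvv_1_3_5, cvv_2_3_5, cvv_3_3_5, cvv_4_3_5, cvv_5_3_5, cvv_6_3_5, cvv_7_3_5, cvv_8_3_5, mul_one, mul_zero, add_zero, zero_add] at this; exact this,
    by have := hco 3 6; simp only [Fin.sum_univ_succ, Fin.sum_univ_zero, Matrix.cons_val_zero, Matrix.cons_val_succ, cs, cvv_0_3_6, cvv_1_3_6, cvv_2_3_6, cvv_3_3_6, cvv_4_3_6, cvv_5_3_6, cvv_6_3_6, cvv_7_3_6, cvv_8_3_6, mul_one, mul_zero, add_zero, zero_add] at this; exact this,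
    by have := hco 3 8; simp only [Fin.sum_univ_succ, Fin.sum_univ_zero, Matrix.cons_val_zero, Matrix.cons_val_succ, cs, cvv_0_3_8, cvv_1_3_8, cvv_2_3_8, cvv_3_3_8, cvv_4_3_8, cvv_5_3_8, cvv_6_3_8, cvv_7_3_8, cvv_8_3_8, mul_one, mul_zero, add_zero, zero_add] at this; exact this,
    by have := hco 3 9; simp only [Fin.sum_univ_succ, Fin.sum_univ_zero, Matrix.cons_val_zero, Matrix.cons_val_succ, cs, cvv_0_3_9, cvv_1_3_9, cvv_2_3_9, cvv_3_3_9, cvv_4_3_9, cvv_5_3_9, cvv_6_3_9, cvv_7_3_9, cvv_8_3_9, mul_one, mul_zero, add_zero, zero_add] at this; exact this]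


lemma ARm_le_span : ARm 3 FC 2 ≤ Submodule.span ℂ (Set.range wv) := by
  intro v hv
  obtain ⟨hv1, hv2⟩ := Submodule.mem_inf.mp hv
  have hvh : ∀ i, v i ∈ homogeneousSubmodule (Fin 4) ℂ 2 := by
    intro i
    exact Submodule.mem_comap.mp ((Submodule.mem_iInf _).mp hv1 i)
  set c : Fin 4 → Fin 10 → ℂ := fun i j => coeff (mexp j) (v i) with hcdef
  have hvc : v = Lc c := by
    funext i
    exact homog2_eq (v i) (hvh i)
  have hrel : relMap 3 FC v = 0 := LinearMap.mem_ker.mp hv2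
  rw [hvc, master] at hrel
  have hg := extract Dex Dex_inj _ hrel
  have e0 : c 0 9 + c 1 9 = 0 := hg 0
  have e1 : c 0 8 + c 1 8 = 0 := hg 1
  have e2 : c 0 7 + c 1 7 = 0 := hg 2
  have e3 : c 0 9 + c 2 9 = 0 := hg 3
  have e4 : c 0 6 + c 0 8 + c 0 9 + c 1 6 + c 2 8 + c 3 9 = 0 := hg 4
  have e5 : c 0 5 + c 0 7 + c 0 8 + c 1 5 + c 2 7 + c 3 8 = 0 := hg 5
  have e6 : c 0 7 + c 3 7 = 0 := hg 6
  have e7 : c 0 6 + c 2 6 = 0 := hg 7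
  have e8 : c 0 4 + c 0 5 + c 0 6 + c 1 4 + c 2 5 + c 3 6 = 0 := hg 8
  have e9 : c 0 5 + c 3 5 = 0 := hg 9
  have e10 : c 0 4 + c 2 4 = 0 := hg 10
  have e11 : c 0 4 + c 3 4 = 0 := hg 11
  have e12 : c 1 9 + c 2 9 = 0 := hg 12
  have e13 : c 0 3 + c 1 3 + c 1 8 + c 1 9 + c 2 8 + c 3 9 = 0 := hg 13
  have e14 : c 0 2 + c 1 2 + c 1 7 + c 1 8 + c 2 7 + c 3 8 = 0 := hg 14
  have e15 : c 1 7 + c 3 7 = 0 := hg 15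
  have e16 : c 0 3 + c 1 6 + c 2 3 + c 2 6 + c 2 9 + c 3 9 = 0 := hg 16
  have e17 : c 0 1 + c 0 2 + c 0 3 + c 1 1 + c 1 5 + c 1 6 + c 2 2 + c 2 5 + c 2 8 + c 3 3 + c 3 6 + c 3 8 = 0 := hg 17
  have e18 : c 0 2 + c 1 5 + c 2 7 + c 3 2 + c 3 5 + c 3 7 = 0 := hg 18
  have e19 : c 0 1 + c 1 4 + c 2 1 + c 2 4 + c 2 6 + c 3 6 = 0 := hg 19
  have e20 : c 0 1 + c 1 4 + c 2 5 + c 3 1 + c 3 4 + c 3 5 = 0 := hg 20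
  have e21 : c 2 4 + c 3 4 = 0 := hg 21
  have e22 : c 1 3 + c 2 3 = 0 := hg 22
  have e23 : c 0 0 + c 1 0 + c 1 2 + c 1 3 + c 2 2 + c 3 3 = 0 := hg 23
  have e24 : c 1 2 + c 3 2 = 0 := hg 24
  have e25 : c 0 0 + c 1 1 + c 2 0 + c 2 1 + c 2 3 + c 3 3 = 0 := hg 25
  have e26 : c 0 0 + c 1 1 + c 2 2 + c 3 0 + c 3 1 + c 3 2 = 0 := hg 26
  have e27 : c 2 1 + c 3 1 = 0 := hg 27
  have e28 : c 1 0 + c 2 0 = 0 := hg 28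
  have e29 : c 1 0 + c 3 0 = 0 := hg 29
  have e30 : c 2 0 + c 3 0 = 0 := hg 30
  have key_0_0 : c 0 0 = ∑ k, (![c 1 8, c 2 6, c 2 8, c 3 2, c 3 3, c 3 5, c 3 6, c 3 8, c 3 9]) k * cs k 0 0 := by
    simp only [Fin.sum_univ_succ, Fin.sum_univ_zero, Matrix.cons_val_zero, Matrix.cons_val_succ, cs, cvv_0_0_0, cvv_1_0_0, cvv_2_0_0, cvv_3_0_0, cvv_4_0_0, cvv_5_0_0, cvv_6_0_0, cvv_7_0_0, cvv_8_0_0]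
    linear_combination ((-1/12) : ℂ) * e0 + ((1/6) : ℂ) * e1 + ((2/3) : ℂ) * e2 + ((-1/12) : ℂ) * e3 + ((1/6) : ℂ) * e4 + ((-1/3) : ℂ) * e5 + ((-1/3) : ℂ) * e6 + ((1/6) : ℂ) * e7 + ((-1/3) : ℂ) * e8 + ((2/3) : ℂ) * e9 + ((2/3) : ℂ) * e10 + ((-1/3) : ℂ) * e11 + ((-1/12) : ℂ) * e12 + ((1/6) : ℂ) * e13 + ((-1/3) : ℂ) * e14 + ((-1/3) : ℂ) * e15 + ((1/6) : ℂ) * e16 + ((-1/3) : ℂ) * e17 + ((2/3) : ℂ) * e18 + ((-1/3) : ℂ) * e19 + ((2/3) : ℂ) * e20 + ((-1/3) : ℂ) * e21 + ((-5/6) : ℂ) * e22 + ((2/3) : ℂ) * e23 + ((-1/3) : ℂ) * e24 + ((2/3) : ℂ) * e25 + ((-1/3) : ℂ) * e26 + ((-1/3) : ℂ) * e27 + ((-5/6) : ℂ) * e28 + ((1/6) : ℂ) * e29 + ((1/6) : ℂ) * e30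
  have key_0_1 : c 0 1 = ∑ k, (![c 1 8, c 2 6, c 2 8, c 3 2, c 3 3, c 3 5, c 3 6, c 3 8, c 3 9]) k * cs k 0 1 := by
    simp only [Fin.sum_univ_succ, Fin.sum_univ_zero, Matrix.cons_val_zero, Matrix.cons_val_succ, cs, cvv_0_0_1, cvv_1_0_1, cvv_2_0_1, cvv_3_0_1, cvv_4_0_1, cvv_5_0_1, cvv_6_0_1, cvv_7_0_1, cvv_8_0_1]
    linear_combination ((1/24) : ℂ) * e0 + ((-1/12) : ℂ) * e1 + ((-1/3) : ℂ) * e2 + ((1/24) : ℂ) * e3 + ((-1/12) : ℂ) * e4 + ((1/6) : ℂ) * e5 + ((1/6) : ℂ) * e6 + ((11/12) : ℂ) * e7 + ((-5/6) : ℂ) * e8 + ((2/3) : ℂ) * e9 + ((2/3) : ℂ) * e10 + ((1/6) : ℂ) * e11 + ((1/24) : ℂ) * e12 + ((-1/12) : ℂ) * e13 + ((1/6) : ℂ) * e14 + ((1/6) : ℂ) * e15 + ((-1/12) : ℂ) * e16 + ((1/6) : ℂ) * e17 + ((-1/3) : ℂ) * e18 + ((1/6) : ℂ) * e19 + ((2/3)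 : ℂ) * e20 + ((-5/6) : ℂ) * e21 + ((-1/12) : ℂ) * e22 + ((1/6) : ℂ) * e23 + ((-1/3) : ℂ) * e24 + ((1/6) : ℂ) * e25 + ((-1/3) : ℂ) * e26 + ((-1/3) : ℂ) * e27 + ((-1/3) : ℂ) * e28 + ((1/6) : ℂ) * e29 + ((1/6) : ℂ) * e30
  have key_0_2 : c 0 2 = ∑ k, (![c 1 8, c 2 6, c 2 8, c 3 2, c 3 3, c 3 5, c 3 6, c 3 8, c 3 9]) k * cs k 0 2 := by
    simp only [Fin.sum_univ_succ, Fin.sum_univ_zero, Matrix.cons_val_zero, Matrix.cons_val_succ, cs, cvv_0_0_2, cvv_1_0_2, cvv_2_0_2, cvv_3_0_2, cvv_4_0_2, cvv_5_0_2, cvv_6_0_2, cvv_7_0_2, cvv_8_0_2]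
    linear_combination (1 : ℂ) * e1 + (1 : ℂ) * e2 + (-1 : ℂ) * e5 + (1 : ℂ) * e9 + (-1 : ℂ) * e15 + (1 : ℂ) * e18
  have key_0_3 : c 0 3 = ∑ k, (![c 1 8, c 2 6, c 2 8, c 3 2, c 3 3, c 3 5, c 3 6, c 3 8, c 3 9]) k * cs k 0 3 := by
    simp only [Fin.sum_univ_succ, Fin.sum_univ_zero, Matrix.cons_val_zero, Matrix.cons_val_succ, cs, cvv_0_0_3, cvv_1_0_3, cvv_2_0_3, cvv_3_0_3, cvv_4_0_3, cvv_5_0_3, cvv_6_0_3, cvv_7_0_3, cvv_8_0_3]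
    linear_combination ((1/4) : ℂ) * e0 + ((1/2) : ℂ) * e1 + ((1/4) : ℂ) * e3 + ((-1/2) : ℂ) * e4 + ((1/2) : ℂ) * e7 + ((-3/4) : ℂ) * e12 + ((1/2) : ℂ) * e13 + ((1/2) : ℂ) * e16 + ((-1/2) : ℂ) * e22
  have key_0_4 : c 0 4 = ∑ k, (![c 1 8, c 2 6, c 2 8, c 3 2, c 3 3, c 3 5, c 3 6, c 3 8, c 3 9]) k * cs k 0 4 := by
    simp only [Fin.sum_univ_succ, Fin.sum_univ_zero, Matrix.cons_val_zero, Matrix.cons_val_succ, cs, cvv_0_0_4, cvv_1_0_4, cvv_2_0_4, cvv_3_0_4, cvv_4_0_4, cvv_5_0_4, cvv_6_0_4, cvv_7_0_4, cvv_8_0_4]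
    linear_combination ((1/2) : ℂ) * e10 + ((1/2) : ℂ) * e11 + ((-1/2) : ℂ) * e21
  have key_0_5 : c 0 5 = ∑ k, (![c 1 8, c 2 6, c 2 8, c 3 2, c 3 3, c 3 5, c 3 6, c 3 8, c 3 9]) k * cs k 0 5 := by
    simp only [Fin.sum_univ_succ, Fin.sum_univ_zero, Matrix.cons_val_zero, Matrix.cons_val_succ, cs, cvv_0_0_5, cvv_1_0_5, cvv_2_0_5, cvv_3_0_5, cvv_4_0_5, cvv_5_0_5, cvv_6_0_5, cvv_7_0_5, cvv_8_0_5]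
    linear_combination (1 : ℂ) * e9
  have key_0_6 : c 0 6 = ∑ k, (![c 1 8, c 2 6, c 2 8, c 3 2, c 3 3, c 3 5, c 3 6, c 3 8, c 3 9]) k * cs k 0 6 := by
    simp only [Fin.sum_univ_succ, Fin.sum_univ_zero, Matrix.cons_val_zero, Matrix.cons_val_succ, cs, cvv_0_0_6, cvv_1_0_6, cvv_2_0_6, cvv_3_0_6, cvv_4_0_6, cvv_5_0_6, cvv_6_0_6, cvv_7_0_6, cvv_8_0_6]
    linear_combination (1 : ℂ) * e7
  have key_0_7 : c 0 7 = ∑ k, (![c 1 8, c 2 6, c 2 8, c 3 2, c 3 3, c 3 5, c 3 6, c 3 8, c 3 9]) k * cs k 0 7 := by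
    simp only [Fin.sum_univ_succ, Fin.sum_univ_zero, Matrix.cons_val_zero, Matrix.cons_val_succ, cs, cvv_0_0_7, cvv_1_0_7, cvv_2_0_7, cvv_3_0_7, cvv_4_0_7, cvv_5_0_7, cvv_6_0_7, cvv_7_0_7, cvv_8_0_7]
    linear_combination ((1/2) : ℂ) * e2 + ((1/2) : ℂ) * e6 + ((-1/2) : ℂ) * e15
  have key_0_8 : c 0 8 = ∑ k, (![c 1 8, c 2 6, c 2 8, c 3 2, c 3 3, c 3 5, c 3 6, c 3 8, c 3 9]) k * cs k 0 8 := by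
    simp only [Fin.sum_univ_succ, Fin.sum_univ_zero, Matrix.cons_val_zero, Matrix.cons_val_succ, cs, cvv_0_0_8, cvv_1_0_8, cvv_2_0_8, cvv_3_0_8, cvv_4_0_8, cvv_5_0_8, cvv_6_0_8, cvv_7_0_8, cvv_8_0_8]
    linear_combination (1 : ℂ) * e1
  have key_0_9 : c 0 9 = ∑ k, (![c 1 8, c 2 6, c 2 8, c 3 2, c 3 3, c 3 5, c 3 6, c 3 8, c 3 9]) k * cs k 0 9 := by
    simp only [Fin.sum_univ_succ, Fin.sum_univ_zero, Matrix.cons_val_zero, Matrix.cons_val_succ, cs, cvv_0_0_9, cvv_1_0_9, cvv_2_0_9, cvv_3_0_9, cvv_4_0_9, cvv_5_0_9, cvv_6_0_9, cvv_7_0_9, cvv_8_0_9]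
    linear_combination ((1/2) : ℂ) * e0 + ((1/2) : ℂ) * e3 + ((-1/2) : ℂ) * e12
  have key_1_0 : c 1 0 = ∑ k, (![c 1 8, c 2 6, c 2 8, c 3 2, c 3 3, c 3 5, c 3 6, c 3 8, c 3 9]) k * cs k 1 0 := by
    simp only [Fin.sum_univ_succ, Fin.sum_univ_zero, Matrix.cons_val_zero, Matrix.cons_val_succ, cs, cvv_0_1_0, cvv_1_1_0, cvv_2_1_0, cvv_3_1_0, cvv_4_1_0, cvv_5_1_0, cvv_6_1_0, cvv_7_1_0, cvv_8_1_0]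
    linear_combination ((1/2) : ℂ) * e28 + ((1/2) : ℂ) * e29 + ((-1/2) : ℂ) * e30
  have key_1_1 : c 1 1 = ∑ k, (![c 1 8, c 2 6, c 2 8, c 3 2, c 3 3, c 3 5, c 3 6, c 3 8, c 3 9]) k * cs k 1 1 := by
    simp only [Fin.sum_univ_succ, Fin.sum_univ_zero, Matrix.cons_val_zero, Matrix.cons_val_succ, cs, cvv_0_1_1, cvv_1_1_1, cvv_2_1_1, cvv_3_1_1, cvv_4_1_1, cvv_5_1_1, cvv_6_1_1, cvv_7_1_1, cvv_8_1_1]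
    linear_combination ((-17/24) : ℂ) * e0 + ((-7/12) : ℂ) * e1 + ((-1/3) : ℂ) * e2 + ((7/24) : ℂ) * e3 + ((5/12) : ℂ) * e4 + ((1/6) : ℂ) * e5 + ((1/6) : ℂ) * e6 + ((-7/12) : ℂ) * e7 + ((1/6) : ℂ) * e8 + ((-1/3) : ℂ) * e9 + ((-1/3) : ℂ) * e10 + ((1/6) : ℂ) * e11 + ((7/24) : ℂ) * e12 + ((5/12) : ℂ) * e13 + ((1/6) : ℂ) * e14 + ((1/6) : ℂ) * e15 + ((-7/12) : ℂ) * e16 + ((1/6) : ℂ) * e17 + ((-1/3) : ℂ) * e18 + ((1/6) : ℂ) * e19 + ((-1/3) : ℂ) * e20 + ((1/6) : ℂ) * e21 + ((5/12) : ℂ) * e22 + ((-5/6) : ℂ) * e23 + ((2/3) : ℂ) * e24 + ((1/6) : ℂ) * e25 + ((2/3) : ℂ) * e26 + ((-1/3) : ℂ) * e27 + ((2/3) : ℂ) * e28 + ((1/6) : ℂ) * e29 + ((-5/6) : ℂ) * e30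
  have key_1_2 : c 1 2 = ∑ k, (![c 1 8, c 2 6, c 2 8, c 3 2, c 3 3, c 3 5, c 3 6, c 3 8, c 3 9]) k * cs k 1 2 := by
    simp only [Fin.sum_univ_succ, Fin.sum_univ_zero, Matrix.cons_val_zero, Matrix.cons_val_succ, cs, cvv_0_1_2, cvv_1_1_2, cvv_2_1_2, cvv_3_1_2, cvv_4_1_2, cvv_5_1_2, cvv_6_1_2, cvv_7_1_2, cvv_8_1_2]
    linear_combination (1 : ℂ) * e24
  have key_1_3 : c 1 3 = ∑ k, (![c 1 8, c 2 6, c 2 8, c 3 2, c 3 3, c 3 5, c 3 6, c 3 8, c 3 9]) k * cs k 1 3 := by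
    simp only [Fin.sum_univ_succ, Fin.sum_univ_zero, Matrix.cons_val_zero, Matrix.cons_val_succ, cs, cvv_0_1_3, cvv_1_1_3, cvv_2_1_3, cvv_3_1_3, cvv_4_1_3, cvv_5_1_3, cvv_6_1_3, cvv_7_1_3, cvv_8_1_3]
    linear_combination ((-3/4) : ℂ) * e0 + ((-1/2) : ℂ) * e1 + ((1/4) : ℂ) * e3 + ((1/2) : ℂ) * e4 + ((-1/2) : ℂ) * e7 + ((1/4) : ℂ) * e12 + ((1/2) : ℂ) * e13 + ((-1/2) : ℂ) * e16 + ((1/2) : ℂ) * e22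
  have key_1_4 : c 1 4 = ∑ k, (![c 1 8, c 2 6, c 2 8, c 3 2, c 3 3, c 3 5, c 3 6, c 3 8, c 3 9]) k * cs k 1 4 := by
    simp only [Fin.sum_univ_succ, Fin.sum_univ_zero, Matrix.cons_val_zero, Matrix.cons_val_succ, cs, cvv_0_1_4, cvv_1_1_4, cvv_2_1_4, cvv_3_1_4, cvv_4_1_4, cvv_5_1_4, cvv_6_1_4, cvv_7_1_4, cvv_8_1_4]
    linear_combination ((-1/12) : ℂ) * e0 + ((1/6) : ℂ) * e1 + ((2/3) : ℂ) * e2 + ((-1/12) : ℂ) * e3 + ((1/6) : ℂ) * e4 + ((-1/3) : ℂ) * e5 + ((-1/3) : ℂ) * e6 + ((-5/6) : ℂ) * e7 + ((2/3) : ℂ) * e8 + ((-1/3) : ℂ) * e9 + ((-5/6) : ℂ) * e10 + ((1/6) : ℂ) * e11 + ((-1/12) : ℂ) * e12 + ((1/6) : ℂ) * e13 + ((-1/3) : ℂ) * e14 + ((-1/3) : ℂ) * e15 + ((1/6) : ℂ) * e16 + ((-1/3) : ℂ) * e17 + ((2/3) : ℂ) * e18 + ((2/3) : ℂ) * e19 +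 ((-1/3) : ℂ) * e20 + ((1/6) : ℂ) * e21 + ((1/6) : ℂ) * e22 + ((-1/3) : ℂ) * e23 + ((2/3) : ℂ) * e24 + ((-1/3) : ℂ) * e25 + ((2/3) : ℂ) * e26 + ((-1/3) : ℂ) * e27 + ((2/3) : ℂ) * e28 + ((-1/3) : ℂ) * e29 + ((-1/3) : ℂ) * e30
  have key_1_5 : c 1 5 = ∑ k, (![c 1 8, c 2 6, c 2 8, c 3 2, c 3 3, c 3 5, c 3 6, c 3 8, c 3 9]) k * cs k 1 5 := by
    simp only [Fin.sum_univ_succ, Fin.sum_univ_zero, Matrix.cons_val_zero, Matrix.cons_val_succ, cs, cvv_0_1_5, cvv_1_1_5, cvv_2_1_5, cvv_3_1_5, cvv_4_1_5, cvv_5_1_5, cvv_6_1_5, cvv_7_1_5, cvv_8_1_5]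
    linear_combination (1 : ℂ) * e2 + (-1 : ℂ) * e6 + (-1 : ℂ) * e14 + (1 : ℂ) * e18 + (1 : ℂ) * e24
  have key_1_6 : c 1 6 = ∑ k, (![c 1 8, c 2 6, c 2 8, c 3 2, c 3 3, c 3 5, c 3 6, c 3 8, c 3 9]) k * cs k 1 6 := by
    simp only [Fin.sum_univ_succ, Fin.sum_univ_zero, Matrix.cons_val_zero, Matrix.cons_val_succ, cs, cvv_0_1_6, cvv_1_1_6, cvv_2_1_6, cvv_3_1_6, cvv_4_1_6, cvv_5_1_6, cvv_6_1_6, cvv_7_1_6, cvv_8_1_6]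
    linear_combination ((-1/2) : ℂ) * e0 + (-1 : ℂ) * e1 + ((-1/2) : ℂ) * e3 + (1 : ℂ) * e4 + (-1 : ℂ) * e7 + ((1/2) : ℂ) * e12
  have key_1_7 : c 1 7 = ∑ k, (![c 1 8, c 2 6, c 2 8, c 3 2, c 3 3, c 3 5, c 3 6, c 3 8, c 3 9]) k * cs k 1 7 := by
    simp only [Fin.sum_univ_succ, Fin.sum_univ_zero, Matrix.cons_val_zero, Matrix.cons_val_succ, cs, cvv_0_1_7, cvv_1_1_7, cvv_2_1_7, cvv_3_1_7, cvv_4_1_7, cvv_5_1_7, cvv_6_1_7, cvv_7_1_7, cvv_8_1_7]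
    linear_combination ((1/2) : ℂ) * e2 + ((-1/2) : ℂ) * e6 + ((1/2) : ℂ) * e15
  have key_1_8 : c 1 8 = ∑ k, (![c 1 8, c 2 6, c 2 8, c 3 2, c 3 3, c 3 5, c 3 6, c 3 8, c 3 9]) k * cs k 1 8 := by
    simp only [Fin.sum_univ_succ, Fin.sum_univ_zero, Matrix.cons_val_zero, Matrix.cons_val_succ, cs, cvv_0_1_8, cvv_1_1_8, cvv_2_1_8, cvv_3_1_8, cvv_4_1_8, cvv_5_1_8, cvv_6_1_8, cvv_7_1_8, cvv_8_1_8]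
    ring
  have key_1_9 : c 1 9 = ∑ k, (![c 1 8, c 2 6, c 2 8, c 3 2, c 3 3, c 3 5, c 3 6, c 3 8, c 3 9]) k * cs k 1 9 := by
    simp only [Fin.sum_univ_succ, Fin.sum_univ_zero, Matrix.cons_val_zero, Matrix.cons_val_succ, cs, cvv_0_1_9, cvv_1_1_9, cvv_2_1_9, cvv_3_1_9, cvv_4_1_9, cvv_5_1_9, cvv_6_1_9, cvv_7_1_9, cvv_8_1_9]
    linear_combination ((1/2) : ℂ) * e0 + ((-1/2) : ℂ) * e3 + ((1/2) : ℂ) * e12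
  have key_2_0 : c 2 0 = ∑ k, (![c 1 8, c 2 6, c 2 8, c 3 2, c 3 3, c 3 5, c 3 6, c 3 8, c 3 9]) k * cs k 2 0 := by
    simp only [Fin.sum_univ_succ, Fin.sum_univ_zero, Matrix.cons_val_zero, Matrix.cons_val_succ, cs, cvv_0_2_0, cvv_1_2_0, cvv_2_2_0, cvv_3_2_0, cvv_4_2_0, cvv_5_2_0, cvv_6_2_0, cvv_7_2_0, cvv_8_2_0]
    linear_combination ((1/2) : ℂ) * e28 + ((-1/2) : ℂ) * e29 + ((1/2) : ℂ) * e30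
  have key_2_1 : c 2 1 = ∑ k, (![c 1 8, c 2 6, c 2 8, c 3 2, c 3 3, c 3 5, c 3 6, c 3 8, c 3 9]) k * cs k 2 1 := by
    simp only [Fin.sum_univ_succ, Fin.sum_univ_zero, Matrix.cons_val_zero, Matrix.cons_val_succ, cs, cvv_0_2_1, cvv_1_2_1, cvv_2_2_1, cvv_3_2_1, cvv_4_2_1, cvv_5_2_1, cvv_6_2_1, cvv_7_2_1, cvv_8_2_1]
    linear_combination ((1/24) : ℂ) * e0 + ((-1/12) : ℂ) * e1 + ((-1/3) : ℂ) * e2 + ((1/24) : ℂ) * e3 + ((-1/12) : ℂ) * e4 + ((1/6) : ℂ) * e5 + ((1/6) : ℂ) * e6 + ((-1/12) : ℂ) * e7 + ((1/6) : ℂ) * e8 + ((-1/3) : ℂ) * e9 + ((-1/3) : ℂ) * e10 + ((1/6) : ℂ) * e11 + ((1/24) : ℂ) * e12 + ((-1/12) : ℂ) * e13 + ((1/6) : ℂ) * e14 + ((1/6) : ℂ) * e15 + ((-1/12) : ℂ) * e16 + ((1/6) : ℂ) * e17 + ((-1/3) : ℂ) * e18 + ((1/6) : ℂ) * e19 + ((-1/3)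 : ℂ) * e20 + ((1/6) : ℂ) * e21 + ((-1/12) : ℂ) * e22 + ((1/6) : ℂ) * e23 + ((-1/3) : ℂ) * e24 + ((1/6) : ℂ) * e25 + ((-1/3) : ℂ) * e26 + ((2/3) : ℂ) * e27 + ((-1/3) : ℂ) * e28 + ((1/6) : ℂ) * e29 + ((1/6) : ℂ) * e30
  have key_2_2 : c 2 2 = ∑ k, (![c 1 8, c 2 6, c 2 8, c 3 2, c 3 3, c 3 5, c 3 6, c 3 8, c 3 9]) k * cs k 2 2 := by
    simp only [Fin.sum_univ_succ, Fin.sum_univ_zero, Matrix.cons_val_zero, Matrix.cons_val_succ, cs, cvv_0_2_2, cvv_1_2_2, cvv_2_2_2, cvv_3_2_2, cvv_4_2_2, cvv_5_2_2, cvv_6_2_2, cvv_7_2_2, cvv_8_2_2]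
    linear_combination ((5/6) : ℂ) * e0 + ((1/3) : ℂ) * e1 + ((-2/3) : ℂ) * e2 + ((-1/6) : ℂ) * e3 + ((-2/3) : ℂ) * e4 + ((1/3) : ℂ) * e5 + ((1/3) : ℂ) * e6 + ((1/3) : ℂ) * e7 + ((1/3) : ℂ) * e8 + ((-2/3) : ℂ) * e9 + ((-2/3) : ℂ) * e10 + ((1/3) : ℂ) * e11 + ((-1/6) : ℂ) * e12 + ((-2/3) : ℂ) * e13 + ((1/3) : ℂ) * e14 + ((1/3) : ℂ) * e15 + ((1/3) : ℂ) * e16 + ((1/3) : ℂ) * e17 + ((-2/3) : ℂ) * e18 + ((1/3) : ℂ) * e19 + ((-2/3) : ℂ) * e20 + ((1/3) : ℂ) * e21 + ((1/3) : ℂ) * e22 + ((1/3) : ℂ) * e23 + ((-2/3) : ℂ) * e24 + ((-2/3) : ℂ) * e25 + ((1/3) : ℂ) * e26 + ((1/3) : ℂ) * e27 + ((1/3) : ℂ) * e28 + ((-2/3) : ℂ) * e29 + ((1/3) : ℂ) * e30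
  have key_2_3 : c 2 3 = ∑ k, (![c 1 8, c 2 6, c 2 8, c 3 2, c 3 3, c 3 5, c 3 6, c 3 8, c 3 9]) k * cs k 2 3 := by
    simp only [Fin.sum_univ_succ, Fin.sum_univ_zero, Matrix.cons_val_zero, Matrix.cons_val_succ, cs, cvv_0_2_3, cvv_1_2_3, cvv_2_2_3, cvv_3_2_3, cvv_4_2_3, cvv_5_2_3, cvv_6_2_3, cvv_7_2_3, cvv_8_2_3]
    linear_combination ((3/4) : ℂ) * e0 + ((1/2) : ℂ) * e1 + ((-1/4) : ℂ) * e3 + ((-1/2) : ℂ) * e4 + ((1/2) : ℂ) * e7 + ((-1/4) : ℂ) * e12 + ((-1/2) : ℂ) * e13 + ((1/2) : ℂ) * e16 + ((1/2) : ℂ) * e22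
  have key_2_4 : c 2 4 = ∑ k, (![c 1 8, c 2 6, c 2 8, c 3 2, c 3 3, c 3 5, c 3 6, c 3 8, c 3 9]) k * cs k 2 4 := by
    simp only [Fin.sum_univ_succ, Fin.sum_univ_zero, Matrix.cons_val_zero, Matrix.cons_val_succ, cs, cvv_0_2_4, cvv_1_2_4, cvv_2_2_4, cvv_3_2_4, cvv_4_2_4, cvv_5_2_4, cvv_6_2_4, cvv_7_2_4, cvv_8_2_4]
    linear_combination ((1/2) : ℂ) * e10 + ((-1/2) : ℂ) * e11 + ((1/2) : ℂ) * e21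
  have key_2_5 : c 2 5 = ∑ k, (![c 1 8, c 2 6, c 2 8, c 3 2, c 3 3, c 3 5, c 3 6, c 3 8, c 3 9]) k * cs k 2 5 := by
    simp only [Fin.sum_univ_succ, Fin.sum_univ_zero, Matrix.cons_val_zero, Matrix.cons_val_succ, cs, cvv_0_2_5, cvv_1_2_5, cvv_2_2_5, cvv_3_2_5, cvv_4_2_5, cvv_5_2_5, cvv_6_2_5, cvv_7_2_5, cvv_8_2_5]
    linear_combination ((1/12) : ℂ) * e0 + ((-1/6) : ℂ) * e1 + ((-2/3) : ℂ) * e2 + ((1/12) : ℂ) * e3 + ((-1/6) : ℂ) * e4 + ((1/3) : ℂ) * e5 + ((1/3) : ℂ) * e6 + ((-1/6) : ℂ) * e7 + ((1/3) : ℂ) * e8 + ((-2/3) : ℂ) * e9 + ((1/3) : ℂ) * e10 + ((-2/3) : ℂ) * e11 + ((1/12) : ℂ) * e12 + ((-1/6) : ℂ) * e13 + ((1/3) : ℂ) * e14 + ((1/3) : ℂ) * e15 + ((-1/6) : ℂ) * e16 + ((1/3) : ℂ) * e17 + ((-2/3) : ℂ) * e18 + ((-2/3) : ℂ) * e19 +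 ((1/3) : ℂ) * e20 + ((1/3) : ℂ) * e21 + ((-1/6) : ℂ) * e22 + ((1/3) : ℂ) * e23 + ((-2/3) : ℂ) * e24 + ((1/3) : ℂ) * e25 + ((-2/3) : ℂ) * e26 + ((1/3) : ℂ) * e27 + ((-2/3) : ℂ) * e28 + ((1/3) : ℂ) * e29 + ((1/3) : ℂ) * e30
  have key_2_6 : c 2 6 = ∑ k, (![c 1 8, c 2 6, c 2 8, c 3 2, c 3 3, c 3 5, c 3 6, c 3 8, c 3 9]) k * cs k 2 6 := by
    simp only [Fin.sum_univ_succ, Fin.sum_univ_zero, Matrix.cons_val_zero, Matrix.cons_val_succ, cs, cvv_0_2_6, cvv_1_2_6, cvv_2_2_6, cvv_3_2_6, cvv_4_2_6, cvv_5_2_6, cvv_6_2_6, cvv_7_2_6, cvv_8_2_6]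
    ring
  have key_2_7 : c 2 7 = ∑ k, (![c 1 8, c 2 6, c 2 8, c 3 2, c 3 3, c 3 5, c 3 6, c 3 8, c 3 9]) k * cs k 2 7 := by
    simp only [Fin.sum_univ_succ, Fin.sum_univ_zero, Matrix.cons_val_zero, Matrix.cons_val_succ, cs, cvv_0_2_7, cvv_1_2_7, cvv_2_2_7, cvv_3_2_7, cvv_4_2_7, cvv_5_2_7, cvv_6_2_7, cvv_7_2_7, cvv_8_2_7]
    linear_combination (-1 : ℂ) * e1 + ((-3/2) : ℂ) * e2 + (1 : ℂ) * e5 + ((1/2) : ℂ) * e6 + (-1 : ℂ) * e9 + (1 : ℂ) * e14 + ((1/2) : ℂ) * e15 + (-1 : ℂ) * e18 + (-1 : ℂ) * e24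
  have key_2_8 : c 2 8 = ∑ k, (![c 1 8, c 2 6, c 2 8, c 3 2, c 3 3, c 3 5, c 3 6, c 3 8, c 3 9]) k * cs k 2 8 := by
    simp only [Fin.sum_univ_succ, Fin.sum_univ_zero, Matrix.cons_val_zero, Matrix.cons_val_succ, cs, cvv_0_2_8, cvv_1_2_8, cvv_2_2_8, cvv_3_2_8, cvv_4_2_8, cvv_5_2_8, cvv_6_2_8, cvv_7_2_8, cvv_8_2_8]
    ring
  have key_2_9 : c 2 9 = ∑ k, (![c 1 8, c 2 6, c 2 8, c 3 2, c 3 3, c 3 5, c 3 6, c 3 8, c 3 9]) k * cs k 2 9 := by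
    simp only [Fin.sum_univ_succ, Fin.sum_univ_zero, Matrix.cons_val_zero, Matrix.cons_val_succ, cs, cvv_0_2_9, cvv_1_2_9, cvv_2_2_9, cvv_3_2_9, cvv_4_2_9, cvv_5_2_9, cvv_6_2_9, cvv_7_2_9, cvv_8_2_9]
    linear_combination ((-1/2) : ℂ) * e0 + ((1/2) : ℂ) * e3 + ((1/2) : ℂ) * e12
  have key_3_0 : c 3 0 = ∑ k, (![c 1 8, c 2 6, c 2 8, c 3 2, c 3 3, c 3 5, c 3 6, c 3 8, c 3 9]) k * cs k 3 0 := by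
    simp only [Fin.sum_univ_succ, Fin.sum_univ_zero, Matrix.cons_val_zero, Matrix.cons_val_succ, cs, cvv_0_3_0, cvv_1_3_0, cvv_2_3_0, cvv_3_3_0, cvv_4_3_0, cvv_5_3_0, cvv_6_3_0, cvv_7_3_0, cvv_8_3_0]
    linear_combination ((-1/2) : ℂ) * e28 + ((1/2) : ℂ) * e29 + ((1/2) : ℂ) * e30
  have key_3_1 : c 3 1 = ∑ k, (![c 1 8, c 2 6, c 2 8, c 3 2, c 3 3, c 3 5, c 3 6, c 3 8, c 3 9]) k * cs k 3 1 := by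
    simp only [Fin.sum_univ_succ, Fin.sum_univ_zero, Matrix.cons_val_zero, Matrix.cons_val_succ, cs, cvv_0_3_1, cvv_1_3_1, cvv_2_3_1, cvv_3_3_1, cvv_4_3_1, cvv_5_3_1, cvv_6_3_1, cvv_7_3_1, cvv_8_3_1]
    linear_combination ((-1/24) : ℂ) * e0 + ((1/12) : ℂ) * e1 + ((1/3) : ℂ) * e2 + ((-1/24) : ℂ) * e3 + ((1/12) : ℂ) * e4 + ((-1/6) : ℂ) * e5 + ((-1/6) : ℂ) * e6 + ((1/12) : ℂ) * e7 + ((-1/6) : ℂ) * e8 + ((1/3) : ℂ) * e9 + ((1/3) : ℂ) * e10 + ((-1/6) : ℂ) * e11 + ((-1/24) : ℂ) * e12 + ((1/12) : ℂ) * e13 + ((-1/6) : ℂ) * e14 + ((-1/6) : ℂ) * e15 + ((1/12) : ℂ) * e16 + ((-1/6) : ℂ) * e17 + ((1/3) : ℂ) * e18 + ((-1/6) : ℂ) * e19 + ((1/3) : ℂ) * e20 + ((-1/6) : ℂ) * e21 + ((1/12) : ℂ) * e22 + ((-1/6) : ℂ) * e23 + ((1/3) : ℂ) * e24 + ((-1/6)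 : ℂ) * e25 + ((1/3) : ℂ) * e26 + ((1/3) : ℂ) * e27 + ((1/3) : ℂ) * e28 + ((-1/6) : ℂ) * e29 + ((-1/6) : ℂ) * e30
  have key_3_2 : c 3 2 = ∑ k, (![c 1 8, c 2 6, c 2 8, c 3 2, c 3 3, c 3 5, c 3 6, c 3 8, c 3 9]) k * cs k 3 2 := by
    simp only [Fin.sum_univ_succ, Fin.sum_univ_zero, Matrix.cons_val_zero, Matrix.cons_val_succ, cs, cvv_0_3_2, cvv_1_3_2, cvv_2_3_2, cvv_3_3_2, cvv_4_3_2, cvv_5_3_2, cvv_6_3_2, cvv_7_3_2, cvv_8_3_2]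
    ring
  have key_3_3 : c 3 3 = ∑ k, (![c 1 8, c 2 6, c 2 8, c 3 2, c 3 3, c 3 5, c 3 6, c 3 8, c 3 9]) k * cs k 3 3 := by
    simp only [Fin.sum_univ_succ, Fin.sum_univ_zero, Matrix.cons_val_zero, Matrix.cons_val_succ, cs, cvv_0_3_3, cvv_1_3_3, cvv_2_3_3, cvv_3_3_3, cvv_4_3_3, cvv_5_3_3, cvv_6_3_3, cvv_7_3_3, cvv_8_3_3]
    ring
  have key_3_4 : c 3 4 = ∑ k, (![c 1 8, c 2 6, c 2 8, c 3 2, c 3 3, c 3 5, c 3 6, c 3 8, c 3 9]) k * cs k 3 4 := by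
    simp only [Fin.sum_univ_succ, Fin.sum_univ_zero, Matrix.cons_val_zero, Matrix.cons_val_succ, cs, cvv_0_3_4, cvv_1_3_4, cvv_2_3_4, cvv_3_3_4, cvv_4_3_4, cvv_5_3_4, cvv_6_3_4, cvv_7_3_4, cvv_8_3_4]
    linear_combination ((-1/2) : ℂ) * e10 + ((1/2) : ℂ) * e11 + ((1/2) : ℂ) * e21
  have key_3_5 : c 3 5 = ∑ k, (![c 1 8, c 2 6, c 2 8, c 3 2, c 3 3, c 3 5, c 3 6, c 3 8, c 3 9]) k * cs k 3 5 := by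
    simp only [Fin.sum_univ_succ, Fin.sum_univ_zero, Matrix.cons_val_zero, Matrix.cons_val_succ, cs, cvv_0_3_5, cvv_1_3_5, cvv_2_3_5, cvv_3_3_5, cvv_4_3_5, cvv_5_3_5, cvv_6_3_5, cvv_7_3_5, cvv_8_3_5]
    ring
  have key_3_6 : c 3 6 = ∑ k, (![c 1 8, c 2 6, c 2 8, c 3 2, c 3 3, c 3 5, c 3 6, c 3 8, c 3 9]) k * cs k 3 6 := by
    simp only [Fin.sum_univ_succ, Fin.sum_univ_zero, Matrix.cons_val_zero, Matrix.cons_val_succ, cs, cvv_0_3_6, cvv_1_3_6, cvv_2_3_6, cvv_3_3_6, cvv_4_3_6, cvv_5_3_6, cvv_6_3_6, cvv_7_3_6, cvv_8_3_6]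
    ring
  have key_3_7 : c 3 7 = ∑ k, (![c 1 8, c 2 6, c 2 8, c 3 2, c 3 3, c 3 5, c 3 6, c 3 8, c 3 9]) k * cs k 3 7 := by
    simp only [Fin.sum_univ_succ, Fin.sum_univ_zero, Matrix.cons_val_zero, Matrix.cons_val_succ, cs, cvv_0_3_7, cvv_1_3_7, cvv_2_3_7, cvv_3_3_7, cvv_4_3_7, cvv_5_3_7, cvv_6_3_7, cvv_7_3_7, cvv_8_3_7]
    linear_combination ((-1/2) : ℂ) * e2 + ((1/2) : ℂ) * e6 + ((1/2) : ℂ) * e15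
  have key_3_8 : c 3 8 = ∑ k, (![c 1 8, c 2 6, c 2 8, c 3 2, c 3 3, c 3 5, c 3 6, c 3 8, c 3 9]) k * cs k 3 8 := by
    simp only [Fin.sum_univ_succ, Fin.sum_univ_zero, Matrix.cons_val_zero, Matrix.cons_val_succ, cs, cvv_0_3_8, cvv_1_3_8, cvv_2_3_8, cvv_3_3_8, cvv_4_3_8, cvv_5_3_8, cvv_6_3_8, cvv_7_3_8, cvv_8_3_8]
    ring
  have key_3_9 : c 3 9 = ∑ k, (![c 1 8, c 2 6, c 2 8, c 3 2, c 3 3, c 3 5, c 3 6, c 3 8, c 3 9]) k * cs k 3 9 := by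
    simp only [Fin.sum_univ_succ, Fin.sum_univ_zero, Matrix.cons_val_zero, Matrix.cons_val_succ, cs, cvv_0_3_9, cvv_1_3_9, cvv_2_3_9, cvv_3_3_9, cvv_4_3_9, cvv_5_3_9, cvv_6_3_9, cvv_7_3_9, cvv_8_3_9]
    ring
  have key : ∀ (i : Fin 4) (j : Fin 10), c i j = ∑ k, (![c 1 8, c 2 6, c 2 8, c 3 2, c 3 3, c 3 5, c 3 6, c 3 8, c 3 9]) k * cs k i j :=
    finForall4 (finForall10 key_0_0 key_0_1 key_0_2 key_0_3 key_0_4 key_0_5 key_0_6 key_0_7 key_0_8 key_0_9) (finForall10 key_1_0 key_1_1 key_1_2 key_1_3 key_1_4 key_1_5 key_1_6 key_1_7 key_1_8 key_1_9) (finForall10 key_2_0 key_2_1 key_2_2 key_2_3 key_2_4 key_2_5 key_2_6 key_2_7 key_2_8 key_2_9) (finForall10 key_3_0 key_3_1 key_3_2 key_3_3 key_3_4 key_3_5 key_3_6 key_3_7 key_3_8 key_3_9)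
  have hfinal : v = ∑ k, (![c 1 8, c 2 6, c 2 8, c 3 2, c 3 3, c 3 5, c 3 6, c 3 8, c 3 9]) k • wv k := by
    rw [hvc]
    funext i
    rw [Finset.sum_apply]
    have h2 : ∀ k : Fin 9, ((![c 1 8, c 2 6, c 2 8, c 3 2, c 3 3, c 3 5, c 3 6, c 3 8, c 3 9]) k • wv k) i
        = ∑ j, monomial (mexp j) ((![c 1 8, c 2 6, c 2 8, c 3 2, c 3 3, c 3 5, c 3 6, c 3 8, c 3 9]) k * cs k i j) := by
      intro k
      show (![c 1 8, c 2 6, c 2 8, c 3 2, c 3 3, c 3 5, c 3 6, c 3 8, c 3 9]) k • Lc (cs k) i = _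
      rw [Lc, Finset.smul_sum]
      exact Finset.sum_congr rfl fun j _ => by
        rw [← map_smul, smul_eq_mul]
    rw [Finset.sum_congr rfl fun k _ => h2 k, Finset.sum_comm]
    rw [Lc]
    exact Finset.sum_congr rfl fun j _ => by rw [key i j]; exact map_sum _ _ _
  rw [hfinal]
  exact Submodule.sum_mem _ fun k _ =>
    Submodule.smul_mem _ _ (Submodule.subset_span ⟨k, rfl⟩)


lemma span_le_ARm : Submodule.span ℂ (Set.range wv) ≤ ARm 3 FC 2 := by
  rw [Submodule.span_le]
  rintro x ⟨k, rfl⟩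
  rw [SetLike.mem_coe]
  apply Submodule.mem_inf.mpr
  constructor
  · apply (Submodule.mem_iInf _).mpr
    intro i
    exact Submodule.mem_comap.mpr (Lc_mem (cs k) i)
  · exact LinearMap.mem_ker.mpr (relMap_wv k)

lemma ARm_eq_span : ARm 3 FC 2 = Submodule.span ℂ (Set.range wv) :=
  le_antisymm ARm_le_span span_le_ARm
end
end CayleyAux


/-- For the Cayley cubic `f = xyz + xyw + xzw + yzw` in `ℂ[x,y,z,w]`,
the space `AR(f)₂` of degree-2 Jacobian syzygies has dimension `9`. -/
theorem dim_AR2_cayley_cubic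
    (f : MvPolynomial (Fin 4) ℂ)
    (hf : f = X 0 * X 1 * X 2 + X 0 * X 1 * X 3 + X 0 * X 2 * X 3 + X 1 * X 2 * X 3) :
    finrank ℂ (ARm 3 f 2) = 9 := by
  have hfc : f = FC := hf
  rw [hfc, ARm_eq_span, finrank_span_eq_card wv_indep, Fintype.card_fin]
end

section
/- Let f ∈ ℂ[x₀,…,xₙ] be homogeneous of degree N with J_f = (f_{x₀},…,f_{xₙ}). Suppose J₀ = (f_{x₁},…,f_{xₙ}) is generated by a regular sequence of length n (a complete intersection). Then a relation (a₀,a₁,…,aₙ) ∈ AR(f), i.e. satisfying Σⱼ aⱼ f_{xⱼ} = 0, belongs to the Koszul submodule KR(f) if and only if a₀ ∈ J₀. -/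
open MvPolynomial Module

variable (n : ℕ)

section Helper
variable {R : Type*} [CommRing R]

/-- Generic Koszul tuple for a family `r`. -/
noncomputable def kosV {n : ℕ} (r : Fin n → R) (i j : Fin n) : Fin n → R :=
  fun k => if k = i then r j else if k = j then -(r i) else 0

/-- The generating set of Koszul relations for a family `r`. -/
def kosSet {n : ℕ} (r : Fin n → R) : Set (Fin n → R) :=
  {v | ∃ i j, i ≠ j ∧ v = kosV r i j}

lemma kosV_rel {n : ℕ} (r : Fin n → R) {i j : Fin n} (hij : i ≠ j) :
    ∑ k, kosV r i j k * r k = 0 := by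
  have h : ∀ k, kosV r i j k * r k =
      (if k = i then r j * r i else 0) + (if k = j then -(r i * r j) else 0) := by
    intro k
    by_cases h1 : k = i
    · subst h1; simp [kosV, hij.symm, if_neg hij]
    · by_cases h2 : k = j
      · subst h2; simp [kosV, h1]
      · simp [kosV, h1, h2]
  simp only [h, Finset.sum_add_distrib, Finset.sum_ite_eq' Finset.univ,
    Finset.mem_univ, if_true]
  ring

lemma kosV_mem_ker {n : ℕ} (r : Fin n → R) {i j : Fin n} (hij : i ≠ j) (d : R) :
    ∑ k, (d • kosV r i j) k * r k = 0 := by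
  simp only [Pi.smul_apply, smul_eq_mul, mul_assoc, ← Finset.mul_sum, kosV_rel r hij, mul_zero]

/-- Extension by zero at the last coordinate, as a linear map. -/
noncomputable def snocZero (n : ℕ) : (Fin n → R) →ₗ[R] (Fin (n + 1) → R) where
  toFun v := Fin.snoc v 0
  map_add' v w := by
    funext k
    refine Fin.lastCases ?_ (fun m => ?_) k <;> simp
  map_smul' d v := by
    funext k
    refine Fin.lastCases ?_ (fun m => ?_) k <;> simp

lemma syzygy : ∀ (n : ℕ) (r : Fin n → R),
    (∀ (i : Fin n) (c : R), c * r i ∈ Ideal.span (r '' {j | j < i}) →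
        c ∈ Ideal.span (r '' {j | j < i})) →
    ∀ (c : Fin n → R), ∑ i, c i * r i = 0 →
    c ∈ Submodule.span R (kosSet r) := by
  intro n
  induction n with
  | zero =>
    intro r _ c _
    have : c = 0 := funext fun i => i.elim0
    exact this ▸ Submodule.zero_mem _
  | succ n IH =>
    intro r H c hc
    set L := Fin.last n with hL
    -- the last coefficient lies in the ideal of the previous elements
    have himg : r '' {j | j < L} = Set.range (fun i : Fin n => r i.castSucc) := by
      ext x
      constructor
      · rintro ⟨j, hj, rfl⟩
        exact ⟨⟨j.val, Fin.lt_iff_val_lt_val.mp hj⟩, congrArg r (Fin.ext rfl)⟩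
      · rintro ⟨i, rfl⟩
        exact ⟨i.castSucc, Fin.castSucc_lt_last i, rfl⟩
    have hlast : c L * r L ∈ Ideal.span (r '' {j | j < L}) := by
      have hsum : c L * r L = -∑ i : Fin n, c i.castSucc * r i.castSucc := by
        rw [Fin.sum_univ_castSucc] at hc
        linear_combination hc
      rw [hsum]
      refine neg_mem (Ideal.sum_mem _ fun i _ => Ideal.mul_mem_left _ _ ?_)
      exact Ideal.subset_span ⟨i.castSucc, Fin.castSucc_lt_last i, rfl⟩
    have hcL := H L (c L) hlast
    rw [himg] at hcL
    have hcL' : c L ∈ Submodule.span R (Set.range fun i : Fin n => r i.castSucc) := hcL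
    rw [Submodule.mem_span_range_iff_exists_fun] at hcL'
    obtain ⟨d, hd⟩ := hcL'
    simp only [smul_eq_mul] at hd
    -- correction term
    set K : Fin (n + 1) → R := ∑ i : Fin n, d i • kosV r L i.castSucc with hK
    have hne : ∀ i : Fin n, L ≠ i.castSucc := fun i => (Fin.castSucc_lt_last i).ne'
    have hKmem : K ∈ Submodule.span R (kosSet r) := by
      refine Submodule.sum_mem _ fun i _ => Submodule.smul_mem _ _ ?_
      exact Submodule.subset_span ⟨L, i.castSucc, hne i, rfl⟩
    have hKL : K L = c L := by
      rw [hK]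
      simp only [Finset.sum_apply, Pi.smul_apply, smul_eq_mul, kosV, if_pos rfl]
      exact hd
    have hKrel : ∑ k, K k * r k = 0 := by
      rw [hK]
      have : ∀ k, (∑ i : Fin n, d i • kosV r L i.castSucc) k * r k
          = ∑ i : Fin n, (d i • kosV r L i.castSucc) k * r k := by
        intro k; rw [Finset.sum_apply, Finset.sum_mul]
      simp only [this]
      rw [Finset.sum_comm]
      exact Finset.sum_eq_zero fun i _ => kosV_mem_ker r (hne i) (d i)
    set c' : Fin (n + 1) → R := c - K with hc'
    have hc'L : c' L = 0 := by simp [hc', hKL]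
    have hc'rel : ∑ k, c' k * r k = 0 := by
      simp only [hc', Pi.sub_apply, sub_mul, Finset.sum_sub_distrib, hc, hKrel, sub_zero]
    -- restrict to the first n coordinates
    set r' : Fin n → R := fun i => r i.castSucc with hr'
    set c'' : Fin n → R := fun i => c' i.castSucc with hc''
    have hc''rel : ∑ i, c'' i * r' i = 0 := by
      have := hc'rel
      rw [Fin.sum_univ_castSucc, hc'L, zero_mul, add_zero] at this
      exact this
    have H' : ∀ (i : Fin n) (x : R), x * r' i ∈ Ideal.span (r' '' {j | j < i}) →
        x ∈ Ideal.span (r' '' {j | j < i}) := by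
      intro i x hx
      have hset : r' '' {j | j < i} = r '' {j | j < i.castSucc} := by
        ext y
        constructor
        · rintro ⟨j, hj, rfl⟩
          exact ⟨j.castSucc, Fin.castSucc_lt_castSucc_iff.mpr hj, rfl⟩
        · rintro ⟨j, hj, rfl⟩
          have hjn : j.val < n := (Fin.lt_iff_val_lt_val.mp hj).trans_le (Nat.le_of_lt_succ i.castSucc.isLt)
          refine ⟨⟨j.val, hjn⟩, ?_, congrArg r (Fin.ext rfl)⟩
          exact Fin.lt_iff_val_lt_val.mpr (Fin.lt_iff_val_lt_val.mp hj)
      rw [hset] at hx ⊢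
      exact H i.castSucc x hx
    have hmem'' := IH r' H' c'' hc''rel
    -- extend back
    have hmap : (snocZero n) c'' ∈ Submodule.span R (kosSet r) := by
      have h1 : (snocZero n) c'' ∈ Submodule.map (snocZero n) (Submodule.span R (kosSet r')) :=
        Submodule.mem_map_of_mem hmem''
      rw [Submodule.map_span] at h1
      refine Submodule.span_mono ?_ h1
      rintro _ ⟨_, ⟨i, j, hij, rfl⟩, rfl⟩
      refine ⟨i.castSucc, j.castSucc, fun h => hij (Fin.castSucc_injective n h), ?_⟩
      funext k
      refine Fin.lastCases ?_ (fun m => ?_) k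
      · have h1 : Fin.last n ≠ i.castSucc := (Fin.castSucc_lt_last i).ne'
        have h2 : Fin.last n ≠ j.castSucc := (Fin.castSucc_lt_last j).ne'
        simp [snocZero, kosV, h1, h2]
      · simp only [snocZero, LinearMap.coe_mk, AddHom.coe_mk, Fin.snoc_castSucc, kosV,
          Fin.castSucc_inj]
        rfl
    have hEc : (snocZero n) c'' = c' := by
      funext k
      refine Fin.lastCases ?_ (fun m => ?_) k
      · simp [snocZero, hc'L]
        exact hc'L.symm
      · simp only [snocZero, LinearMap.coe_mk, AddHom.coe_mk, Fin.snoc_castSucc, hc'']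
    have : c = c' + K := by simp [hc']
    rw [this, ← hEc]
    exact Submodule.add_mem _ hmap hKmem

lemma regular_H {n : ℕ} (r : Fin n → R)
    (hreg : RingTheory.Sequence.IsRegular R (List.ofFn r)) :
    ∀ (i : Fin n) (c : R), c * r i ∈ Ideal.span (r '' {j | j < i}) →
      c ∈ Ideal.span (r '' {j | j < i}) := by
  intro i c hc
  have hlen : i.val < (List.ofFn r).length := by simp
  have hsr := hreg.toIsWeaklyRegular.regular_mod_prev i.val hlen
  have hget : (List.ofFn r)[i.val]'hlen = r i := by
    rw [List.getElem_ofFn]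
  have hideal : Ideal.ofList ((List.ofFn r).take i.val) = Ideal.span (r '' {j | j < i}) := by
    unfold Ideal.ofList
    congr 1
    ext x
    simp only [Set.mem_setOf_eq, List.mem_take_iff_getElem, List.getElem_ofFn,
      List.length_ofFn, Set.mem_image, Set.mem_setOf_eq]
    constructor
    · rintro ⟨m, hm, rfl⟩
      exact ⟨⟨m, by omega⟩, by exact Fin.lt_iff_val_lt_val.mpr (by simp; omega), rfl⟩
    · rintro ⟨j, hj, rfl⟩
      exact ⟨j.val, by simp [Fin.lt_iff_val_lt_val.mp hj, j.isLt], congrArg r (Fin.ext rfl)⟩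
  have htop : (Ideal.ofList ((List.ofFn r).take i.val) • ⊤ : Submodule R R)
      = (Ideal.span (r '' {j | j < i}) : Submodule R R) := by
    rw [smul_eq_mul, Ideal.mul_top, hideal]
  rw [hget, htop] at hsr
  have h0 : r i • (Submodule.Quotient.mk c :
      R ⧸ (Ideal.span (r '' {j | j < i}) : Submodule R R)) = r i • (0 : _) := by
    rw [smul_zero, ← Submodule.Quotient.mk_smul, smul_eq_mul]
    exact (Submodule.Quotient.mk_eq_zero _).mpr (by rwa [mul_comm] at hc)
  have := hsr h0
  rwa [← Submodule.Quotient.mk_eq_zero]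

/-- Extension by zero at the first coordinate, as a linear map. -/
noncomputable def consZero (n : ℕ) : (Fin n → R) →ₗ[R] (Fin (n + 1) → R) where
  toFun v := Fin.cons 0 v
  map_add' v w := by
    funext k
    refine Fin.cases ?_ (fun m => ?_) k <;> simp
  map_smul' d v := by
    funext k
    refine Fin.cases ?_ (fun m => ?_) k <;> simp

end Helper

/-- If `f_{x₁},…,f_{xₙ}` form a regular sequence, then a Jacobian relation `(a₀,…,aₙ)`
is Koszul if and only if `a₀ ∈ (f_{x₁},…,f_{xₙ})`. -/
theorem mem_KR_iff_first_component (N : ℕ)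
    (f : MvPolynomial (Fin (n + 1)) ℂ) (hf : f.IsHomogeneous N)
    (hreg : RingTheory.Sequence.IsRegular (MvPolynomial (Fin (n + 1)) ℂ)
      (List.ofFn fun i : Fin n => pderiv i.succ f))
    (a : Fin (n + 1) → MvPolynomial (Fin (n + 1)) ℂ)
    (ha : ∑ i : Fin (n + 1), a i * pderiv i f = 0) :
    a ∈ KRsub n f ↔
      a 0 ∈ Ideal.span (Set.range fun i : Fin n => pderiv i.succ f) := by
  set rf : Fin (n + 1) → MvPolynomial (Fin (n + 1)) ℂ := fun i => pderiv i f with hrf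
  set r : Fin n → MvPolynomial (Fin (n + 1)) ℂ := fun i => pderiv i.succ f with hr
  set J : Ideal (MvPolynomial (Fin (n + 1)) ℂ) := Ideal.span (Set.range r) with hJ
  have hKR : KRsub n f = Submodule.span (MvPolynomial (Fin (n + 1)) ℂ) (kosSet rf) := rfl
  constructor
  · -- forward: Koszul implies first component in J
    intro h
    have hle : KRsub n f ≤ Submodule.comap
        (LinearMap.proj 0 : (Fin (n + 1) → MvPolynomial (Fin (n + 1)) ℂ)
          →ₗ[MvPolynomial (Fin (n + 1)) ℂ] MvPolynomial (Fin (n + 1)) ℂ) J := by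
      rw [hKR, Submodule.span_le]
      rintro _ ⟨i, j, hij, rfl⟩
      simp only [SetLike.mem_coe, Submodule.mem_comap, LinearMap.proj_apply]
      show kosV rf i j 0 ∈ J
      unfold kosV
      by_cases h1 : (0 : Fin (n + 1)) = i
      · rw [if_pos h1]
        have hj0 : j ≠ 0 := fun hj => hij (h1.symm.trans hj.symm)
        refine Ideal.subset_span ⟨(j.pred hj0), ?_⟩
        show pderiv (j.pred hj0).succ f = rf j
        rw [Fin.succ_pred]
      · rw [if_neg h1]
        by_cases h2 : (0 : Fin (n + 1)) = j
        · rw [if_pos h2]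
          have hi0 : i ≠ 0 := fun hi => h1 (hi.symm)
          refine neg_mem (Ideal.subset_span ⟨(i.pred hi0), ?_⟩)
          show pderiv (i.pred hi0).succ f = rf i
          rw [Fin.succ_pred]
        · rw [if_neg h2]; exact zero_mem J
    exact hle h
  · -- backward
    intro h0
    have h0' : a 0 ∈ Submodule.span (MvPolynomial (Fin (n + 1)) ℂ) (Set.range r) := h0
    rw [Submodule.mem_span_range_iff_exists_fun] at h0'
    obtain ⟨b, hb⟩ := h0'
    simp only [smul_eq_mul] at hb
    set K : Fin (n + 1) → MvPolynomial (Fin (n + 1)) ℂ :=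
      ∑ i : Fin n, b i • kosV rf 0 i.succ with hKdef
    have hne : ∀ i : Fin n, (0 : Fin (n + 1)) ≠ i.succ := fun i => (Fin.succ_ne_zero i).symm
    have hKmem : K ∈ KRsub n f := by
      rw [hKR]
      exact Submodule.sum_mem _ fun i _ => Submodule.smul_mem _ _
        (Submodule.subset_span ⟨0, i.succ, hne i, rfl⟩)
    have hK0 : K 0 = a 0 := by
      rw [hKdef]
      simp only [Finset.sum_apply, Pi.smul_apply, smul_eq_mul, kosV, if_pos rfl]
      exact hb
    have hKrel : ∑ k, K k * rf k = 0 := by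
      rw [hKdef]
      have hap : ∀ k, (∑ i : Fin n, b i • kosV rf 0 i.succ) k * rf k
          = ∑ i : Fin n, (b i • kosV rf 0 i.succ) k * rf k := by
        intro k; rw [Finset.sum_apply, Finset.sum_mul]
      simp only [hap]
      rw [Finset.sum_comm]
      exact Finset.sum_eq_zero fun i _ => kosV_mem_ker rf (hne i) (b i)
    set a' : Fin (n + 1) → MvPolynomial (Fin (n + 1)) ℂ := a - K with ha'
    have ha'0 : a' 0 = 0 := by simp [ha', hK0]
    have ha'rel : ∑ k, a' k * rf k = 0 := by
      simp only [ha', Pi.sub_apply, sub_mul, Finset.sum_sub_distrib, hKrel, sub_zero]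
      exact ha
    set c : Fin n → MvPolynomial (Fin (n + 1)) ℂ := fun i => a' i.succ with hcdef
    have hcrel : ∑ i, c i * r i = 0 := by
      have := ha'rel
      rw [Fin.sum_univ_succ, ha'0, zero_mul, zero_add] at this
      exact this
    have hmem := syzygy n r (regular_H r hreg) c hcrel
    have hmap : (consZero n) c ∈ Submodule.span (MvPolynomial (Fin (n + 1)) ℂ) (kosSet rf) := by
      have h1 : (consZero n) c ∈ Submodule.map (consZero n)
          (Submodule.span (MvPolynomial (Fin (n + 1)) ℂ) (kosSet r)) :=
        Submodule.mem_map_of_mem hmem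
      rw [Submodule.map_span] at h1
      refine Submodule.span_mono ?_ h1
      rintro _ ⟨_, ⟨i, j, hij, rfl⟩, rfl⟩
      refine ⟨i.succ, j.succ, fun h => hij (Fin.succ_injective n h), ?_⟩
      funext k
      refine Fin.cases ?_ (fun m => ?_) k
      · simp [consZero, kosV, hne i, hne j]
      · simp only [consZero, LinearMap.coe_mk, AddHom.coe_mk, Fin.cons_succ, kosV,
          Fin.succ_inj]
        rfl
    have hEc : (consZero n) c = a' := by
      funext k
      refine Fin.cases ?_ (fun m => ?_) k
      · simp [consZero, ha'0]
      · simp only [consZero, LinearMap.coe_mk, AddHom.coe_mk, Fin.cons_succ, hcdef]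
    have hfin : a = a' + K := by simp [ha']
    rw [hfin, ← hEc, hKR]
    exact Submodule.add_mem _ hmap hKmem
end
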